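/- arXiv:0806.0834 — 9 statements merged into one kernel-verified Lean document; each statement's English description precedes it below -/
import Mathlib

section
/- Let D be a finite doset on a poset P possessing a unique minimal element, and let A = ℂ[D]/J be an algebra with straightening law on D. Then J is saturated: for every f ∈ ℂ[D] and every N ∈ ℕ, if p_{(α,β)}^N · f ∈ J for all (α,β) ∈ D, then f ∈ J. -/
noncomputable section

attribute [local instance] Classical.propDecidable

variable {P : Type*}

/-- A doset on the poset P: a set of pairs containing the diagonal, contained
in the order relation, with the interval property. -/
def IsDoset [PartialOrder P] (D : Finset (P × P)) : Prop :=
  (∀ x : P, (x, x) ∈ D) ∧ (∀ e ∈ D, e.1 ≤ e.2) ∧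
    ∀ x y z : P, x ≤ y → y ≤ z → ((x, z) ∈ D ↔ (x, y) ∈ D ∧ (y, z) ∈ D)

/-- The index type of the generators p_{(α,β)}, (α,β) ∈ D. -/
abbrev Gen (D : Finset (P × P)) := {e : P × P // e ∈ D}

/-- An exponent vector m is standard if the corresponding multiset of
generators can be listed as a chain (α₁,β₁),…,(α_k,β_k) with
α₁ ≤ β₁ ≤ α₂ ≤ β₂ ≤ ⋯ ≤ α_k ≤ β_k. -/
def IsStdExp [PartialOrder P] (D : Finset (P × P)) (m : Gen D →₀ ℕ) : Prop :=
  ∃ l : List (Gen D), l.Chain' (fun e f => e.1.2 ≤ f.1.1) ∧ ∀ e, m e = l.count e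

/-- Flattening of a list of pairs into its index sequence
(α₁, β₁, α₂, β₂, …). -/
def flatG {D : Finset (P × P)} : List (Gen D) → List P
  | [] => []
  | e :: t => e.1.1 :: e.1.2 :: flatG t

/-- l₁ is lexicographically smaller than l₂: either they coincide, or at the
first position where they differ the entry of l₁ is strictly smaller. -/
def LexSm [PartialOrder P] (l₁ l₂ : List P) : Prop :=
  l₁ = l₂ ∨ ∃ i : ℕ, (∀ j, j < i → l₁[j]? = l₂[j]?) ∧
    ∃ x y, l₁[i]? = some x ∧ l₂[i]? = some y ∧ x < y

/-- A homogeneous ideal J of ℂ[D] presents an algebra with straightening law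
A = ℂ[D]/J on the doset D. -/
structure IsASL [PartialOrder P] (D : Finset (P × P))
    (J : Ideal (MvPolynomial (Gen D) ℂ)) : Prop where
  /-- J is homogeneous. -/
  homog : ∀ f ∈ J, ∀ i : ℕ, MvPolynomial.homogeneousComponent i f ∈ J
  /-- (ASL1) the standard monomials are linearly independent in A … -/
  std_indep : LinearIndependent ℂ fun m : {m : Gen D →₀ ℕ // IsStdExp D m} =>
    Ideal.Quotient.mk J (MvPolynomial.monomial m.1 (1 : ℂ))
  /-- … and span A. -/
  std_span : ∀ x : MvPolynomial (Gen D) ℂ ⧸ J,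
    x ∈ Submodule.span ℂ (Set.range fun m : {m : Gen D →₀ ℕ // IsStdExp D m} =>
      Ideal.Quotient.mk J (MvPolynomial.monomial m.1 (1 : ℂ)))
  /-- (ASL2) whenever a monomial (given by a list of generators) is written in
  A as a linear combination of distinct standard monomials, the index sequence
  of each standard monomial occurring is lexicographically smaller than that
  of the given monomial. -/
  lex : ∀ (l : List (Gen D)) (c : {m : Gen D →₀ ℕ // IsStdExp D m} →₀ ℂ),
    Ideal.Quotient.mk J (l.map MvPolynomial.X).prod =
      c.sum (fun m a => a • Ideal.Quotient.mk J (MvPolynomial.monomial m.1 (1 : ℂ))) →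
    ∀ m ∈ c.support, ∀ l' : List (Gen D),
      l'.Chain' (fun e f => e.1.2 ≤ f.1.1) → (∀ e, m.1 e = l'.count e) →
      LexSm (flatG l') (flatG l)
  /-- (ASL3) the doset straightening relation for quadratic monomials. -/
  quad : ∀ a₁ a₂ a₃ a₄ : P, a₁ ≤ a₂ → a₂ ≤ a₃ → a₃ ≤ a₄ →
    ∀ e f e' f' : Gen D,
      ({e.1.1, e.1.2, f.1.1, f.1.2} : Multiset P) = {a₁, a₂, a₃, a₄} →
      e'.1 = (a₁, a₂) → f'.1 = (a₃, a₄) →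
      ∃ ε : ℂ, (ε = 1 ∨ ε = -1) ∧
      ∃ c : {m : Gen D →₀ ℕ // IsStdExp D m} →₀ ℂ,
        (∀ m ∈ c.support,
          MvPolynomial.monomial m.1 (1 : ℂ) ≠ MvPolynomial.X e' * MvPolynomial.X f') ∧
        Ideal.Quotient.mk J (MvPolynomial.X e * MvPolynomial.X f) =
          ε • Ideal.Quotient.mk J (MvPolynomial.X e' * MvPolynomial.X f') +
          c.sum (fun m a => a • Ideal.Quotient.mk J (MvPolynomial.monomial m.1 (1 : ℂ)))


/-
STATEMENT 4: If D is a finite doset on a poset with a unique minimal element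
and A = ℂ[D]/J is an ASL on D, then J is saturated: if p_{(α,β)}^N · f ∈ J for
every generator, then f ∈ J.
-/
theorem stmt4 {P : Type*} [PartialOrder P] [Fintype P]
    (D : Finset (P × P)) (hD : IsDoset D)
    (hmin : ∃! x : P, IsMin x)
    (J : Ideal (MvPolynomial (Gen D) ℂ)) (hASL : IsASL D J)
    (f : MvPolynomial (Gen D) ℂ) (N : ℕ)
    (h : ∀ e : Gen D, MvPolynomial.X e ^ N * f ∈ J) : f ∈ J := by
  classical
  -- the unique minimal element is a bottom element
  obtain ⟨x₀, hx₀, hx₀uniq⟩ := hmin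
  have hbot : ∀ y : P, x₀ ≤ y := by
    intro y
    obtain ⟨m, hm, hminm⟩ := exists_minimal_le_of_wellFoundedLT (fun _ => True) y trivial
    have hmmin : IsMin m := fun w hw => hminm.2 trivial hw
    exact (hx₀uniq m hmmin) ▸ hm
  -- the diagonal generator at x₀
  set e₀ : Gen D := ⟨(x₀, x₀), hD.1 x₀⟩ with he₀
  -- the standardization map on exponent vectors
  have hstd : ∀ m : Gen D →₀ ℕ, IsStdExp D m → IsStdExp D (Finsupp.single e₀ 1 + m) := by
    intro m ⟨l, hl, hcount⟩
    refine ⟨e₀ :: l, ?_, ?_⟩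
    · refine List.isChain_cons.2 ⟨?_, hl⟩
      intro b _
      exact hbot b.1.1
    · intro e
      rw [Finsupp.add_apply, hcount e, Finsupp.single_apply]
      by_cases heq : e₀ = e
      · subst heq; simp [List.count_cons]; omega
      · simp [List.count_cons, heq, Ne.symm heq]
  set S := {m : Gen D →₀ ℕ // IsStdExp D m}
  set b : S → MvPolynomial (Gen D) ℂ ⧸ J :=
    fun m => Ideal.Quotient.mk J (MvPolynomial.monomial m.1 (1 : ℂ)) with hb
  set σ : S → S := fun m => ⟨Finsupp.single e₀ 1 + m.1, hstd m.1 m.2⟩ with hσ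
  have hσinj : Function.Injective σ := by
    intro m m' hmm
    have : Finsupp.single e₀ 1 + m.1 = Finsupp.single e₀ 1 + m'.1 := congrArg Subtype.val hmm
    exact Subtype.ext (add_left_cancel this)
  -- multiplication by X e₀ sends basis vectors to basis vectors
  have hmulb : ∀ m : S, Ideal.Quotient.mk J (MvPolynomial.X e₀) * b m = b (σ m) := by
    intro m
    simp only [hb, hσ]
    rw [← map_mul]
    congr 1
    rw [MvPolynomial.X, MvPolynomial.monomial_mul, one_mul]
  -- multiplication by X e₀ is injective on the quotient
  have hinj : ∀ x : MvPolynomial (Gen D) ℂ ⧸ J,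
      Ideal.Quotient.mk J (MvPolynomial.X e₀) * x = 0 → x = 0 := by
    intro x hx
    obtain ⟨c, hc⟩ := (Finsupp.mem_span_range_iff_exists_finsupp).1 (hASL.std_span x)
    have hx2 : Finsupp.linearCombination ℂ b (Finsupp.mapDomain σ c) = 0 := by
      rw [Finsupp.linearCombination_mapDomain]
      have : Finsupp.linearCombination ℂ (b ∘ σ) c
          = Ideal.Quotient.mk J (MvPolynomial.X e₀) * x := by
        rw [← hc, Finsupp.mul_sum, Finsupp.linearCombination_apply]
        refine Finsupp.sum_congr ?_
        intro m _
        rw [Function.comp_apply, ← hmulb m, mul_smul_comm]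
      rw [this, hx]
    have hc0 : Finsupp.mapDomain σ c = 0 := linearIndependent_iff.1 hASL.std_indep _ hx2
    have : c = 0 := Finsupp.mapDomain_injective hσinj
      (by rw [hc0, Finsupp.mapDomain_zero])
    rw [← hc, this, Finsupp.sum_zero_index]
  -- conclude by induction on N
  rw [← Ideal.Quotient.eq_zero_iff_mem]
  have key : ∀ n : ℕ, ∀ x : MvPolynomial (Gen D) ℂ ⧸ J,
      Ideal.Quotient.mk J (MvPolynomial.X e₀) ^ n * x = 0 → x = 0 := by
    intro n
    induction n with
    | zero => intro x hx; simpa using hx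
    | succ k ih =>
      intro x hx
      apply ih
      apply hinj
      rw [← mul_assoc, ← pow_succ']
      exact hx
  apply key N
  rw [← map_pow, ← map_mul, Ideal.Quotient.eq_zero_iff_mem]
  exact h e₀
end
end

section
/- For an n-element subset α ⊆ ⟨n⟩, the partition λ(α) is self-conjugate (λ(α)^t = λ(α)) if and only if α is admissible (for every i ∈ {1,…,n}, i ∈ α ⟺ −i ∉ α). Consequently, the bijection α ↦ λ(α) restricts to a bijection between admissible n-element subsets of ⟨n⟩ and self-conjugate partitions whose Young diagram fits in the n×n box. -/
/-
STATEMENT 7: For an n-element subset α ⊆ ⟨n⟩, the partition λ(α) is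
self-conjugate iff α is admissible; consequently α ↦ λ(α) restricts to a
bijection between admissible n-element subsets and self-conjugate partitions
in the n×n box.

⟨n⟩ is identified with Fin (2*n) via the unique order isomorphism; negation
corresponds to `Fin.rev`.  The Young diagram of λ(α) is realized as a
down-closed subset of Fin n × Fin n: the (0-indexed) box (i,j) belongs to the
diagram iff α contains at least i+1 elements of (0-indexed) value ≥ n + j - i,
which is exactly the condition λ_{i+1} ≥ j+1 for λ_{i+1} := α_{n-i} - (n-i)
(1-indexed positions).
-/

noncomputable section

open Finset

/-- The Young diagram (in the n×n box) of the partition λ(α) associated to an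
n-element subset α of ⟨n⟩ ≅ Fin (2*n). -/
def diagOf (n : ℕ) (α : Finset (Fin (2*n))) : Finset (Fin n × Fin n) :=
  Finset.univ.filter fun b =>
    (b.1 : ℕ) + 1 ≤ (α.filter fun a : Fin (2*n) => n + (b.2 : ℕ) - (b.1 : ℕ) ≤ (a : ℕ)).card

/-- Transpose (conjugate) of a Young diagram. -/
def transposeD (n : ℕ) (μ : Finset (Fin n × Fin n)) : Finset (Fin n × Fin n) :=
  μ.image Prod.swap

/-- A subset of the n×n box is a Young diagram of a partition iff it is
down-closed in both coordinates. -/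
def IsDiagram (n : ℕ) (μ : Finset (Fin n × Fin n)) : Prop :=
  ∀ a ∈ μ, ∀ b : Fin n × Fin n, b.1 ≤ a.1 → b.2 ≤ a.2 → b ∈ μ

/-- α ⊆ ⟨n⟩ is admissible: i ∈ α ⟺ −i ∉ α (negation on positions is `Fin.rev`). -/
def AdmissibleSet (n : ℕ) (α : Finset (Fin (2*n))) : Prop :=
  ∀ j : Fin (2*n), j ∈ α ↔ j.rev ∉ α

-- ### auxiliary lemmas

lemma initseg {n : ℕ} (S : Finset (Fin n)) (h : ∀ x ∈ S, ∀ y : Fin n, y ≤ x → y ∈ S)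
    (x : Fin n) : x ∈ S ↔ (x : ℕ) < S.card := by
  constructor
  · intro hx
    have hsub : Finset.Iic x ⊆ S := fun y hy => h x hx y (Finset.mem_Iic.mp hy)
    have := Finset.card_le_card hsub
    rw [Fin.card_Iic] at this
    omega
  · intro hx
    by_contra hxS
    have hsub : S ⊆ Finset.Iio x := by
      intro y hy
      rw [Finset.mem_Iio]
      by_contra hyx
      exact hxS (h y hy x (le_of_not_gt hyx))
    have := Finset.card_le_card hsub
    rw [Fin.card_Iio] at this
    omega

lemma sm_gap {n N : ℕ} {g : Fin n → Fin N} (hg : StrictMono g) :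
    ∀ (a b : Fin n), (a : ℕ) ≤ (b : ℕ) → (g a : ℕ) + ((b : ℕ) - (a : ℕ)) ≤ (g b : ℕ) := by
  intro a b hab
  obtain ⟨d, hd⟩ : ∃ d, (b : ℕ) = (a : ℕ) + d := ⟨(b : ℕ) - a, by omega⟩
  clear hab
  induction d generalizing b with
  | zero =>
    have : a = b := Fin.ext (by omega)
    subst this; simp
  | succ d ih =>
    have hc : (a : ℕ) + d < n := by have := b.isLt; omega
    have h1 := ih ⟨(a : ℕ) + d, hc⟩ rfl
    have h2 : g ⟨(a : ℕ) + d, hc⟩ < g b := hg (by rw [Fin.lt_def]; simp; omega)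
    rw [Fin.lt_def] at h2
    simp only [Fin.val_mk] at h1 h2
    omega

lemma sm_ub {n N : ℕ} {g : Fin n → Fin N} (hg : StrictMono g) (k : Fin n) :
    (g k : ℕ) + (n - 1 - (k : ℕ)) ≤ N - 1 := by
  have hn : 0 < n := k.pos
  have hb : n - 1 < n := by omega
  have hlast : (g ⟨n - 1, hb⟩ : ℕ) ≤ N - 1 := by
    have := (g ⟨n - 1, hb⟩).isLt; omega
  have := sm_gap hg k ⟨n - 1, hb⟩ (by simp; omega)
  simp only [Fin.val_mk] at this
  omega

lemma sm_lb {n N : ℕ} {g : Fin n → Fin N} (hg : StrictMono g) (k : Fin n) :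
    (k : ℕ) ≤ (g k : ℕ) := by
  have hn : 0 < n := k.pos
  have := sm_gap hg ⟨0, hn⟩ k (by simp)
  simp only [Fin.val_mk] at this
  omega

/-- `Fc n α v` = number of elements of `α` of value `≥ v`. -/
def Fc (n : ℕ) (α : Finset (Fin (2*n))) (v : ℕ) : ℕ :=
  (α.filter fun a : Fin (2*n) => v ≤ (a : ℕ)).card

lemma mem_diagOf {n : ℕ} (α : Finset (Fin (2*n))) (b : Fin n × Fin n) :
    b ∈ diagOf n α ↔ (b.1 : ℕ) + 1 ≤ Fc n α (n + (b.2 : ℕ) - (b.1 : ℕ)) := by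
  simp [diagOf, Fc]

lemma Fc_le {n : ℕ} (α : Finset (Fin (2*n))) (v : ℕ) : Fc n α v ≤ α.card :=
  Finset.card_filter_le _ _

lemma lemC {n : ℕ} {g : Fin n → Fin (2*n)} (hg : StrictMono g) (v : ℕ) (i : Fin n) :
    (i : ℕ) + 1 ≤ Fc n (univ.image g) v ↔ v ≤ (g i.rev : ℕ) := by
  have himg : Fc n (univ.image g) v = (univ.filter fun k : Fin n => v ≤ (g k : ℕ)).card := by
    rw [Fc, Finset.filter_image, Finset.card_image_of_injective _ hg.injective]
  set T := univ.filter fun k : Fin n => v ≤ (g k : ℕ) with hT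
  have hup : ∀ x ∈ Tᶜ, ∀ y : Fin n, y ≤ x → y ∈ Tᶜ := by
    intro x hx y hy
    rw [Finset.mem_compl] at hx ⊢
    intro hyT
    apply hx
    rw [hT, Finset.mem_filter] at hyT ⊢
    exact ⟨Finset.mem_univ _, hyT.2.trans (hg.monotone hy)⟩
  have hmem := initseg Tᶜ hup i.rev
  have hcompl : Tᶜ.card = n - T.card := by
    rw [Finset.card_compl]; simp
  have hTcard : T.card ≤ n := by
    have := Finset.card_filter_le (univ : Finset (Fin n)) fun k => v ≤ (g k : ℕ)
    simpa using this
  have h1 : i.rev ∈ T ↔ v ≤ (g i.rev : ℕ) := by simp [hT]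
  have h2 : i.rev ∈ Tᶜ ↔ i.rev ∉ T := Finset.mem_compl
  have hrev : (i.rev : ℕ) = n - 1 - (i : ℕ) := by rw [Fin.val_rev]; omega
  have hi := i.isLt
  rw [himg]
  rw [hcompl, hrev] at hmem
  by_cases hvi : v ≤ (g i.rev : ℕ)
  · have : i.rev ∈ T := h1.mpr hvi
    have : ¬ ((n : ℕ) - 1 - (i : ℕ) < n - T.card) := by
      intro hc
      exact (h2.mp (hmem.mpr hc)) this
    simp only [hvi, iff_true]
    omega
  · have hnotT : i.rev ∉ T := fun hc => hvi (h1.mp hc)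
    have : (n : ℕ) - 1 - (i : ℕ) < n - T.card := hmem.mp (h2.mpr hnotT)
    simp only [hvi, iff_false]
    omega

lemma mem_diag_image {n : ℕ} {g : Fin n → Fin (2*n)} (hg : StrictMono g)
    (b : Fin n × Fin n) :
    b ∈ diagOf n (univ.image g) ↔ n + (b.2 : ℕ) - (b.1 : ℕ) ≤ (g b.1.rev : ℕ) := by
  rw [mem_diagOf, lemC hg]

lemma eq_image_orderEmb {n : ℕ} (α : Finset (Fin (2*n))) (hα : α.card = n) :
    α = univ.image (α.orderEmbOfFin hα) := by
  apply Finset.coe_injective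
  rw [Finset.coe_image, Finset.coe_univ, Set.image_univ, Finset.range_orderEmbOfFin]

lemma diag_inj {n : ℕ} (α β : Finset (Fin (2*n))) (hα : α.card = n) (hβ : β.card = n)
    (h : diagOf n α = diagOf n β) : α = β := by
  set gα := α.orderEmbOfFin hα
  set gβ := β.orderEmbOfFin hβ
  have hgα : StrictMono gα := (α.orderEmbOfFin hα).strictMono
  have hgβ : StrictMono gβ := (β.orderEmbOfFin hβ).strictMono
  have hαi := eq_image_orderEmb α hα
  have hβi := eq_image_orderEmb β hβ
  rw [hαi, hβi] at h
  have key : ∀ m : Fin n, (gα m : ℕ) = (gβ m : ℕ) := by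
    intro m
    have hm := m.isLt
    have hk : ∀ j : Fin n,
        (n + (j : ℕ) - (m.rev : ℕ) ≤ (gα m : ℕ)) ↔
        (n + (j : ℕ) - (m.rev : ℕ) ≤ (gβ m : ℕ)) := by
      intro j
      have h1 := mem_diag_image hgα (m.rev, j)
      have h2 := mem_diag_image hgβ (m.rev, j)
      simp only [Fin.rev_rev] at h1 h2
      rw [← h1, ← h2, h]
    have hrev : (m.rev : ℕ) = n - 1 - (m : ℕ) := by rw [Fin.val_rev]; omega
    have hubα := sm_ub hgα m
    have hubβ := sm_ub hgβ m
    have hlbα := sm_lb hgα m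
    have hlbβ := sm_lb hgβ m
    by_contra hne
    rcases Nat.lt_or_ge (gα m : ℕ) (gβ m : ℕ) with hlt | hge
    · have hj : (gα m : ℕ) - (m : ℕ) < n := by omega
      have := hk ⟨(gα m : ℕ) - (m : ℕ), hj⟩
      simp only [Fin.val_mk, hrev] at this
      omega
    · have hlt' : (gβ m : ℕ) < (gα m : ℕ) := by omega
      have hj : (gβ m : ℕ) - (m : ℕ) < n := by omega
      have := hk ⟨(gβ m : ℕ) - (m : ℕ), hj⟩
      simp only [Fin.val_mk, hrev] at this
      omega
  have : (gα : Fin n → Fin (2*n)) = gβ := funext fun m => Fin.ext (key m)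
  rw [hαi, hβi, this]

lemma card_filter_lt (N m : ℕ) (hm : m ≤ N) :
    (univ.filter fun a : Fin N => (a : ℕ) < m).card = m := by
  have he : (univ.filter fun a : Fin N => (a : ℕ) < m)
      = (Finset.range m).attachFin (fun x hx => lt_of_lt_of_le (Finset.mem_range.mp hx) hm) := by
    ext a
    simp [Finset.mem_attachFin, Finset.mem_range]
  rw [he, Finset.card_attachFin, Finset.card_range]

lemma Fc_compl_rev {n : ℕ} (α : Finset (Fin (2*n))) (hα : α.card = n) (v : ℕ)
    (hv : 1 ≤ v) (hv2 : v ≤ 2*n) :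
    Fc n (αᶜ.image Fin.rev) v + v + n = Fc n α (2*n - v) + 2*n := by
  have h1 : Fc n (αᶜ.image Fin.rev) v
      = (αᶜ.filter fun a : Fin (2*n) => v ≤ (Fin.rev a : ℕ)).card := by
    rw [Fc, Finset.filter_image, Finset.card_image_of_injective _ Fin.rev_injective]
  have h2 : (αᶜ.filter fun a : Fin (2*n) => v ≤ (Fin.rev a : ℕ))
      = αᶜ.filter fun a : Fin (2*n) => (a : ℕ) < 2*n - v := by
    apply Finset.filter_congr
    intro a _
    have ha := a.isLt
    have : (Fin.rev a : ℕ) = 2*n - 1 - (a : ℕ) := by rw [Fin.val_rev]; omega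
    rw [this]
    constructor <;> (intro; omega)
  set P : Fin (2*n) → Prop := fun a => (a : ℕ) < 2*n - v with hP
  have hsplit1 := Finset.card_filter_add_card_filter_not
    (s := univ.filter P) (p := fun a => a ∈ α)
  have e1 : (univ.filter P).filter (fun a => a ∈ α) = α.filter P := by
    ext a; simp only [Finset.mem_filter, Finset.mem_univ, true_and]; tauto
  have e2 : (univ.filter P).filter (fun a => ¬ (a ∈ α)) = αᶜ.filter P := by
    ext a; simp only [Finset.mem_filter, Finset.mem_univ, Finset.mem_compl, true_and]; tauto
  have hsplit2 := Finset.card_filter_add_card_filter_not (s := α) (p := P)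
  have e3 : α.filter (fun a => ¬ P a) = α.filter fun a : Fin (2*n) => 2*n - v ≤ (a : ℕ) := by
    apply Finset.filter_congr
    intro a _
    rw [hP]
    constructor <;> (intro; omega)
  have huniv : (univ.filter P).card = 2*n - v := card_filter_lt (2*n) (2*n - v) (by omega)
  rw [e1, e2] at hsplit1
  rw [e3] at hsplit2
  rw [h1, h2, Fc]
  show (αᶜ.filter P).card + v + n = (α.filter fun a : Fin (2*n) => 2*n - v ≤ (a : ℕ)).card + 2*n
  omega

lemma mem_transposeD {n : ℕ} (μ : Finset (Fin n × Fin n)) (b : Fin n × Fin n) :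
    b ∈ transposeD n μ ↔ (b.2, b.1) ∈ μ := by
  constructor
  · rintro hb
    rw [transposeD, Finset.mem_image] at hb
    obtain ⟨c, hc, rfl⟩ := hb
    simpa using hc
  · intro hb
    rw [transposeD, Finset.mem_image]
    exact ⟨(b.2, b.1), hb, rfl⟩

lemma transpose_diag {n : ℕ} (α : Finset (Fin (2*n))) (hα : α.card = n) :
    transposeD n (diagOf n α) = diagOf n (αᶜ.image Fin.rev) := by
  ext b
  obtain ⟨i, j⟩ := b
  have hA : ((j, i) ∈ diagOf n α) ↔ (j : ℕ) + 1 ≤ Fc n α (n + (i : ℕ) - (j : ℕ)) := by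
    simpa using mem_diagOf α (j, i)
  have hB : ((i, j) ∈ diagOf n (αᶜ.image Fin.rev)) ↔
      (i : ℕ) + 1 ≤ Fc n (αᶜ.image Fin.rev) (n + (j : ℕ) - (i : ℕ)) := by
    simpa using mem_diagOf (αᶜ.image Fin.rev) (i, j)
  rw [mem_transposeD]
  rw [hA, hB]
  have hi := i.isLt
  have hj := j.isLt
  have hkey := Fc_compl_rev α hα (n + (j : ℕ) - (i : ℕ)) (by omega) (by omega)
  have h2n : 2*n - (n + (j : ℕ) - (i : ℕ)) = n + (i : ℕ) - (j : ℕ) := by omega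
  rw [h2n] at hkey
  omega

lemma mem_revcompl {n : ℕ} (α : Finset (Fin (2*n))) (j : Fin (2*n)) :
    j ∈ αᶜ.image Fin.rev ↔ j.rev ∉ α := by
  rw [Finset.mem_image]
  constructor
  · rintro ⟨x, hx, rfl⟩
    simpa using hx
  · intro hj
    exact ⟨j.rev, Finset.mem_compl.mpr hj, Fin.rev_rev j⟩

lemma revcompl_card {n : ℕ} (α : Finset (Fin (2*n))) (hα : α.card = n) :
    (αᶜ.image Fin.rev).card = n := by
  rw [Finset.card_image_of_injective _ Fin.rev_injective, Finset.card_compl, hα]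
  simp; omega

lemma part1 {n : ℕ} (α : Finset (Fin (2*n))) (hα : α.card = n) :
    transposeD n (diagOf n α) = diagOf n α ↔ AdmissibleSet n α := by
  rw [transpose_diag α hα]
  constructor
  · intro h
    have heq : αᶜ.image Fin.rev = α := diag_inj _ _ (revcompl_card α hα) hα h
    intro j
    conv_lhs => rw [← heq]
    rw [mem_revcompl]
  · intro hadm
    congr 1
    ext j
    rw [mem_revcompl]
    exact (hadm j).symm

lemma diag_isDiagram {n : ℕ} (α : Finset (Fin (2*n))) (hα : α.card = n) :
    IsDiagram n (diagOf n α) := by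
  have hg : StrictMono (α.orderEmbOfFin hα) := (α.orderEmbOfFin hα).strictMono
  have hαi := eq_image_orderEmb α hα
  intro a ha b h1 h2
  rw [hαi, mem_diag_image hg] at ha ⊢
  rw [Fin.le_def] at h1 h2
  have hgap := sm_gap hg a.1.rev b.1.rev (by rw [Fin.val_rev, Fin.val_rev]; omega)
  rw [Fin.val_rev, Fin.val_rev] at hgap
  have := a.1.isLt
  have := b.1.isLt
  omega

lemma surj_construct {n : ℕ} (μ : Finset (Fin n × Fin n)) (hμ1 : IsDiagram n μ)
    (hμ2 : transposeD n μ = μ) :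
    ∃ α : Finset (Fin (2*n)), α.card = n ∧ AdmissibleSet n α ∧ diagOf n α = μ := by
  set lam : Fin n → ℕ := fun i => (univ.filter fun j : Fin n => (i, j) ∈ μ).card with hlam
  have rowchar : ∀ i j : Fin n, ((i, j) ∈ μ ↔ (j : ℕ) < lam i) := by
    intro i j
    have hdc : ∀ x ∈ (univ.filter fun j : Fin n => (i, j) ∈ μ), ∀ y : Fin n, y ≤ x →
        y ∈ (univ.filter fun j : Fin n => (i, j) ∈ μ) := by
      intro x hx y hy
      rw [Finset.mem_filter] at hx ⊢
      exact ⟨Finset.mem_univ _, hμ1 (i, x) hx.2 (i, y) le_rfl hy⟩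
    have := initseg _ hdc j
    rw [Finset.mem_filter] at this
    simpa [hlam] using this
  have lamle : ∀ i : Fin n, lam i ≤ n := by
    intro i
    rw [hlam]
    simpa using Finset.card_filter_le (univ : Finset (Fin n)) fun j : Fin n => (i, j) ∈ μ
  have anti : ∀ i' i : Fin n, i' ≤ i → lam i ≤ lam i' := by
    intro i' i hii
    by_contra hc
    push_neg at hc
    have hjlt : lam i' < n := lt_of_lt_of_le hc (lamle i)
    set j : Fin n := ⟨lam i', hjlt⟩ with hj
    have h1 : (i, j) ∈ μ := (rowchar i j).mpr (by simp [hj]; exact hc)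
    have h2 : (i', j) ∈ μ := hμ1 (i, j) h1 (i', j) hii le_rfl
    have := (rowchar i' j).mp h2
    simp [hj] at this
  have hglt : ∀ k : Fin n, lam k.rev + (k : ℕ) < 2*n := by
    intro k
    have := lamle k.rev
    have := k.isLt
    omega
  set g : Fin n → Fin (2*n) := fun k => ⟨lam k.rev + (k : ℕ), hglt k⟩ with hgdef
  have hg : StrictMono g := by
    intro k k' hkk
    rw [Fin.lt_def]
    simp only [hgdef, Fin.val_mk]
    have hrle : k'.rev ≤ k.rev := Fin.rev_le_rev.mpr (le_of_lt hkk)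
    have := anti k'.rev k.rev hrle
    rw [Fin.lt_def] at hkk
    omega
  refine ⟨univ.image g, ?_, ?_, ?_⟩
  · rw [Finset.card_image_of_injective _ hg.injective]; simp
  · have hcard : (univ.image g).card = n := by
      rw [Finset.card_image_of_injective _ hg.injective]; simp
    apply (part1 _ hcard).mp
    suffices hd : diagOf n (univ.image g) = μ by rw [hd, hμ2]
    ext b
    obtain ⟨i, j⟩ := b
    have hmem : ((i, j) ∈ diagOf n (univ.image g)) ↔
        n + (j : ℕ) - (i : ℕ) ≤ (g i.rev : ℕ) := by
      simpa using mem_diag_image hg (i, j)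
    rw [hmem, rowchar i j]
    have hval : (g i.rev : ℕ) = lam i + ((i.rev : ℕ)) := by
      simp [hgdef, Fin.rev_rev]
    rw [hval, Fin.val_rev]
    have := i.isLt
    have := j.isLt
    omega
  · ext b
    obtain ⟨i, j⟩ := b
    have hmem : ((i, j) ∈ diagOf n (univ.image g)) ↔
        n + (j : ℕ) - (i : ℕ) ≤ (g i.rev : ℕ) := by
      simpa using mem_diag_image hg (i, j)
    rw [hmem, rowchar i j]
    have hval : (g i.rev : ℕ) = lam i + ((i.rev : ℕ)) := by
      simp [hgdef, Fin.rev_rev]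
    rw [hval, Fin.val_rev]
    have := i.isLt
    have := j.isLt
    omega

theorem stmt7 (n : ℕ) :
    (∀ α : Finset (Fin (2*n)), α.card = n →
      (transposeD n (diagOf n α) = diagOf n α ↔ AdmissibleSet n α)) ∧
    Set.BijOn (diagOf n)
      {α : Finset (Fin (2*n)) | α.card = n ∧ AdmissibleSet n α}
      {μ : Finset (Fin n × Fin n) | IsDiagram n μ ∧ transposeD n μ = μ} := by
  constructor
  · exact fun α hα => part1 α hα
  · refine ⟨?_, ?_, ?_⟩
    · rintro α ⟨hcard, hadm⟩
      exact ⟨diag_isDiagram α hcard, (part1 α hcard).mpr hadm⟩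
    · rintro α ⟨hα, _⟩ β ⟨hβ, _⟩ h
      exact diag_inj α β hα hβ h
    · rintro μ ⟨h1, h2⟩
      obtain ⟨α, hc, ha, hd⟩ := surj_construct μ h1 h2
      exact ⟨α, ⟨hc, ha⟩, hd⟩
end
end

section
/- Let X be an n×n complex matrix and let Y := (I_n | X) be the n×2n matrix, columns indexed by ⟨n⟩ in increasing order, whose first n columns form the identity matrix. Let U ⊆ ℂ^{2n} be the row space of Y, and let U^⊥ := {v ∈ ℂ^{2n} : Ω(v,u) = 0 for all u ∈ U}. Then U^⊥ is the row space of the matrix (I_n | X^∨), where X^∨ is the reflection of X in its antidiagonal: (X^∨)_{ij} := X_{n+1−j, n+1−i}. -/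
/-
STATEMENT 8: If Y := (I_n | X) and U is the row space of Y, then the
orthogonal complement U^⊥ of U with respect to the symplectic form Ω is the
row space of (I_n | X^∨), where X^∨ is the reflection of X in its
antidiagonal.

⟨n⟩ is identified with Fin (2*n) (columns); the basis vector e_{−i} sits at
0-indexed position n−i and e_i at position n+i−1.  Ω(u,v) = Σ_i (u_{−i} v_i −
u_i v_{−i}).
-/

noncomputable section

/-- 0-indexed position of −(i+1) in ⟨n⟩ ≅ Fin (2*n). -/
def negF (n : ℕ) (i : Fin n) : Fin (2*n) := ⟨n - 1 - (i : ℕ), by have := i.isLt; omega⟩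

/-- 0-indexed position of i+1 in ⟨n⟩ ≅ Fin (2*n). -/
def posF (n : ℕ) (i : Fin n) : Fin (2*n) := ⟨n + (i : ℕ), by have := i.isLt; omega⟩

/-- The alternating form Ω with Ω(e_{−i}, e_i) = 1 = −Ω(e_i, e_{−i}) and
Ω(e_a, e_b) = 0 for a ≠ −b. -/
def OmegaForm (n : ℕ) (u v : Fin (2*n) → ℂ) : ℂ :=
  ∑ i : Fin n, (u (negF n i) * v (posF n i) - u (posF n i) * v (negF n i))

/-- The n × 2n matrix (I_n | X). -/
def Ymat (n : ℕ) (X : Matrix (Fin n) (Fin n) ℂ) : Matrix (Fin n) (Fin (2*n)) ℂ :=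
  Matrix.of fun i j =>
    if h : (j : ℕ) < n then (if (i : ℕ) = (j : ℕ) then 1 else 0)
    else X i ⟨(j : ℕ) - n, by have := j.isLt; omega⟩

/-- Reflection of X in its antidiagonal: (X^∨)_{ij} = X_{n+1−j, n+1−i}
(1-indexed), i.e. (X^∨)_{ij} = X_{n−1−j, n−1−i} (0-indexed). -/
def antiDiagRev (n : ℕ) (X : Matrix (Fin n) (Fin n) ℂ) : Matrix (Fin n) (Fin n) ℂ :=
  Matrix.of fun i j =>
    X ⟨n - 1 - (j : ℕ), by have := j.isLt; omega⟩ ⟨n - 1 - (i : ℕ), by have := i.isLt; omega⟩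

lemma Ymat_neg (n : ℕ) (X : Matrix (Fin n) (Fin n) ℂ) (k i : Fin n) :
    Ymat n X k (negF n i) = if (k : ℕ) = n - 1 - (i : ℕ) then 1 else 0 := by
  have hi := i.isLt
  simp only [Ymat, negF, Matrix.of_apply]
  rw [dif_pos (by omega)]

lemma Ymat_pos (n : ℕ) (X : Matrix (Fin n) (Fin n) ℂ) (k i : Fin n) :
    Ymat n X k (posF n i) = X k i := by
  simp only [Ymat, posF, Matrix.of_apply]
  rw [dif_neg (by omega)]
  congr 1
  exact Fin.ext (by simp)

lemma omega_add_left (n : ℕ) (a b v : Fin (2*n) → ℂ) :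
    OmegaForm n (a + b) v = OmegaForm n a v + OmegaForm n b v := by
  simp only [OmegaForm, Pi.add_apply]
  rw [← Finset.sum_add_distrib]
  exact Finset.sum_congr rfl fun i _ => by ring

lemma omega_smul_left (n : ℕ) (c : ℂ) (a v : Fin (2*n) → ℂ) :
    OmegaForm n (c • a) v = c * OmegaForm n a v := by
  simp only [OmegaForm, Pi.smul_apply, smul_eq_mul, Finset.mul_sum]
  exact Finset.sum_congr rfl fun i _ => by ring

lemma omega_add_right (n : ℕ) (v a b : Fin (2*n) → ℂ) :
    OmegaForm n v (a + b) = OmegaForm n v a + OmegaForm n v b := by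
  simp only [OmegaForm, Pi.add_apply]
  rw [← Finset.sum_add_distrib]
  exact Finset.sum_congr rfl fun i _ => by ring

lemma omega_smul_right (n : ℕ) (c : ℂ) (v a : Fin (2*n) → ℂ) :
    OmegaForm n v (c • a) = c * OmegaForm n v a := by
  simp only [OmegaForm, Pi.smul_apply, smul_eq_mul, Finset.mul_sum]
  exact Finset.sum_congr rfl fun i _ => by ring

lemma omega_zero_left (n : ℕ) (v : Fin (2*n) → ℂ) : OmegaForm n 0 v = 0 := by
  simp [OmegaForm]

lemma omega_rows (n : ℕ) (X : Matrix (Fin n) (Fin n) ℂ) (k l : Fin n) :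
    OmegaForm n (Ymat n (antiDiagRev n X) k) (Ymat n X l) = 0 := by
  have hk := k.isLt; have hl := l.isLt
  simp only [OmegaForm, Ymat_neg, Ymat_pos]
  rw [Finset.sum_sub_distrib]
  have h1 : ∑ i : Fin n, (if (k : ℕ) = n - 1 - (i : ℕ) then (1:ℂ) else 0) * X l i
      = X l ⟨n - 1 - (k : ℕ), by omega⟩ := by
    rw [Finset.sum_eq_single (⟨n - 1 - (k : ℕ), by omega⟩ : Fin n)]
    · rw [if_pos (by simp; omega), one_mul]
    · intro b _ hb
      rw [if_neg, zero_mul]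
      intro h
      exact hb (Fin.ext (by have := b.isLt; simp at h ⊢; omega))
    · simp
  have h2 : ∑ i : Fin n, antiDiagRev n X k i * (if (l : ℕ) = n - 1 - (i : ℕ) then (1:ℂ) else 0)
      = antiDiagRev n X k ⟨n - 1 - (l : ℕ), by omega⟩ := by
    rw [Finset.sum_eq_single (⟨n - 1 - (l : ℕ), by omega⟩ : Fin n)]
    · rw [if_pos (by simp; omega), mul_one]
    · intro b _ hb
      rw [if_neg, mul_zero]
      intro h
      exact hb (Fin.ext (by have := b.isLt; simp at h ⊢; omega))
    · simp
  rw [h1, h2]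
  simp only [antiDiagRev, Matrix.of_apply]
  rw [sub_eq_zero]
  congr 1
  exact Fin.ext (by simp; omega)

theorem stmt8 (n : ℕ) (X : Matrix (Fin n) (Fin n) ℂ) :
    {v : Fin (2*n) → ℂ |
        ∀ u ∈ Submodule.span ℂ (Set.range fun i : Fin n => Ymat n X i),
          OmegaForm n v u = 0} =
      ↑(Submodule.span ℂ (Set.range fun i : Fin n => Ymat n (antiDiagRev n X) i)) := by
  ext v
  simp only [Set.mem_setOf_eq, SetLike.mem_coe]
  constructor
  · intro hv
    have key : ∀ l : Fin n, OmegaForm n v (Ymat n X l) = 0 :=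
      fun l => hv _ (Submodule.subset_span ⟨l, rfl⟩)
    have hrep : v = ∑ k : Fin n, v ⟨(k : ℕ), by have := k.isLt; omega⟩ •
        Ymat n (antiDiagRev n X) k := by
      funext j
      simp only [Finset.sum_apply, Pi.smul_apply, smul_eq_mul]
      by_cases hj : (j : ℕ) < n
      · rw [Finset.sum_eq_single (⟨(j : ℕ), hj⟩ : Fin n)]
        · simp only [Ymat, Matrix.of_apply]
          rw [dif_pos hj, if_pos (by simp), mul_one]
        · intro b _ hb
          simp only [Ymat, Matrix.of_apply]
          rw [dif_pos hj, if_neg (fun h => hb (Fin.ext (by simpa using h))), mul_zero]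
        · simp
      · -- j = n + m
        have hj2 := j.isLt
        set m : ℕ := (j : ℕ) - n with hm
        have hmn : m < n := by omega
        have hkey := key ⟨n - 1 - m, by omega⟩
        simp only [OmegaForm, Ymat_neg, Ymat_pos] at hkey
        rw [Finset.sum_sub_distrib, sub_eq_zero] at hkey
        have h2 : ∑ i : Fin n, v (posF n i) *
            (if ((⟨n - 1 - m, by omega⟩ : Fin n) : ℕ) = n - 1 - (i : ℕ) then (1:ℂ) else 0)
            = v j := by
          rw [Finset.sum_eq_single (⟨m, hmn⟩ : Fin n)]
          · rw [if_pos (by simp), mul_one]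
            exact congrArg v (Fin.ext (show n + m = (j:ℕ) by omega))
          · intro b _ hb
            rw [if_neg, mul_zero]
            intro h
            exact hb (Fin.ext (by have := b.isLt; simp at h ⊢; omega))
          · simp
        rw [h2] at hkey
        rw [← hkey]
        apply Fintype.sum_equiv (Fin.revPerm)
        intro i
        have hi := i.isLt
        simp only [Fin.revPerm_apply, Fin.rev, Ymat, antiDiagRev, Matrix.of_apply, negF]
        rw [dif_neg (by simp; omega)]
        congr 1
        · exact congrArg v (Fin.ext (by simp; omega))
        · congr 1
          exact Fin.ext (by simp; omega)
    rw [hrep]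
    exact Submodule.sum_mem _ fun k _ =>
      Submodule.smul_mem _ _ (Submodule.subset_span ⟨k, rfl⟩)
  · intro hv u hu
    induction hu using Submodule.span_induction with
    | mem u hu =>
      obtain ⟨l, rfl⟩ := hu
      induction hv using Submodule.span_induction with
      | mem w hw => obtain ⟨k, rfl⟩ := hw; exact omega_rows n X k l
      | zero => exact omega_zero_left n _
      | add a b _ _ ha hb => rw [omega_add_left, ha, hb, add_zero]
      | smul c a _ ha => rw [omega_smul_left, ha, mul_zero]
    | zero => simp [OmegaForm]
    | add a b _ _ ha hb => rw [omega_add_right, ha, hb, add_zero]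
    | smul c a _ ha => rw [omega_smul_right, ha, mul_zero]
end
end

section
/- The poset P_{d,n} is a distributive lattice: any two elements have a meet and a join, and meet distributes over join. -/
noncomputable section

/-- An element α^{(a)} of the poset P_{d,n}: an admissible n-element subset α
of ⟨n⟩ ≅ Fin (2*n) together with a superscript (level) a ∈ {0,…,d}. -/
structure PEl (n d : ℕ) where
  carrier : Finset (Fin (2*n))
  hcard : carrier.card = n
  hadm : AdmissibleSet n carrier
  lvl : ℕ
  hlvl : lvl ≤ d

/-- The i-th smallest element of α (0-indexed). -/
def PEl.elem {n d : ℕ} (x : PEl n d) (i : Fin n) : Fin (2*n) :=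
  (x.carrier.orderIsoOfFin x.hcard i).1

/-- The order on P_{d,n}: α^{(a)} ≤ β^{(b)} iff a ≤ b and αᵢ ≤ β_{(b−a)+i} for
all i with 1 ≤ i ≤ n−(b−a) (here 0-indexed). -/
def Ple {n d : ℕ} (x y : PEl n d) : Prop :=
  x.lvl ≤ y.lvl ∧ ∀ (i : ℕ) (h : i + (y.lvl - x.lvl) < n),
    x.elem ⟨i, by omega⟩ ≤ y.elem ⟨i + (y.lvl - x.lvl), h⟩

/-- Covering relation in P_{d,n}. -/
def Pcov {n d : ℕ} (x y : PEl n d) : Prop :=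
  Ple x y ∧ x ≠ y ∧ ∀ z : PEl n d, Ple x z → Ple z y → z = x ∨ z = y

/-- Number of negative elements of α (those of 0-indexed position < n). -/
def negCount (n : ℕ) (α : Finset (Fin (2*n))) : ℕ :=
  (α.filter fun j : Fin (2*n) => (j : ℕ) < n).card

/-- A type-(1) cover: a cover with the same superscript in which both sets
have the same number of negative elements. -/
def Type1Cov {n d : ℕ} (x y : PEl n d) : Prop :=
  Pcov x y ∧ x.lvl = y.lvl ∧ negCount n x.carrier = negCount n y.carrier

/-- (x,y) is an admissible pair iff x and y are connected by a saturated chain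
of type-(1) covers (the empty chain giving the diagonal pairs). -/
def AdmPair {n d : ℕ} (x y : PEl n d) : Prop :=
  Relation.ReflTransGen Type1Cov x y


namespace Stmt11Aux

variable {n d : ℕ}

lemma elem_def (x : PEl n d) (i : Fin n) :
    x.elem i = x.carrier.orderEmbOfFin x.hcard i := rfl

lemma elem_strictMono (x : PEl n d) : StrictMono x.elem :=
  (x.carrier.orderEmbOfFin x.hcard).strictMono

lemma elem_mem (x : PEl n d) (i : Fin n) : x.elem i ∈ x.carrier :=
  Finset.orderEmbOfFin_mem _ x.hcard _

lemma mem_iff_elem {x : PEl n d} {t : Fin (2*n)} :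
    t ∈ x.carrier ↔ ∃ i, x.elem i = t := by
  constructor
  · intro ht
    have : t ∈ Set.range (x.carrier.orderEmbOfFin x.hcard) := by
      rw [Finset.range_orderEmbOfFin]; exact ht
    obtain ⟨i, hi⟩ := this; exact ⟨i, hi⟩
  · rintro ⟨i, rfl⟩; exact elem_mem x i

lemma adm_sum_ne {x : PEl n d} {p q : Fin (2*n)} (hp : p ∈ x.carrier) (hq : q ∈ x.carrier) :
    (p : ℕ) + (q : ℕ) ≠ 2*n - 1 := by
  intro h
  have hp2 := p.isLt
  have hq2 := q.isLt
  have h2 : q = p.rev := by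
    apply Fin.ext
    rw [Fin.val_rev]
    omega
  exact ((x.hadm p).mp hp) (h2 ▸ hq)

lemma adm_of_pairs {S : Finset (Fin (2*n))} (hc : S.card = n)
    (h : ∀ p ∈ S, ∀ q ∈ S, (p : ℕ) + (q : ℕ) ≠ 2*n - 1) : AdmissibleSet n S := by
  intro j
  have hj2 := j.isLt
  constructor
  · intro hj hrev
    exact h j hj j.rev hrev (by rw [Fin.val_rev]; omega)
  · intro hrev
    by_contra hj
    have hdisj : Disjoint S (S.image Fin.rev) := by
      rw [Finset.disjoint_left]
      rintro t ht hmem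
      obtain ⟨s, hs, rfl⟩ := Finset.mem_image.mp hmem
      have := s.isLt
      exact h s hs s.rev ht (by rw [Fin.val_rev]; omega)
    have hcard : (S ∪ S.image Fin.rev).card = 2*n := by
      rw [Finset.card_union_of_disjoint hdisj,
        Finset.card_image_of_injective _ Fin.rev_injective, hc]
      omega
    have huniv : S ∪ S.image Fin.rev = Finset.univ :=
      Finset.eq_univ_of_card _ (by simp [hcard])
    have : j ∈ S ∪ S.image Fin.rev := huniv ▸ Finset.mem_univ j
    rcases Finset.mem_union.mp this with h1 | h1
    · exact hj h1
    · obtain ⟨s, hs, hsj⟩ := Finset.mem_image.mp h1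
      exact hrev (by rw [← hsj, Fin.rev_rev]; exact hs)

/-- number of elements of `S` with value `≤ v`. -/
def cntLe (S : Finset (Fin (2*n))) (v : ℕ) : ℕ := (S.filter (fun t : Fin (2*n) => (t : ℕ) ≤ v)).card

/-- number of elements of `S` with value `≥ v`. -/
def cntGe (S : Finset (Fin (2*n))) (v : ℕ) : ℕ := (S.filter (fun t : Fin (2*n) => v ≤ (t : ℕ))).card

lemma cnt_ge_lemma (x : PEl n d) (p : Fin n) (v : ℕ) (h : v ≤ (x.elem p : ℕ)) :
    n - (p : ℕ) ≤ cntGe x.carrier v := by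
  have hsub : (Finset.Ici p).image x.elem ⊆ x.carrier.filter (fun t : Fin (2*n) => v ≤ (t : ℕ)) := by
    intro t ht
    obtain ⟨i, hi, rfl⟩ := Finset.mem_image.mp ht
    rw [Finset.mem_Ici] at hi
    refine Finset.mem_filter.mpr ⟨elem_mem x i, le_trans h ?_⟩
    exact_mod_cast (elem_strictMono x).monotone hi
  calc n - (p : ℕ) = (Finset.Ici p).card := (Fin.card_Ici p).symm
    _ = ((Finset.Ici p).image x.elem).card :=
        (Finset.card_image_of_injective _ (elem_strictMono x).injective).symm
    _ ≤ _ := Finset.card_le_card hsub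

lemma cnt_le_lemma (x : PEl n d) (p : Fin n) (v : ℕ) (h : (x.elem p : ℕ) ≤ v) :
    (p : ℕ) + 1 ≤ cntLe x.carrier v := by
  have hsub : (Finset.Iic p).image x.elem ⊆ x.carrier.filter (fun t : Fin (2*n) => (t : ℕ) ≤ v) := by
    intro t ht
    obtain ⟨i, hi, rfl⟩ := Finset.mem_image.mp ht
    rw [Finset.mem_Iic] at hi
    refine Finset.mem_filter.mpr ⟨elem_mem x i, le_trans ?_ h⟩
    exact_mod_cast (elem_strictMono x).monotone hi
  calc (p : ℕ) + 1 = (Finset.Iic p).card := (Fin.card_Iic p).symm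
    _ = ((Finset.Iic p).image x.elem).card :=
        (Finset.card_image_of_injective _ (elem_strictMono x).injective).symm
    _ ≤ _ := Finset.card_le_card hsub

lemma cnt_adm_lemma (x : PEl n d) (v : ℕ) (hv : v < 2*n) :
    cntLe x.carrier v + cntGe x.carrier (2*n - 1 - v) ≤ v + 1 := by
  set A := x.carrier.filter (fun t : Fin (2*n) => (t : ℕ) ≤ v) with hA
  set B := x.carrier.filter (fun t : Fin (2*n) => 2*n - 1 - v ≤ (t : ℕ)) with hB
  have hsubA : A.image Fin.rev ⊆ Finset.univ.filter (fun t : Fin (2*n) => 2*n - 1 - v ≤ (t : ℕ)) := by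
    intro t ht
    obtain ⟨s, hs, rfl⟩ := Finset.mem_image.mp ht
    have := (Finset.mem_filter.mp hs).2
    have := s.isLt
    refine Finset.mem_filter.mpr ⟨Finset.mem_univ _, ?_⟩
    rw [Fin.val_rev]; omega
  have hsubB : B ⊆ Finset.univ.filter (fun t : Fin (2*n) => 2*n - 1 - v ≤ (t : ℕ)) := by
    intro t ht
    exact Finset.mem_filter.mpr ⟨Finset.mem_univ _, (Finset.mem_filter.mp ht).2⟩
  have hdisj : Disjoint (A.image Fin.rev) B := by
    rw [Finset.disjoint_left]
    rintro t ht htB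
    obtain ⟨s, hs, rfl⟩ := Finset.mem_image.mp ht
    have hs1 := (Finset.mem_filter.mp hs).1
    have hs2 := (Finset.mem_filter.mp hs).2
    have htB1 := (Finset.mem_filter.mp htB).1
    have := s.isLt
    exact adm_sum_ne hs1 htB1 (by rw [Fin.val_rev]; omega)
  have hcardC : (Finset.univ.filter (fun t : Fin (2*n) => 2*n - 1 - v ≤ (t : ℕ))).card = v + 1 := by
    have : Finset.univ.filter (fun t : Fin (2*n) => 2*n - 1 - v ≤ (t : ℕ)) =
        Finset.Ici (⟨2*n - 1 - v, by omega⟩ : Fin (2*n)) := by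
      ext t
      simp [Finset.mem_Ici, Fin.le_def]
    rw [this, Fin.card_Ici]
    simp only []
    omega
  calc cntLe x.carrier v + cntGe x.carrier (2*n-1-v)
      = (A.image Fin.rev).card + B.card := by
        rw [Finset.card_image_of_injective _ Fin.rev_injective]; rfl
    _ = ((A.image Fin.rev) ∪ B).card := (Finset.card_union_of_disjoint hdisj).symm
    _ ≤ (Finset.univ.filter (fun t : Fin (2*n) => 2*n - 1 - v ≤ (t : ℕ))).card :=
        Finset.card_le_card (Finset.union_subset hsubA hsubB)
    _ = v + 1 := hcardC

/-- the sequence of the meet of `x` and `y` (assuming `x.lvl ≤ y.lvl`). -/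
def mseq (x y : PEl n d) (i : Fin n) : Fin (2*n) :=
  if h2 : (i : ℕ) + (y.lvl - x.lvl) < n then
    min (x.elem i) (y.elem ⟨(i : ℕ) + (y.lvl - x.lvl), h2⟩)
  else x.elem i

lemma mseq_le_x (x y : PEl n d) (i : Fin n) : mseq x y i ≤ x.elem i := by
  unfold mseq; split
  · exact min_le_left _ _
  · exact le_refl _

lemma mseq_le_y (x y : PEl n d) (i : Fin n) (h2 : (i : ℕ) + (y.lvl - x.lvl) < n) :
    mseq x y i ≤ y.elem ⟨(i : ℕ) + (y.lvl - x.lvl), h2⟩ := by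
  unfold mseq; rw [dif_pos h2]; exact min_le_right _ _

lemma mseq_cases (x y : PEl n d) (i : Fin n) :
    mseq x y i = x.elem i ∨
      ∃ h2 : (i : ℕ) + (y.lvl - x.lvl) < n, mseq x y i = y.elem ⟨(i : ℕ) + (y.lvl - x.lvl), h2⟩ := by
  unfold mseq; split
  · rename_i h2
    rcases le_total (x.elem i) (y.elem ⟨(i : ℕ) + (y.lvl - x.lvl), h2⟩) with h | h
    · exact Or.inl (min_eq_left h)
    · exact Or.inr ⟨h2, min_eq_right h⟩
  · exact Or.inl rfl

lemma mseq_strictMono (x y : PEl n d) : StrictMono (mseq x y) := by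
  intro i j hij
  rcases mseq_cases x y j with hj | ⟨hj2, hj⟩
  · calc mseq x y i ≤ x.elem i := mseq_le_x x y i
      _ < x.elem j := elem_strictMono x hij
      _ = mseq x y j := hj.symm
  · have hi2 : (i : ℕ) + (y.lvl - x.lvl) < n := by
      have := Fin.lt_def.mp hij; omega
    calc mseq x y i ≤ y.elem ⟨(i : ℕ) + (y.lvl - x.lvl), hi2⟩ := mseq_le_y x y i hi2
      _ < y.elem ⟨(j : ℕ) + (y.lvl - x.lvl), hj2⟩ := by
          apply elem_strictMono y
          rw [Fin.lt_def]
          have := Fin.lt_def.mp hij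
          simpa using by omega
      _ = mseq x y j := hj.symm

lemma mseq_sum_ne_aux (x y : PEl n d) (i j : Fin n) (hij : i < j) :
    (mseq x y i : ℕ) + (mseq x y j : ℕ) ≠ 2*n - 1 := by
  intro hsum
  set k := y.lvl - x.lvl with hk
  have hijn := Fin.lt_def.mp hij
  have hin := i.isLt
  have hjn := j.isLt
  rcases mseq_cases x y i with hi | ⟨hi2, hi⟩ <;> rcases mseq_cases x y j with hj | ⟨hj2, hj⟩
  · -- both from x
    rw [hi, hj] at hsum
    exact adm_sum_ne (elem_mem x i) (elem_mem x j) hsum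
  · -- v from x, w from y
    have hi2 : (i : ℕ) + k < n := by omega
    set v := (x.elem i : ℕ) with hv
    set w := (y.elem ⟨(j : ℕ) + k, hj2⟩ : ℕ) with hw
    have hv2n := (x.elem i).isLt
    have hw2n := (y.elem ⟨(j : ℕ) + k, hj2⟩).isLt
    have hvw : v + w = 2*n - 1 := by rw [hi, hj] at hsum; exact hsum
    -- v ≤ y.elem (i+k)
    have h1 : v ≤ (y.elem ⟨(i : ℕ) + k, hi2⟩ : ℕ) := by
      have := mseq_le_y x y i hi2
      rw [hi] at this
      exact_mod_cast this
    -- w ≤ x.elem j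
    have h2 : w ≤ (x.elem j : ℕ) := by
      have := mseq_le_x x y j
      rw [hj] at this
      exact_mod_cast this
    have c1 := cnt_le_lemma x i v (le_refl _)
    have c2 := cnt_ge_lemma x j (2*n - 1 - v) (by omega)
    have c3 := cnt_adm_lemma x v (by omega)
    have c4 := cnt_le_lemma y ⟨(j : ℕ) + k, hj2⟩ w (le_refl _)
    have c5 := cnt_ge_lemma y ⟨(i : ℕ) + k, hi2⟩ (2*n - 1 - w) (by omega)
    have c6 := cnt_adm_lemma y w (by omega)
    simp only [] at c1 c2 c3 c4 c5 c6
    omega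
  · -- v from y, w from x
    set v := (y.elem ⟨(i : ℕ) + k, hi2⟩ : ℕ) with hv
    set w := (x.elem j : ℕ) with hw
    have hv2n := (y.elem ⟨(i : ℕ) + k, hi2⟩).isLt
    have hw2n := (x.elem j).isLt
    have hvw : v + w = 2*n - 1 := by rw [hi, hj] at hsum; exact hsum
    have h1 : v ≤ (x.elem i : ℕ) := by
      have := mseq_le_x x y i
      rw [hi] at this
      exact_mod_cast this
    have c1 := cnt_le_lemma x j w (le_refl _)
    have c2 := cnt_ge_lemma x i (2*n - 1 - w) (by omega)
    have c3 := cnt_adm_lemma x w (by omega)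
    have c4 := cnt_le_lemma y ⟨(i : ℕ) + k, hi2⟩ v (le_refl _)
    have c6 := cnt_adm_lemma y v (by omega)
    by_cases hj2 : (j : ℕ) + k < n
    · have h2 : w ≤ (y.elem ⟨(j : ℕ) + k, hj2⟩ : ℕ) := by
        have := mseq_le_y x y j hj2
        rw [hj] at this
        exact_mod_cast this
      have c5 := cnt_ge_lemma y ⟨(j : ℕ) + k, hj2⟩ (2*n - 1 - v) (by omega)
      simp only [] at c1 c2 c3 c4 c5 c6
      omega
    · simp only [] at c1 c2 c3 c4 c6
      omega
  · -- both from y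
    rw [hi, hj] at hsum
    exact adm_sum_ne (elem_mem y _) (elem_mem y _) hsum

lemma mseq_sum_ne (x y : PEl n d) (i j : Fin n) :
    (mseq x y i : ℕ) + (mseq x y j : ℕ) ≠ 2*n - 1 := by
  rcases lt_trichotomy i j with h | h | h
  · exact mseq_sum_ne_aux x y i j h
  · subst h
    intro hsum
    have := (mseq x y i).isLt
    have := i.isLt
    omega
  · intro hsum
    exact mseq_sum_ne_aux x y j i h (by omega)

def meetAux (x y : PEl n d) : PEl n d where
  carrier := Finset.image (mseq x y) Finset.univ
  hcard := by
    rw [Finset.card_image_of_injective _ (mseq_strictMono x y).injective,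
      Finset.card_univ, Fintype.card_fin]
  hadm := by
    apply adm_of_pairs
    · rw [Finset.card_image_of_injective _ (mseq_strictMono x y).injective,
        Finset.card_univ, Fintype.card_fin]
    · rintro p hp q hq
      obtain ⟨i, _, rfl⟩ := Finset.mem_image.mp hp
      obtain ⟨j, _, rfl⟩ := Finset.mem_image.mp hq
      exact mseq_sum_ne x y i j
  lvl := x.lvl
  hlvl := x.hlvl

lemma meetAux_elem (x y : PEl n d) (i : Fin n) : (meetAux x y).elem i = mseq x y i := by
  rw [elem_def]
  have := Finset.orderEmbOfFin_unique (meetAux x y).hcard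
    (f := mseq x y) (fun t => Finset.mem_image_of_mem _ (Finset.mem_univ t))
    (mseq_strictMono x y)
  exact (congrFun this i).symm

lemma meetAux_lvl (x y : PEl n d) : (meetAux x y).lvl = x.lvl := rfl

lemma PEl.ext' {x y : PEl n d} (hc : x.carrier = y.carrier) (hl : x.lvl = y.lvl) : x = y := by
  cases x; cases y; simp_all

lemma meetAux_le_left (x y : PEl n d) : Ple (meetAux x y) x := by
  refine ⟨le_refl _, fun i h => ?_⟩
  have h0 : x.lvl - (meetAux x y).lvl = 0 := by rw [meetAux_lvl]; omega
  rw [meetAux_elem]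
  calc mseq x y ⟨i, by omega⟩ ≤ x.elem ⟨i, by omega⟩ := mseq_le_x x y _
    _ = x.elem ⟨i + (x.lvl - (meetAux x y).lvl), h⟩ := by congr 1; apply Fin.ext; simp [h0]

lemma meetAux_le_right (x y : PEl n d) (hxy : x.lvl ≤ y.lvl) : Ple (meetAux x y) y := by
  refine ⟨hxy, fun i h => ?_⟩
  have h0 : y.lvl - (meetAux x y).lvl = y.lvl - x.lvl := rfl
  rw [meetAux_elem]
  have h2 : (i : ℕ) + (y.lvl - x.lvl) < n := by rw [h0] at h; exact h
  calc mseq x y ⟨i, by omega⟩ ≤ y.elem ⟨i + (y.lvl - x.lvl), h2⟩ := mseq_le_y x y _ h2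
    _ = y.elem ⟨i + (y.lvl - (meetAux x y).lvl), h⟩ := by congr 1

lemma meetAux_glb (x y z : PEl n d) (hxy : x.lvl ≤ y.lvl)
    (hzx : Ple z x) (hzy : Ple z y) : Ple z (meetAux x y) := by
  refine ⟨hzx.1, fun i h => ?_⟩
  have hlvl : (meetAux x y).lvl = x.lvl := rfl
  rw [hlvl] at h
  set s := x.lvl - z.lvl with hs
  set k := y.lvl - x.lvl with hk2
  have hzl : z.lvl ≤ x.lvl := hzx.1
  rw [meetAux_elem]
  have htarget : mseq x y ⟨i + ((meetAux x y).lvl - z.lvl), by rw [hlvl]; omega⟩ =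
      mseq x y ⟨i + s, by omega⟩ := by congr 1
  rw [htarget]
  unfold mseq
  split
  · rename_i h2
    apply le_min
    · exact hzx.2 i (by omega)
    · have h3 : i + (y.lvl - z.lvl) < n := by simp at h2; omega
      have := hzy.2 i h3
      calc z.elem ⟨i, by omega⟩ ≤ y.elem ⟨i + (y.lvl - z.lvl), h3⟩ := this
        _ = y.elem ⟨(i + s : ℕ) + k, by simpa using h2⟩ := by
            congr 1; apply Fin.ext; simp; omega
  · exact hzx.2 i (by omega)

/-- the meet of two elements. -/
def pmeet (x y : PEl n d) : PEl n d :=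
  if x.lvl ≤ y.lvl then meetAux x y else meetAux y x

lemma pmeet_le_left (x y : PEl n d) : Ple (pmeet x y) x := by
  unfold pmeet; split
  · exact meetAux_le_left x y
  · exact meetAux_le_right y x (by omega)

lemma pmeet_le_right (x y : PEl n d) : Ple (pmeet x y) y := by
  unfold pmeet; split
  · exact meetAux_le_right x y (by assumption)
  · exact meetAux_le_left y x

lemma pmeet_glb (x y z : PEl n d) (hzx : Ple z x) (hzy : Ple z y) : Ple z (pmeet x y) := by
  unfold pmeet; split
  · exact meetAux_glb x y z (by assumption) hzx hzy
  · exact meetAux_glb y x z (by omega) hzy hzx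

/-- complementation, an antitone involution. -/
def pcompl (x : PEl n d) : PEl n d where
  carrier := x.carrierᶜ
  hcard := by
    rw [Finset.card_compl, x.hcard, Fintype.card_fin]
    omega
  hadm := by
    intro j
    simp only [Finset.mem_compl]
    have := x.hadm j.rev
    rw [Fin.rev_rev] at this
    tauto
  lvl := d - x.lvl
  hlvl := Nat.sub_le _ _

lemma pcompl_lvl (x : PEl n d) : (pcompl x).lvl = d - x.lvl := rfl

lemma pcompl_elem (x : PEl n d) (i : Fin n) : (pcompl x).elem i = (x.elem i.rev).rev := by
  rw [elem_def]
  have hmono : StrictMono (fun i : Fin n => (x.elem i.rev).rev) := by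
    intro i j hij
    simp only []
    rw [Fin.rev_lt_rev]
    exact elem_strictMono x (Fin.rev_lt_rev.mpr hij)
  have hmem : ∀ i : Fin n, (x.elem i.rev).rev ∈ (pcompl x).carrier := by
    intro i
    show _ ∈ x.carrierᶜ
    rw [Finset.mem_compl]
    exact (x.hadm (x.elem i.rev)).mp (elem_mem x i.rev)
  have := Finset.orderEmbOfFin_unique (pcompl x).hcard (f := fun i : Fin n => (x.elem i.rev).rev)
    hmem hmono
  exact (congrFun this i).symm

lemma pcompl_pcompl (x : PEl n d) : pcompl (pcompl x) = x := by
  apply PEl.ext'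
  · show x.carrierᶜᶜ = x.carrier
    simp
  · show d - (d - x.lvl) = x.lvl
    have := x.hlvl
    omega

lemma ple_pcompl {x y : PEl n d} (h : Ple x y) : Ple (pcompl y) (pcompl x) := by
  have hab := h.1
  have hbd := y.hlvl
  have had := x.hlvl
  refine ⟨by simp only [pcompl_lvl]; omega, fun i hi => ?_⟩
  simp only [pcompl_lvl] at hi
  have hk : (d - x.lvl) - (d - y.lvl) = y.lvl - x.lvl := by omega
  rw [hk] at hi
  set k := y.lvl - x.lvl with hkdef
  rw [pcompl_elem, pcompl_elem]
  rw [Fin.rev_le_rev]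
  have h3 : (n - 1 - (i + k)) + k < n := by omega
  have := h.2 (n - 1 - (i + k)) h3
  calc x.elem (⟨i + ((d - x.lvl) - (d - y.lvl)), by omega⟩ : Fin n).rev
      = x.elem ⟨n - 1 - (i + k), by omega⟩ := by
        congr 1; apply Fin.ext; rw [Fin.val_rev]; simp [hk]; omega
    _ ≤ y.elem ⟨(n - 1 - (i + k)) + k, h3⟩ := this
    _ = y.elem (⟨i, by omega⟩ : Fin n).rev := by
        congr 1; apply Fin.ext; rw [Fin.val_rev]; simp; omega

/-- the join of two elements. -/
def pjoin (x y : PEl n d) : PEl n d := pcompl (pmeet (pcompl x) (pcompl y))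

lemma pjoin_le_left (x y : PEl n d) : Ple x (pjoin x y) := by
  have h := ple_pcompl (pmeet_le_left (pcompl x) (pcompl y))
  rwa [pcompl_pcompl] at h

lemma pjoin_le_right (x y : PEl n d) : Ple y (pjoin x y) := by
  have h := ple_pcompl (pmeet_le_right (pcompl x) (pcompl y))
  rwa [pcompl_pcompl] at h

lemma pjoin_lub (x y z : PEl n d) (hxz : Ple x z) (hyz : Ple y z) : Ple (pjoin x y) z := by
  have h := ple_pcompl (pmeet_glb (pcompl x) (pcompl y) (pcompl z)
    (ple_pcompl hxz) (ple_pcompl hyz))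
  rwa [pcompl_pcompl] at h

lemma elem_ge_index (x : PEl n d) (i : Fin n) : (i : ℕ) ≤ (x.elem i : ℕ) := by
  have h1 := cnt_le_lemma x i (x.elem i : ℕ) (le_refl _)
  have h2 : cntLe x.carrier (x.elem i : ℕ) ≤ (x.elem i : ℕ) + 1 := by
    unfold cntLe
    calc (x.carrier.filter (fun t : Fin (2*n) => (t : ℕ) ≤ (x.elem i : ℕ))).card
        ≤ (Finset.Iic (x.elem i)).card := by
          apply Finset.card_le_card
          intro t ht
          rw [Finset.mem_Iic, Fin.le_def]
          exact (Finset.mem_filter.mp ht).2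
      _ = (x.elem i : ℕ) + 1 := Fin.card_Iic _
  omega

lemma elem_le_index (x : PEl n d) (i : Fin n) : (x.elem i : ℕ) ≤ (i : ℕ) + n := by
  have h1 := cnt_ge_lemma x i (x.elem i : ℕ) (le_refl _)
  have h2 : cntGe x.carrier (x.elem i : ℕ) ≤ 2*n - (x.elem i : ℕ) := by
    unfold cntGe
    calc (x.carrier.filter (fun t : Fin (2*n) => (x.elem i : ℕ) ≤ (t : ℕ))).card
        ≤ (Finset.Ici (x.elem i)).card := by
          apply Finset.card_le_card
          intro t ht
          rw [Finset.mem_Ici, Fin.le_def]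
          exact (Finset.mem_filter.mp ht).2
      _ = 2*n - (x.elem i : ℕ) := Fin.card_Ici _
  have := (x.elem i).isLt
  have := i.isLt
  omega

lemma elem_congr (x : PEl n d) {i j : Fin n} (h : (i : ℕ) = (j : ℕ)) :
    x.elem i = x.elem j := by
  congr 1
  exact Fin.ext h

/-- the profile function of an element: a padded ℤ-valued version of its
sorted sequence, shifted by the level. -/
def phi (x : PEl n d) (u : ℤ) : ℤ :=
  if h : 0 ≤ u + (x.lvl : ℤ) ∧ u + (x.lvl : ℤ) < n then
    ((x.elem ⟨(u + (x.lvl : ℤ)).toNat, by omega⟩ : Fin (2*n)) : ℤ)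
  else if u + (x.lvl : ℤ) < 0 then u + (x.lvl : ℤ) else (n : ℤ) + (u + (x.lvl : ℤ))

lemma phi_low (x : PEl n d) (u : ℤ) (h : u + (x.lvl : ℤ) < 0) :
    phi x u = u + (x.lvl : ℤ) := by
  unfold phi
  rw [dif_neg (by omega), if_pos h]

lemma phi_mid (x : PEl n d) (u : ℤ) (h1 : 0 ≤ u + (x.lvl : ℤ)) (h2 : u + (x.lvl : ℤ) < n) :
    phi x u = ((x.elem ⟨(u + (x.lvl : ℤ)).toNat, by omega⟩ : Fin (2*n)) : ℤ) := by
  unfold phi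
  rw [dif_pos ⟨h1, h2⟩]

lemma phi_high (x : PEl n d) (u : ℤ) (h : (n : ℤ) ≤ u + (x.lvl : ℤ)) :
    phi x u = (n : ℤ) + (u + (x.lvl : ℤ)) := by
  unfold phi
  rw [dif_neg (by omega), if_neg (by omega)]

lemma phi_lb (x : PEl n d) (u : ℤ) : u + (x.lvl : ℤ) ≤ phi x u := by
  rcases lt_or_ge (u + (x.lvl : ℤ)) 0 with h | h
  · rw [phi_low x u h]
  · rcases lt_or_ge (u + (x.lvl : ℤ)) (n : ℤ) with h2 | h2
    · rw [phi_mid x u h h2]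
      have := elem_ge_index x ⟨(u + (x.lvl : ℤ)).toNat, by omega⟩
      simp only [] at this
      omega
    · rw [phi_high x u h2]
      omega

lemma phi_meetAux (x y : PEl n d) (hxy : x.lvl ≤ y.lvl) (u : ℤ) :
    phi (meetAux x y) u = min (phi x u) (phi y u) := by
  have hlvl : (meetAux x y).lvl = x.lvl := rfl
  have hcast : ((meetAux x y).lvl : ℤ) = (x.lvl : ℤ) := by rw [hlvl]
  rcases lt_or_ge (u + (x.lvl : ℤ)) 0 with h | h
  · rw [phi_low (meetAux x y) u (by rw [hcast]; exact h), phi_low x u h, hcast]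
    have h1 : u + (x.lvl : ℤ) ≤ u + (y.lvl : ℤ) := by
      have : (x.lvl : ℤ) ≤ (y.lvl : ℤ) := by exact_mod_cast hxy
      omega
    exact (min_eq_left (le_trans h1 (phi_lb y u))).symm
  · rcases lt_or_ge (u + (x.lvl : ℤ)) (n : ℤ) with h2 | h2
    · -- middle region
      have hmid := phi_mid (meetAux x y) u (by rw [hcast]; exact h) (by rw [hcast]; exact h2)
      set t : ℕ := (u + (x.lvl : ℤ)).toNat with htdef
      have ht : t < n := by omega
      have hmeet : phi (meetAux x y) u = ((mseq x y ⟨t, ht⟩ : Fin (2*n)) : ℤ) := by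
        rw [hmid, meetAux_elem]
        norm_cast
      have hx := phi_mid x u h h2
      have hxval : phi x u = ((x.elem ⟨t, ht⟩ : Fin (2*n)) : ℤ) := hx
      set k : ℕ := y.lvl - x.lvl with hkdef
      have hbz : (y.lvl : ℤ) = (x.lvl : ℤ) + (k : ℤ) := by
        have : y.lvl = x.lvl + k := by omega
        rw [this]; push_cast; ring
      by_cases h3 : t + k < n
      · -- y also in middle region
        have hy1 : 0 ≤ u + (y.lvl : ℤ) := by rw [hbz]; omega
        have hy2 : u + (y.lvl : ℤ) < n := by rw [hbz]; omega
        have hy := phi_mid y u hy1 hy2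
        have hyval : phi y u = ((y.elem ⟨t + k, h3⟩ : Fin (2*n)) : ℤ) := by
          rw [hy]
          norm_cast
          refine congrArg Fin.val (elem_congr y ?_)
          show (u + (y.lvl : ℤ)).toNat = t + k
          omega
        rw [hmeet, hxval, hyval]
        unfold mseq
        rw [dif_pos (by simpa using h3)]
        have : y.elem ⟨(⟨t, ht⟩ : Fin n) + (y.lvl - x.lvl), by simpa using h3⟩
            = y.elem ⟨t + k, h3⟩ := by congr 1
        rw [this]
        rcases le_total (x.elem ⟨t, ht⟩) (y.elem ⟨t + k, h3⟩) with hle | hle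
        · rw [min_eq_left hle, min_eq_left (by exact_mod_cast hle)]
        · rw [min_eq_right hle, min_eq_right (by exact_mod_cast hle)]
      · -- y in high region
        have hy2 : (n : ℤ) ≤ u + (y.lvl : ℤ) := by rw [hbz]; omega
        have hy := phi_high y u hy2
        rw [hmeet, hxval, hy]
        unfold mseq
        rw [dif_neg (by simpa using h3)]
        have hlt := (x.elem ⟨t, ht⟩).isLt
        have : ((x.elem ⟨t, ht⟩ : Fin (2*n)) : ℤ) < 2*n := by exact_mod_cast hlt
        rw [min_eq_left (by omega)]
    · -- high region
      have hbz : (x.lvl : ℤ) ≤ (y.lvl : ℤ) := by exact_mod_cast hxy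
      rw [phi_high (meetAux x y) u (by rw [hcast]; exact h2), phi_high x u h2,
        phi_high y u (by omega), hcast]
      rw [min_eq_left (by omega)]

lemma phi_pmeet (x y : PEl n d) (u : ℤ) : phi (pmeet x y) u = min (phi x u) (phi y u) := by
  unfold pmeet; split
  · exact phi_meetAux x y (by assumption) u
  · rw [phi_meetAux y x (by omega) u, min_comm]

lemma phi_pcompl (x : PEl n d) (u : ℤ) :
    phi (pcompl x) u = (2*(n : ℤ) - 1) - phi x ((n : ℤ) - 1 - d - u) := by
  have had : x.lvl ≤ d := x.hlvl
  have hcast : (((pcompl x).lvl : ℕ) : ℤ) = (d : ℤ) - (x.lvl : ℤ) := by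
    rw [pcompl_lvl]; omega
  set s : ℤ := (n : ℤ) - 1 - d - u with hsdef
  rcases lt_or_ge (u + ((d : ℤ) - x.lvl)) 0 with hw | hw
  · rw [phi_low (pcompl x) u (by omega), phi_high x s (by omega), hcast]
    omega
  · rcases lt_or_ge (u + ((d : ℤ) - x.lvl)) (n : ℤ) with hw2 | hw2
    · have h1 : 0 ≤ u + (((pcompl x).lvl : ℕ) : ℤ) := by omega
      have h2 : u + (((pcompl x).lvl : ℕ) : ℤ) < n := by omega
      have h3 : 0 ≤ s + (x.lvl : ℤ) := by omega
      have h4 : s + (x.lvl : ℤ) < n := by omega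
      rw [phi_mid (pcompl x) u h1 h2, phi_mid x s h3 h4, pcompl_elem]
      have hE : x.elem ((⟨(u + (((pcompl x).lvl : ℕ) : ℤ)).toNat, by omega⟩ : Fin n).rev)
          = x.elem ⟨(s + (x.lvl : ℤ)).toNat, by omega⟩ := by
        apply elem_congr
        show n - ((u + (((pcompl x).lvl : ℕ) : ℤ)).toNat + 1) = (s + (x.lvl : ℤ)).toNat
        omega
      rw [hE]
      have hval := (x.elem ⟨(s + (x.lvl : ℤ)).toNat, by omega⟩).isLt
      have hR : (((x.elem ⟨(s + (x.lvl : ℤ)).toNat, by omega⟩).rev : Fin (2*n)) : ℕ)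
          = 2*n - 1 - ((x.elem ⟨(s + (x.lvl : ℤ)).toNat, by omega⟩ : Fin (2*n)) : ℕ) := by
        show 2*n - (((x.elem ⟨(s + (x.lvl : ℤ)).toNat, by omega⟩ : Fin (2*n)) : ℕ) + 1) = _
        omega
      rw [hR]
      omega
    · rw [phi_high (pcompl x) u (by omega), phi_low x s (by omega), hcast]
      omega

lemma phi_pjoin (x y : PEl n d) (u : ℤ) : phi (pjoin x y) u = max (phi x u) (phi y u) := by
  unfold pjoin
  rw [phi_pcompl, phi_pmeet, phi_pcompl, phi_pcompl]
  have harg : (n : ℤ) - 1 - d - ((n : ℤ) - 1 - d - u) = u := by ring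
  rw [harg]
  omega

lemma phi_inj {x y : PEl n d} (h : ∀ u, phi x u = phi y u) : x = y := by
  have hl : x.lvl = y.lvl := by
    have h0 := h (-(x.lvl + y.lvl + 1 : ℕ) : ℤ)
    rw [phi_low x _ (by push_cast; omega), phi_low y _ (by push_cast; omega)] at h0
    omega
  have helem : ∀ i : Fin n, x.elem i = y.elem i := by
    intro i
    have hi := i.isLt
    have h0 := h ((i : ℤ) - x.lvl)
    have h1 : 0 ≤ (i : ℤ) - x.lvl + (x.lvl : ℤ) := by omega
    have h2 : (i : ℤ) - x.lvl + (x.lvl : ℤ) < n := by omega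
    have h3 : 0 ≤ (i : ℤ) - x.lvl + (y.lvl : ℤ) := by omega
    have h4 : (i : ℤ) - x.lvl + (y.lvl : ℤ) < n := by omega
    rw [phi_mid x _ h1 h2, phi_mid y _ h3 h4] at h0
    have hx : (⟨((i : ℤ) - x.lvl + (x.lvl : ℤ)).toNat, by omega⟩ : Fin n) = i := by
      apply Fin.ext; show (((i : ℤ) - x.lvl + (x.lvl : ℤ)).toNat) = (i : ℕ); omega
    have hy : (⟨((i : ℤ) - x.lvl + (y.lvl : ℤ)).toNat, by omega⟩ : Fin n) = i := by
      apply Fin.ext; show (((i : ℤ) - x.lvl + (y.lvl : ℤ)).toNat) = (i : ℕ); omega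
    rw [hx] at h0
    rw [hy] at h0
    apply Fin.ext
    omega
  apply PEl.ext' _ hl
  ext t
  rw [mem_iff_elem, mem_iff_elem]
  constructor
  · rintro ⟨i, rfl⟩; exact ⟨i, (helem i).symm⟩
  · rintro ⟨i, rfl⟩; exact ⟨i, helem i⟩

end Stmt11Aux

theorem stmt11 (n d : ℕ) :
    ∃ meet join : PEl n d → PEl n d → PEl n d,
      (∀ x y : PEl n d, Ple (meet x y) x ∧ Ple (meet x y) y ∧
        ∀ z : PEl n d, Ple z x → Ple z y → Ple z (meet x y)) ∧
      (∀ x y : PEl n d, Ple x (join x y) ∧ Ple y (join x y) ∧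
        ∀ z : PEl n d, Ple x z → Ple y z → Ple (join x y) z) ∧
      (∀ x y z : PEl n d, meet x (join y z) = join (meet x y) (meet x z)) := by
  refine ⟨Stmt11Aux.pmeet, Stmt11Aux.pjoin, fun x y =>
    ⟨Stmt11Aux.pmeet_le_left x y, Stmt11Aux.pmeet_le_right x y,
      fun z => Stmt11Aux.pmeet_glb x y z⟩, fun x y =>
    ⟨Stmt11Aux.pjoin_le_left x y, Stmt11Aux.pjoin_le_right x y,
      fun z => Stmt11Aux.pjoin_lub x y z⟩, fun x y z => ?_⟩
  apply Stmt11Aux.phi_inj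
  intro u
  rw [Stmt11Aux.phi_pmeet, Stmt11Aux.phi_pjoin, Stmt11Aux.phi_pjoin,
    Stmt11Aux.phi_pmeet, Stmt11Aux.phi_pmeet]
  omega
end
end

section
/- The set D_{d,n} of admissible pairs is a doset on P_{d,n}: it contains the diagonal, is contained in the order relation of P_{d,n}, and whenever x ≤ y ≤ z in P_{d,n}, the pair (x,z) is an admissible pair if and only if both (x,y) and (y,z) are admissible pairs. -/
noncomputable section

/-
STATEMENT 12: The set D_{d,n} of admissible pairs is a doset on P_{d,n}: it
contains the diagonal, is contained in the order relation, and for x ≤ y ≤ z,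
(x,z) is admissible iff both (x,y) and (y,z) are.
-/
-- AUX START
namespace Stmt12Aux

variable {n d : ℕ}

lemma pel_ext {x y : PEl n d} (hc : x.carrier = y.carrier) (hl : x.lvl = y.lvl) : x = y := by
  cases x; cases y; simp_all

lemma elem_strictMono (x : PEl n d) : StrictMono x.elem := fun i j h =>
  Subtype.coe_lt_coe.mpr ((x.carrier.orderIsoOfFin x.hcard).strictMono h)

lemma elem_mem (x : PEl n d) (i : Fin n) : x.elem i ∈ x.carrier :=
  (x.carrier.orderIsoOfFin x.hcard i).2

lemma mem_iff_elem (x : PEl n d) (j : Fin (2*n)) :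
    j ∈ x.carrier ↔ ∃ i, x.elem i = j := by
  constructor
  · intro hj
    refine ⟨(x.carrier.orderIsoOfFin x.hcard).symm ⟨j, hj⟩, ?_⟩
    simp [PEl.elem]
  · rintro ⟨i, rfl⟩; exact elem_mem x i

lemma carrier_eq_of_elem_eq {x y : PEl n d} (h : ∀ i, x.elem i = y.elem i) :
    x.carrier = y.carrier := by
  ext j
  rw [mem_iff_elem, mem_iff_elem]
  constructor
  · rintro ⟨i, rfl⟩; exact ⟨i, (h i).symm⟩
  · rintro ⟨i, rfl⟩; exact ⟨i, h i⟩

lemma ple_refl (x : PEl n d) : Ple x x := by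
  refine ⟨le_refl _, fun i h => ?_⟩
  exact le_of_eq (congrArg x.elem (Fin.ext (show i = i + (x.lvl - x.lvl) by omega)))

lemma ple_trans {x y z : PEl n d} (h1 : Ple x y) (h2 : Ple y z) : Ple x z := by
  obtain ⟨l1, e1⟩ := h1
  obtain ⟨l2, e2⟩ := h2
  refine ⟨l1.trans l2, fun i h => ?_⟩
  have h' : i + (y.lvl - x.lvl) < n := by omega
  have h'' : (i + (y.lvl - x.lvl)) + (z.lvl - y.lvl) < n := by omega
  calc x.elem ⟨i, by omega⟩ ≤ y.elem ⟨i + (y.lvl - x.lvl), h'⟩ := e1 i h'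
    _ ≤ z.elem ⟨(i + (y.lvl - x.lvl)) + (z.lvl - y.lvl), h''⟩ := e2 _ h''
    _ = z.elem ⟨i + (z.lvl - x.lvl), h⟩ := congrArg z.elem (Fin.ext (by simp; omega))

lemma ple_elem {x y : PEl n d} (hxy : Ple x y) (hl : x.lvl = y.lvl) (i : Fin n) :
    x.elem i ≤ y.elem i := by
  have hi := i.2
  have h0 : y.lvl - x.lvl = 0 := by omega
  have := hxy.2 i.1 (by omega)
  have e1 : (⟨i.1, by omega⟩ : Fin n) = i := Fin.ext rfl
  have e2 : (⟨i.1 + (y.lvl - x.lvl), by omega⟩ : Fin n) = i :=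
    Fin.ext (show i.1 + (y.lvl - x.lvl) = i.1 by omega)
  rwa [e1, e2] at this

lemma ple_of_elem {x y : PEl n d} (hl : x.lvl = y.lvl)
    (h : ∀ i, x.elem i ≤ y.elem i) : Ple x y := by
  refine ⟨le_of_eq hl, fun i hi => ?_⟩
  have h0 : y.lvl - x.lvl = 0 := by omega
  have e2 : (⟨i + (y.lvl - x.lvl), hi⟩ : Fin n) = ⟨i, by omega⟩ :=
    Fin.ext (show i + (y.lvl - x.lvl) = i by omega)
  rw [e2]
  exact h _

lemma negCount_eq (x : PEl n d) :
    negCount n x.carrier = (Finset.univ.filter fun i : Fin n => (x.elem i : ℕ) < n).card := by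
  unfold negCount
  symm
  apply Finset.card_bij (fun (i : Fin n) _ => x.elem i)
  · intro a ha
    simp only [Finset.mem_filter, Finset.mem_univ, true_and] at ha ⊢
    exact ⟨elem_mem x a, ha⟩
  · intro a _ b _ hab
    exact (elem_strictMono x).injective hab
  · intro j hj
    simp only [Finset.mem_filter] at hj
    obtain ⟨i, rfl⟩ := (mem_iff_elem x j).mp hj.1
    exact ⟨i, by simp [hj.2], rfl⟩

lemma negCount_le {x y : PEl n d} (h : ∀ i, x.elem i ≤ y.elem i) :
    negCount n y.carrier ≤ negCount n x.carrier := by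
  rw [negCount_eq, negCount_eq]
  apply Finset.card_le_card
  intro i hi
  simp only [Finset.mem_filter, Finset.mem_univ, true_and] at hi ⊢
  exact lt_of_le_of_lt (h i) hi

/-- Distance measure. -/
def dist (x y : PEl n d) : ℕ := ∑ i : Fin n, ((y.elem i : ℕ) - (x.elem i : ℕ))

lemma eq_of_dist_zero {x y : PEl n d} (hl : x.lvl = y.lvl)
    (h : ∀ i, x.elem i ≤ y.elem i) (hd : dist x y = 0) : x = y := by
  apply pel_ext _ hl
  apply carrier_eq_of_elem_eq
  intro i
  have := Finset.sum_eq_zero_iff.mp hd i (Finset.mem_univ i)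
  have hxy := h i
  exact Fin.ext (by omega)

lemma dist_pos {x y : PEl n d} (hl : x.lvl = y.lvl)
    (h : ∀ i, x.elem i ≤ y.elem i) (hne : x ≠ y) : 0 < dist x y := by
  rcases Nat.eq_zero_or_pos (dist x y) with h0 | h0
  · exact absurd (eq_of_dist_zero hl h h0) hne
  · exact h0

lemma dist_add {x w y : PEl n d} (h1 : ∀ i, x.elem i ≤ w.elem i)
    (h2 : ∀ i, w.elem i ≤ y.elem i) : dist x y = dist x w + dist w y := by
  unfold dist
  rw [← Finset.sum_add_distrib]
  apply Finset.sum_congr rfl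
  intro i _
  have := h1 i; have := h2 i
  omega

lemma dist_lt {x z w : PEl n d} (h1 : ∀ i, x.elem i ≤ z.elem i)
    (h2 : ∀ i, z.elem i ≤ w.elem i) (j : Fin n) (hj : z.elem j < w.elem j) :
    dist x z < dist x w := by
  unfold dist
  apply Finset.sum_lt_sum
  · intro i _
    have := h1 i; have := h2 i
    omega
  · refine ⟨j, Finset.mem_univ j, ?_⟩
    have := h1 j
    omega

lemma exists_ne_elem {x y : PEl n d} (hl : x.lvl = y.lvl) (hne : x ≠ y) :
    ∃ i, x.elem i ≠ y.elem i := by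
  by_contra hc
  push_neg at hc
  exact hne (pel_ext (carrier_eq_of_elem_eq hc) hl)

/-- Between same-level, same-negCount comparable elements there is a type-(1)
saturated chain. -/
lemma chain_aux : ∀ N : ℕ, ∀ x y : PEl n d, dist x y ≤ N → Ple x y →
    x.lvl = y.lvl → negCount n x.carrier = negCount n y.carrier → AdmPair x y := by
  intro N
  induction N with
  | zero =>
    intro x y hd hle hl _
    have hx := ple_elem hle hl
    have : x = y := eq_of_dist_zero hl hx (Nat.le_zero.mp hd)
    rw [this]
    exact Relation.ReflTransGen.refl
  | succ N ih =>
    intro x y hd hle hl hneg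
    classical
    by_cases hxy : x = y
    · rw [hxy]
      exact Relation.ReflTransGen.refl
    have hx := ple_elem hle hl
    -- predicate on distances of intermediate elements
    set P : ℕ → Prop := fun k => ∃ w : PEl n d, w.lvl = x.lvl ∧ Ple x w ∧ Ple w y ∧
      w ≠ x ∧ dist x w = k with hP
    have hPex : ∃ k, P k := ⟨dist x y, y, hl.symm, hle, ple_refl y, fun h => hxy h.symm, rfl⟩
    obtain ⟨w, hwl, hxw, hwy, hwne, hwd⟩ := Nat.find_spec hPex
    have hxwE := ple_elem hxw hwl.symm
    have hwyE := ple_elem hwy (hwl.trans hl)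
    -- negCount sandwich
    have hn1 := negCount_le hxwE
    have hn2 := negCount_le hwyE
    have hnw : negCount n x.carrier = negCount n w.carrier := by omega
    -- w covers x
    have hcov : Pcov x w := by
      refine ⟨hxw, fun h => hwne h.symm, fun z hxz hzw => ?_⟩
      by_contra hc
      push_neg at hc
      obtain ⟨hzx, hzw'⟩ := hc
      have hzl : z.lvl = x.lvl := le_antisymm (by have := hzw.1; omega) hxz.1
      have hxzE := ple_elem hxz hzl.symm
      have hzwE := ple_elem hzw (hzl.trans hwl.symm)
      obtain ⟨j, hj⟩ := exists_ne_elem (hzl.trans hwl.symm) hzw'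
      have hjlt : z.elem j < w.elem j := lt_of_le_of_ne (hzwE j) hj
      have hlt : dist x z < dist x w := dist_lt hxzE hzwE j hjlt
      have hPz : P (dist x z) := ⟨z, hzl, hxz, ple_trans hzw hwy, hzx, rfl⟩
      exact Nat.find_min hPex (hwd ▸ hlt) hPz
    have hT1 : Type1Cov x w := ⟨hcov, hwl.symm, hnw⟩
    -- recurse on (w, y)
    have hdsplit : dist x y = dist x w + dist w y := dist_add hxwE hwyE
    have hpos : 0 < dist x w := dist_pos hwl.symm hxwE (Ne.symm hwne)
    have htail : AdmPair w y := ih w y (by omega) hwy (hwl.trans hl) (by omega)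
    exact Relation.ReflTransGen.head hT1 htail

lemma admPair_facts {x y : PEl n d} (h : AdmPair x y) :
    Ple x y ∧ x.lvl = y.lvl ∧ negCount n x.carrier = negCount n y.carrier := by
  induction h with
  | refl => exact ⟨ple_refl x, rfl, rfl⟩
  | tail _ hbc ih =>
    exact ⟨ple_trans ih.1 hbc.1.1, ih.2.1.trans hbc.2.1, ih.2.2.trans hbc.2.2⟩

end Stmt12Aux
-- AUX END

theorem stmt12 (n d : ℕ) :
    (∀ x : PEl n d, AdmPair x x) ∧
    (∀ x y : PEl n d, AdmPair x y → Ple x y) ∧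
    (∀ x y z : PEl n d, Ple x y → Ple y z →
      (AdmPair x z ↔ AdmPair x y ∧ AdmPair y z)) := by
  refine ⟨fun x => Relation.ReflTransGen.refl, fun x y h => (Stmt12Aux.admPair_facts h).1, ?_⟩
  intro x y z hxy hyz
  constructor
  · intro hxz
    obtain ⟨hple, hlvl, hneg⟩ := Stmt12Aux.admPair_facts hxz
    have hlxy : x.lvl = y.lvl := le_antisymm hxy.1 (by have := hyz.1; omega)
    have hlyz : y.lvl = z.lvl := by omega
    have hxyE := Stmt12Aux.ple_elem hxy hlxy
    have hyzE := Stmt12Aux.ple_elem hyz hlyz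
    have hn1 := Stmt12Aux.negCount_le hxyE
    have hn2 := Stmt12Aux.negCount_le hyzE
    refine ⟨Stmt12Aux.chain_aux (Stmt12Aux.dist x y) x y le_rfl hxy hlxy (by omega),
      Stmt12Aux.chain_aux (Stmt12Aux.dist y z) y z le_rfl hyz hlyz (by omega)⟩
  · rintro ⟨h1, h2⟩
    exact Relation.ReflTransGen.trans h1 h2
end
end

section
/- Let α be a partition in the n×n box, and set μ := α∧α^t and ν := α∨α^t. Let Π₊ be the set of boxes of ν∖μ lying strictly above the diagonal (boxes (i,j) with i < j), where two boxes are adjacent if they share an edge, and let k be the number of connected components of Π₊. Then the fiber {β a partition in the n×n box : β∧β^t = μ and β∨β^t = ν} has exactly 2^k elements; it contains exactly one Northeast partition and exactly one Southwest partition. -/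
/-
STATEMENT 13: For a partition α in the n×n box, with μ := α∧α^t, ν := α∨α^t,
and Π₊ the set of boxes of ν∖μ strictly above the diagonal, if k is the number
of connected components of Π₊ (adjacency = sharing an edge), then the fiber
{β : β∧β^t = μ, β∨β^t = ν} has exactly 2^k elements, and contains exactly one
Northeast and exactly one Southwest partition.

Partitions in the n×n box are identified with their Young diagrams, i.e. with
down-closed subsets of Fin n × Fin n; ∧ = ∩, ∨ = ∪, transpose = Prod.swap.
-/

noncomputable section

/-- A Young diagram μ is Northeast if (μ₋)^t ⊆ μ₊. -/
def NEdiag (n : ℕ) (μ : Finset (Fin n × Fin n)) : Prop :=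
  (μ.filter fun b => (b.2 : ℕ) ≤ (b.1 : ℕ)).image Prod.swap ⊆
    μ.filter fun b => (b.1 : ℕ) ≤ (b.2 : ℕ)

/-- A Young diagram is Southwest if its transpose is Northeast. -/
def SWdiag (n : ℕ) (μ : Finset (Fin n × Fin n)) : Prop :=
  NEdiag n (transposeD n μ)

/-- Two boxes are adjacent if they share an edge. -/
def adjBox {n : ℕ} (a b : Fin n × Fin n) : Prop :=
  (a.1 = b.1 ∧ ((a.2 : ℕ) + 1 = (b.2 : ℕ) ∨ (b.2 : ℕ) + 1 = (a.2 : ℕ))) ∨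
  (a.2 = b.2 ∧ ((a.1 : ℕ) + 1 = (b.1 : ℕ) ∨ (b.1 : ℕ) + 1 = (a.1 : ℕ)))

namespace St13
variable {n : ℕ}

lemma mem_transposeD {β : Finset (Fin n × Fin n)} {b : Fin n × Fin n} :
    b ∈ transposeD n β ↔ b.swap ∈ β := by
  simp only [transposeD, Finset.mem_image]
  constructor
  · rintro ⟨a, ha, rfl⟩; simpa
  · intro h; exact ⟨b.swap, h, by simp⟩

lemma transposeD_transposeD (β : Finset (Fin n × Fin n)) :
    transposeD n (transposeD n β) = β := by
  ext b; simp [mem_transposeD]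

lemma isDiagram_transposeD {β : Finset (Fin n × Fin n)} (h : IsDiagram n β) :
    IsDiagram n (transposeD n β) := by
  intro a ha b h1 h2
  rw [mem_transposeD] at *
  exact h _ ha b.swap h2 h1

lemma mem_diag_le {μ : Finset (Fin n × Fin n)} (hμ : IsDiagram n μ)
    {a b : Fin n × Fin n} (ha : a ∈ μ) (h1 : (b.1 : ℕ) ≤ a.1) (h2 : (b.2 : ℕ) ≤ a.2) :
    b ∈ μ :=
  hμ a ha b (by exact_mod_cast h1) (by exact_mod_cast h2)

lemma adjBox_symm {a b : Fin n × Fin n} (h : adjBox a b) : adjBox b a := by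
  unfold adjBox at *; tauto


section Core
variable {n : ℕ} {μ ν : Finset (Fin n × Fin n)} {Pip : Set (Fin n × Fin n)}
variable (hμd : IsDiagram n μ) (hνd : IsDiagram n ν)
  (hμs : ∀ b : Fin n × Fin n, b ∈ μ ↔ b.swap ∈ μ)
  (hνs : ∀ b : Fin n × Fin n, b ∈ ν ↔ b.swap ∈ ν)
  (hμν : μ ⊆ ν)
  (hdiag : ∀ b : Fin n × Fin n, b ∈ ν → (b.1 : ℕ) = b.2 → b ∈ μ)
  (hPip : Pip = {b : Fin n × Fin n | b ∈ ν ∧ b ∉ μ ∧ (b.1 : ℕ) < (b.2 : ℕ)})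

/-- The adjacency relation inside Pip. -/
def rel (Pip : Set (Fin n × Fin n)) (x y : Fin n × Fin n) : Prop :=
  x ∈ Pip ∧ y ∈ Pip ∧ adjBox x y

lemma rel_symm {x y : Fin n × Fin n} (h : rel Pip x y) : rel Pip y x :=
  ⟨h.2.1, h.1, adjBox_symm h.2.2⟩

lemma rtg_symm {x y : Fin n × Fin n}
    (h : Relation.ReflTransGen (rel Pip) x y) : Relation.ReflTransGen (rel Pip) y x :=
  (@Relation.ReflTransGen.stdSymm _ _ ⟨fun _ _ => rel_symm⟩).symm _ _ h

include hνd hμd hPip in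
lemma reach_of_le : ∀ d : ℕ, ∀ a b : Fin n × Fin n, a ∈ Pip → b ∈ Pip →
    (b.1 : ℕ) ≤ a.1 → (b.2 : ℕ) ≤ a.2 →
    ((a.1 : ℕ) - b.1) + ((a.2 : ℕ) - b.2) ≤ d →
    Relation.ReflTransGen (rel Pip) a b := by
  intro d
  induction d with
  | zero =>
    intro a b _ _ h1 h2 hd
    have : a = b := by
      have e1 : (a.1 : ℕ) = b.1 := by omega
      have e2 : (a.2 : ℕ) = b.2 := by omega
      exact Prod.ext (Fin.ext e1.symm).symm (Fin.ext e2.symm).symm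
    subst this; exact .refl
  | succ d ih =>
    intro a b ha hb h1 h2 hd
    subst hPip
    obtain ⟨haν, haμ, had⟩ := ha
    obtain ⟨hbν, hbμ, hbd⟩ := hb
    by_cases he : (b.1 : ℕ) = a.1 ∧ (b.2 : ℕ) = a.2
    · have : a = b := Prod.ext (Fin.ext he.1).symm (Fin.ext he.2).symm
      subst this; exact .refl
    · by_cases hc : (b.1 : ℕ) < a.1
      · have hn : (a.1 : ℕ) - 1 < n := by omega
        set a' : Fin n × Fin n := (⟨(a.1 : ℕ) - 1, hn⟩, a.2) with ha'
        have ha'ν : a' ∈ ν := mem_diag_le hνd haν (by simp [ha']; try omega) (by simp [ha'])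
        have ha'μ : a' ∉ μ := fun h => hbμ (mem_diag_le hμd h (by simp [ha']; try omega) (by simpa [ha'] using h2))
        have ha'd : (a'.1 : ℕ) < a'.2 := by simp [ha']; try omega
        have ha'P : a' ∈ {b : Fin n × Fin n | b ∈ ν ∧ b ∉ μ ∧ (b.1 : ℕ) < (b.2 : ℕ)} :=
          ⟨ha'ν, ha'μ, ha'd⟩
        have step : rel {b : Fin n × Fin n | b ∈ ν ∧ b ∉ μ ∧ (b.1 : ℕ) < (b.2 : ℕ)} a a' :=
          ⟨⟨haν, haμ, had⟩, ha'P, Or.inr ⟨rfl, Or.inr (by simp [ha']; try omega)⟩⟩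
        exact Relation.ReflTransGen.head step
          (ih a' b ha'P ⟨hbν, hbμ, hbd⟩ (by simp [ha']; try omega) h2 (by simp [ha']; try omega))
      · have hc2 : (b.2 : ℕ) < a.2 := by omega
        have hn : (a.2 : ℕ) - 1 < n := by omega
        set a' : Fin n × Fin n := (a.1, ⟨(a.2 : ℕ) - 1, hn⟩) with ha'
        have ha'ν : a' ∈ ν := mem_diag_le hνd haν (by simp [ha']) (by simp [ha']; try omega)
        have ha'μ : a' ∉ μ := fun h => hbμ (mem_diag_le hμd h (by simpa [ha'] using h1) (by simp [ha']; try omega))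
        have ha'd : (a'.1 : ℕ) < a'.2 := by simp [ha']; try omega
        have ha'P : a' ∈ {b : Fin n × Fin n | b ∈ ν ∧ b ∉ μ ∧ (b.1 : ℕ) < (b.2 : ℕ)} :=
          ⟨ha'ν, ha'μ, ha'd⟩
        have step : rel {b : Fin n × Fin n | b ∈ ν ∧ b ∉ μ ∧ (b.1 : ℕ) < (b.2 : ℕ)} a a' :=
          ⟨⟨haν, haμ, had⟩, ha'P, Or.inl ⟨rfl, Or.inr (by simp [ha']; try omega)⟩⟩
        exact Relation.ReflTransGen.head step
          (ih a' b ha'P ⟨hbν, hbμ, hbd⟩ (by simpa [ha'] using h1) (by simp [ha']; try omega) (by simp [ha']; try omega))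

include hνd hμd hdiag hPip in
lemma no_mixed {a b : Fin n × Fin n} (ha : a ∈ Pip)
    (hbν : b ∈ ν) (hbμ : b ∉ μ) (hbd : (b.2 : ℕ) < b.1)
    (h1 : (b.1 : ℕ) ≤ a.1) (h2 : (b.2 : ℕ) ≤ a.2) : False := by
  subst hPip
  obtain ⟨haν, haμ, had⟩ := ha
  have hcν : ((b.1, b.1) : Fin n × Fin n) ∈ ν :=
    mem_diag_le hνd haν (by simpa) (by simp; omega)
  have hcμ := hdiag (b.1, b.1) hcν rfl
  exact hbμ (mem_diag_le hμd hcμ (by simp) (by simp; omega))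

include hνd hμd hdiag hPip in
lemma no_mixed' {a b : Fin n × Fin n} (hb : b ∈ Pip)
    (haν : a ∈ ν) (haμ : a ∉ μ) (had : (a.2 : ℕ) < a.1)
    (h1 : (b.1 : ℕ) ≤ a.1) (h2 : (b.2 : ℕ) ≤ a.2) : False := by
  subst hPip
  obtain ⟨hbν, hbμ, hbd⟩ := hb
  have hcν : ((b.2, b.2) : Fin n × Fin n) ∈ ν :=
    mem_diag_le hνd haν (by simp; omega) (by simpa)
  have hcμ := hdiag (b.2, b.2) hcν rfl
  exact hbμ (mem_diag_le hμd hcμ (by simp; omega) (by simp))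


/-- The fiber condition. -/
def Fiber (n : ℕ) (μ ν β : Finset (Fin n × Fin n)) : Prop :=
  IsDiagram n β ∧ β ∩ transposeD n β = μ ∧ β ∪ transposeD n β = ν

variable {β : Finset (Fin n × Fin n)}

lemma Fiber.mu_subset (hβ : Fiber n μ ν β) : μ ⊆ β := by
  rw [← hβ.2.1]; exact Finset.inter_subset_left

lemma Fiber.subset_nu (hβ : Fiber n μ ν β) : β ⊆ ν := by
  rw [← hβ.2.2]; exact Finset.subset_union_left

lemma Fiber.exactlyOne (hβ : Fiber n μ ν β) {b : Fin n × Fin n}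
    (hbν : b ∈ ν) (hbμ : b ∉ μ) : b ∈ β ↔ b.swap ∉ β := by
  have h1 : b ∈ β ∨ b.swap ∈ β := by
    rw [← hβ.2.2] at hbν
    rcases Finset.mem_union.1 hbν with h | h
    · exact Or.inl h
    · exact Or.inr (mem_transposeD.1 h)
  have h2 : ¬ (b ∈ β ∧ b.swap ∈ β) := by
    rintro ⟨ha, hb⟩
    exact hbμ (hβ.2.1 ▸ Finset.mem_inter.2 ⟨ha, mem_transposeD.2 hb⟩)
  tauto

include hPip in
lemma Fiber.step (hβ : Fiber n μ ν β) {x y : Fin n × Fin n}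
    (hr : rel Pip x y) (hx : x ∈ β) : y ∈ β := by
  obtain ⟨hxP, hyP, hadj⟩ := hr
  have hxP' := hPip ▸ hxP
  have hyP' := hPip ▸ hyP
  obtain ⟨hxν, hxμ, hxd⟩ := hxP'
  obtain ⟨hyν, hyμ, hyd⟩ := hyP'
  -- either y ≤ x or x ≤ y coordinatewise
  have key : ((y.1 : ℕ) ≤ x.1 ∧ (y.2 : ℕ) ≤ x.2) ∨ ((x.1 : ℕ) ≤ y.1 ∧ (x.2 : ℕ) ≤ y.2) := by
    rcases hadj with ⟨he, h | h⟩ | ⟨he, h | h⟩ <;>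
      [right; left; right; left] <;>
      simp_all [Fin.ext_iff, Prod.ext_iff] <;> omega
  rcases key with ⟨h1, h2⟩ | ⟨h1, h2⟩
  · exact mem_diag_le hβ.1 hx h1 h2
  · by_contra hy
    have hys : y.swap ∈ β := by
      have := hβ.exactlyOne hyν hyμ
      tauto
    have hxs : x.swap ∈ β := mem_diag_le hβ.1 hys (by simpa) (by simpa)
    exact ((hβ.exactlyOne hxν hxμ).1 hx) hxs

include hPip in
lemma Fiber.reach (hβ : Fiber n μ ν β) {a b : Fin n × Fin n}
    (h : Relation.ReflTransGen (rel Pip) a b) (ha : a ∈ β) : b ∈ β := by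
  induction h with
  | refl => exact ha
  | tail _ step ih => exact Fiber.step hPip hβ step ih

include hμs hνs hdiag hPip in
lemma trichotomy {b : Fin n × Fin n} (hbν : b ∈ ν) :
    b ∈ μ ∨ b ∈ Pip ∨ b.swap ∈ Pip := by
  by_cases hbμ : b ∈ μ
  · exact Or.inl hbμ
  rcases lt_trichotomy (b.1 : ℕ) (b.2 : ℕ) with h | h | h
  · exact Or.inr (Or.inl (hPip ▸ ⟨hbν, hbμ, h⟩))
  · exact Or.inl (hdiag b hbν h)
  · refine Or.inr (Or.inr (hPip ▸ ⟨(hνs b).1 hbν, fun hc => hbμ ((hμs b).2 (by simpa using hc)), by simpa⟩))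

/-- The connected component of a box. -/
def comp (Pip : Set (Fin n × Fin n)) (a : Fin n × Fin n) : Set (Fin n × Fin n) :=
  {b | Relation.ReflTransGen (rel Pip) a b}

lemma mem_comp_self (a : Fin n × Fin n) : a ∈ comp Pip a := Relation.ReflTransGen.refl

lemma comp_subset {a : Fin n × Fin n} (ha : a ∈ Pip) : comp Pip a ⊆ Pip := by
  intro b hb
  induction hb with
  | refl => exact ha
  | tail _ step _ => exact step.2.1

lemma comp_eq_of_reach {a b : Fin n × Fin n}
    (h : Relation.ReflTransGen (rel Pip) a b) : comp Pip a = comp Pip b := by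
  ext c
  exact ⟨fun hc => (rtg_symm h).trans hc, fun hc => h.trans hc⟩

open Classical in
/-- The fiber element determined by a choice set S ⊆ Π₊. -/
def betaOf (n : ℕ) (μ : Finset (Fin n × Fin n)) (Pip S : Set (Fin n × Fin n)) :
    Finset (Fin n × Fin n) :=
  Finset.univ.filter (fun b => b ∈ μ ∨ b ∈ S ∨ (b.swap ∈ Pip ∧ b.swap ∉ S))

lemma mem_betaOf {S : Set (Fin n × Fin n)} {b : Fin n × Fin n} :
    b ∈ betaOf n μ Pip S ↔ (b ∈ μ ∨ b ∈ S ∨ (b.swap ∈ Pip ∧ b.swap ∉ S)) := by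
  classical
  simp [betaOf]

include hμd hνd hμs hνs hμν hdiag hPip in
lemma fiber_betaOf {S : Set (Fin n × Fin n)} (hSP : S ⊆ Pip)
    (hsat : ∀ a ∈ S, ∀ b, Relation.ReflTransGen (rel Pip) a b → b ∈ S) :
    Fiber n μ ν (betaOf n μ Pip S) := by
  have hPmem : ∀ b : Fin n × Fin n, b ∈ Pip → b ∈ ν ∧ b ∉ μ ∧ (b.1 : ℕ) < b.2 := by
    intro b hb; rw [hPip] at hb; exact hb
  have hβν : ∀ b : Fin n × Fin n, b ∈ betaOf n μ Pip S → b ∈ ν := by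
    intro b hb
    rcases mem_betaOf.1 hb with h | h | ⟨h, _⟩
    · exact hμν h
    · exact (hPmem b (hSP h)).1
    · exact (hνs b).2 (hPmem _ h).1
  have hsat' : ∀ a b : Fin n × Fin n, a ∈ S → Relation.ReflTransGen (rel Pip) b a → b ∈ S :=
    fun a b ha h => hsat a ha b (rtg_symm h)
  constructor
  · -- IsDiagram
    intro a ha b hb1 hb2
    have hb1 : (b.1 : ℕ) ≤ a.1 := hb1
    have hb2 : (b.2 : ℕ) ≤ a.2 := hb2
    rcases mem_betaOf.1 ha with h | h | ⟨h, hns⟩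
    · exact mem_betaOf.2 (Or.inl (mem_diag_le hμd h hb1 hb2))
    · -- a ∈ S ⊆ Pip
      have haP := hSP h
      obtain ⟨haν, haμ, had⟩ := hPmem a haP
      have hbν : b ∈ ν := mem_diag_le hνd haν hb1 hb2
      by_cases hbμ : b ∈ μ
      · exact mem_betaOf.2 (Or.inl hbμ)
      rcases lt_trichotomy (b.1 : ℕ) (b.2 : ℕ) with hd | hd | hd
      · have hbP : b ∈ Pip := hPip ▸ ⟨hbν, hbμ, hd⟩
        have : Relation.ReflTransGen (rel Pip) a b :=
          reach_of_le hμd hνd hPip _ a b haP hbP hb1 hb2 le_rfl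
        exact mem_betaOf.2 (Or.inr (Or.inl (hsat a h b this)))
      · exact absurd (hdiag b hbν hd) hbμ
      · exact absurd (no_mixed hμd hνd hdiag hPip haP hbν hbμ hd hb1 hb2) id
    · -- a below diagonal : a.swap ∈ Pip, a.swap ∉ S
      obtain ⟨hsν, hsμ, hsd⟩ := hPmem a.swap h
      have haν : a ∈ ν := (hνs a).2 hsν
      have haμ : a ∉ μ := fun hc => hsμ ((hμs a).1 hc)
      have had : (a.2 : ℕ) < a.1 := by simpa using hsd
      have hbν : b ∈ ν := mem_diag_le hνd haν hb1 hb2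
      by_cases hbμ : b ∈ μ
      · exact mem_betaOf.2 (Or.inl hbμ)
      rcases lt_trichotomy (b.1 : ℕ) (b.2 : ℕ) with hd | hd | hd
      · have hbP : b ∈ Pip := hPip ▸ ⟨hbν, hbμ, hd⟩
        exact absurd (no_mixed' hμd hνd hdiag hPip hbP haν haμ had hb1 hb2) id
      · exact absurd (hdiag b hbν hd) hbμ
      · have hbsP : b.swap ∈ Pip := hPip ▸ ⟨(hνs b).1 hbν,
          fun hc => hbμ ((hμs b).2 (by simpa using hc)), by simpa⟩
        have hreach : Relation.ReflTransGen (rel Pip) a.swap b.swap :=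
          reach_of_le hμd hνd hPip _ a.swap b.swap h hbsP (by simpa) (by simpa) le_rfl
        have hbsS : b.swap ∉ S := fun hc => hns (hsat' _ _ hc hreach)
        exact mem_betaOf.2 (Or.inr (Or.inr ⟨hbsP, hbsS⟩))
  constructor
  · -- intersection = μ
    ext b
    simp only [Finset.mem_inter, mem_transposeD, mem_betaOf]
    constructor
    · rintro ⟨h1, h2⟩
      rcases h1 with h | h | ⟨h, hns⟩
      · exact h
      · -- b ∈ S : b above diagonal
        have hbd := (hPmem b (hSP h)).2.2
        rcases h2 with h' | h' | ⟨h', hns2⟩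
        · exact (hμs b).2 h'
        · have := (hPmem _ (hSP h')).2.2
          simp at this; omega
        · simp only [Prod.swap_swap] at hns2
          exact absurd h hns2
      · -- b.swap ∈ Pip : b below diagonal
        have hbd := (hPmem _ h).2.2
        rcases h2 with h' | h' | ⟨h', hns'⟩
        · exact (hμs b).2 h'
        · exact absurd h' hns
        · simp only [Prod.swap_swap] at h'
          have := (hPmem _ h').2.2
          simp at hbd; omega
    · intro h
      exact ⟨Or.inl h, Or.inl ((hμs b).1 h)⟩
  · -- union = ν
    ext b
    simp only [Finset.mem_union, mem_transposeD, mem_betaOf]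
    constructor
    · rintro (h | h)
      · exact hβν b (mem_betaOf.2 h)
      · rcases h with h | h | ⟨h, _⟩
        · exact (hνs b).2 (hμν h)
        · exact (hνs b).2 (hPmem _ (hSP h)).1
        · simpa using (hPmem _ h).1
    · intro hbν
      rcases trichotomy hμs hνs hdiag hPip hbν with h | h | h
      · exact Or.inl (Or.inl h)
      · by_cases hS : b ∈ S
        · exact Or.inl (Or.inr (Or.inl hS))
        · exact Or.inr (Or.inr (Or.inr ⟨by simpa, by simpa⟩))
      · by_cases hS : b.swap ∈ S
        · exact Or.inr (Or.inr (Or.inl hS))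
        · exact Or.inl (Or.inr (Or.inr ⟨h, hS⟩))

/-- The set of connected components. -/
def Comps (Pip : Set (Fin n × Fin n)) : Set (Set (Fin n × Fin n)) :=
  {C | ∃ a ∈ Pip, C = comp Pip a}

/-- The map from fiber elements to sets of components. -/
def Phi (Pip : Set (Fin n × Fin n)) (β : Finset (Fin n × Fin n)) : Set (Set (Fin n × Fin n)) :=
  {C | C ∈ Comps Pip ∧ ∀ x ∈ C, x ∈ β}

include hPip in
lemma mem_iff_comp_subset (hβ : Fiber n μ ν β) {b : Fin n × Fin n} (hb : b ∈ Pip) :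
    b ∈ β ↔ ∀ x ∈ comp Pip b, x ∈ β := by
  constructor
  · intro h x hx; exact Fiber.reach hPip hβ hx h
  · intro h; exact h b (mem_comp_self b)

include hμs hνs hdiag hPip in
lemma fiber_ext {β' : Finset (Fin n × Fin n)} (hβ : Fiber n μ ν β) (hβ' : Fiber n μ ν β')
    (h : ∀ b ∈ Pip, (b ∈ β ↔ b ∈ β')) : β = β' := by
  ext b
  by_cases hbν : b ∈ ν
  · rcases trichotomy hμs hνs hdiag hPip hbν with hm | hm | hm
    · simp [hβ.mu_subset hm, hβ'.mu_subset hm]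
    · exact h b hm
    · have hbμ : b ∉ μ := by
        rw [hPip] at hm
        exact fun hc => hm.2.1 ((hμs b).1 hc)
      rw [hβ.exactlyOne hbν hbμ, hβ'.exactlyOne hbν hbμ, h b.swap hm]
  · constructor
    · intro hc; exact absurd (hβ.subset_nu hc) hbν
    · intro hc; exact absurd (hβ'.subset_nu hc) hbν

include hμs hνs hdiag hPip in
lemma phi_injOn {β' : Finset (Fin n × Fin n)} (hβ : Fiber n μ ν β) (hβ' : Fiber n μ ν β')
    (h : Phi Pip β = Phi Pip β') : β = β' := by
  refine fiber_ext hμs hνs hdiag hPip hβ hβ' (fun b hb => ?_)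
  have hC : comp Pip b ∈ Comps Pip := ⟨b, hb, rfl⟩
  rw [mem_iff_comp_subset hPip hβ hb, mem_iff_comp_subset hPip hβ' hb]
  constructor
  · intro hx
    have : comp Pip b ∈ Phi Pip β := ⟨hC, hx⟩
    rw [h] at this; exact this.2
  · intro hx
    have : comp Pip b ∈ Phi Pip β' := ⟨hC, hx⟩
    rw [← h] at this; exact this.2

include hPip in
lemma pip_not_mu {b : Fin n × Fin n} (hb : b ∈ Pip) : b ∉ μ := by
  rw [hPip] at hb; exact hb.2.1

include hPip in
lemma pip_lt {b : Fin n × Fin n} (hb : b ∈ Pip) : (b.1 : ℕ) < b.2 := by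
  rw [hPip] at hb; exact hb.2.2

include hμd hνd hμs hνs hμν hdiag hPip in
lemma phi_surj {T : Set (Set (Fin n × Fin n))} (hT : T ⊆ Comps Pip) :
    ∃ β, Fiber n μ ν β ∧ Phi Pip β = T := by
  set S : Set (Fin n × Fin n) := ⋃₀ T with hS
  have hSP : S ⊆ Pip := by
    rintro x ⟨C, hC, hx⟩
    obtain ⟨a, ha, rfl⟩ := hT hC
    exact comp_subset ha hx
  have hsat : ∀ a ∈ S, ∀ b, Relation.ReflTransGen (rel Pip) a b → b ∈ S := by
    rintro a ⟨C, hC, haC⟩ b hab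
    obtain ⟨a₀, ha₀, rfl⟩ := hT hC
    exact ⟨comp Pip a₀, hC, Relation.ReflTransGen.trans haC hab⟩
  refine ⟨betaOf n μ Pip S, fiber_betaOf hμd hνd hμs hνs hμν hdiag hPip hSP hsat, ?_⟩
  ext C
  constructor
  · rintro ⟨hC, hsub⟩
    obtain ⟨a₀, ha₀, rfl⟩ := hC
    have ha₀β : a₀ ∈ betaOf n μ Pip S := hsub a₀ (mem_comp_self a₀)
    rcases mem_betaOf.1 ha₀β with h | h | ⟨h, _⟩
    · exact absurd h (pip_not_mu hPip ha₀)

    · obtain ⟨C', hC', haC'⟩ := h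
      obtain ⟨a₁, ha₁, rfl⟩ := hT hC'
      rwa [← comp_eq_of_reach haC']
    · have h1 := pip_lt hPip ha₀
      have h2 := pip_lt hPip h
      simp at h2; omega
  · intro hC
    refine ⟨hT hC, fun x hx => ?_⟩
    obtain ⟨a₀, ha₀, rfl⟩ := hT hC
    exact mem_betaOf.2 (Or.inr (Or.inl ⟨comp Pip a₀, hC, hx⟩))

lemma ncard_powerset {X : Type*} {s : Set X} (hs : s.Finite) :
    {t : Set X | t ⊆ s}.ncard = 2 ^ s.ncard := by
  classical
  have key : {t : Set X | t ⊆ s} = (fun u : Finset X => (↑u : Set X)) '' ↑hs.toFinset.powerset := by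
    ext t
    simp only [Set.mem_setOf_eq, Set.mem_image, Finset.coe_powerset, Set.mem_preimage,
      Set.mem_powerset_iff]
    constructor
    · intro ht
      have htf : t.Finite := hs.subset ht
      exact ⟨htf.toFinset, by simpa using ht, by simp⟩
    · rintro ⟨u, hu, rfl⟩
      simpa using hu
  rw [key, Set.ncard_image_of_injective _ Finset.coe_injective, Set.ncard_coe_finset,
    Finset.card_powerset, Set.ncard_eq_toFinset_card _ hs]

include hμd hνd hμs hνs hμν hdiag hPip in
lemma card_fiber :
    Set.ncard {β : Finset (Fin n × Fin n) | Fiber n μ ν β} = 2 ^ (Comps Pip).ncard := by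
  classical
  have hbij : Set.BijOn (Phi Pip) {β : Finset (Fin n × Fin n) | Fiber n μ ν β}
      {T : Set (Set (Fin n × Fin n)) | T ⊆ Comps Pip} := by
    refine ⟨fun β hβ => fun C hC => hC.1, ?_, ?_⟩
    · intro β hβ β' hβ' h
      exact phi_injOn hμs hνs hdiag hPip hβ hβ' h
    · intro T hT
      obtain ⟨β, hβ, hΦ⟩ := phi_surj hμd hνd hμs hνs hμν hdiag hPip hT
      exact ⟨β, hβ, hΦ⟩
  have hfin : (Comps Pip).Finite := by
    have : Comps Pip = (comp Pip) '' Pip := by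
      ext C; simp [Comps, Set.mem_image, eq_comm]
    rw [this]
    exact (Set.toFinite Pip).image _
  have h1 : (Phi Pip '' {β | Fiber n μ ν β}).ncard = Set.ncard {β | Fiber n μ ν β} :=
    Set.ncard_image_of_injOn hbij.injOn
  rw [← h1, hbij.image_eq, ncard_powerset hfin]

include hμd hνd hμs hνs hμν hdiag hPip in
lemma fiber_betaNE : Fiber n μ ν (betaOf n μ Pip Pip) :=
  fiber_betaOf hμd hνd hμs hνs hμν hdiag hPip (le_refl _)
    (fun a ha b hab => comp_subset ha hab)

include hμd hνd hμs hνs hμν hdiag hPip in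
lemma fiber_betaSW : Fiber n μ ν (betaOf n μ Pip ∅) :=
  fiber_betaOf hμd hνd hμs hνs hμν hdiag hPip (Set.empty_subset _)
    (fun a ha => absurd ha (Set.notMem_empty a))

include hPip in
lemma mem_betaNE {b : Fin n × Fin n} :
    b ∈ betaOf n μ Pip Pip ↔ (b ∈ μ ∨ b ∈ Pip) := by
  rw [mem_betaOf]
  constructor
  · rintro (h | h | ⟨h, hn⟩)
    · exact Or.inl h
    · exact Or.inr h
    · exact absurd h hn
  · rintro (h | h)
    · exact Or.inl h
    · exact Or.inr (Or.inl h)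

lemma mem_betaSW {b : Fin n × Fin n} :
    b ∈ betaOf n μ Pip ∅ ↔ (b ∈ μ ∨ b.swap ∈ Pip) := by
  rw [mem_betaOf]; simp

include hμs hPip in
lemma NE_betaNE : NEdiag n (betaOf n μ Pip Pip) := by
  intro x hx
  simp only [Finset.mem_image, Finset.mem_filter] at hx
  obtain ⟨b, ⟨hb, hbd⟩, rfl⟩ := hx
  rcases (mem_betaNE hPip).1 hb with h | h
  · refine Finset.mem_filter.2 ⟨(mem_betaNE hPip).2 (Or.inl ((hμs b).1 h)), by simpa⟩
  · exact absurd (pip_lt hPip h) (by omega)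

include hμs hPip in
lemma transposeD_betaSW : transposeD n (betaOf n μ Pip ∅) = betaOf n μ Pip Pip := by
  ext b
  rw [mem_transposeD, mem_betaSW, mem_betaNE hPip, Prod.swap_swap]
  constructor
  · rintro (h | h)
    · exact Or.inl ((hμs b).2 h)
    · exact Or.inr h
  · rintro (h | h)
    · exact Or.inl ((hμs b).1 h)
    · exact Or.inr h

lemma Fiber.transpose (hβ : Fiber n μ ν β) (hμs' : transposeD n μ = μ)
    (hνs' : transposeD n ν = ν) : Fiber n μ ν (transposeD n β) := by
  refine ⟨isDiagram_transposeD hβ.1, ?_, ?_⟩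
  · rw [transposeD_transposeD]
    have : transposeD n β ∩ β = transposeD n (β ∩ transposeD n β) := by
      ext b; rw [mem_transposeD]
      simp only [Finset.mem_inter, mem_transposeD, transposeD_transposeD]
      tauto
    rw [this, hβ.2.1, hμs']
  · rw [transposeD_transposeD]
    have : transposeD n β ∪ β = transposeD n (β ∪ transposeD n β) := by
      ext b; rw [mem_transposeD]
      simp only [Finset.mem_union, mem_transposeD, transposeD_transposeD]
      tauto
    rw [this, hβ.2.2, hνs']

include hμs hνs hμν hdiag hPip in
lemma NE_unique (hβ : Fiber n μ ν β) (hne : NEdiag n β) : β = betaOf n μ Pip Pip := by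
  have key : ∀ b : Fin n × Fin n, b ∈ ν → b ∉ μ → (b.2 : ℕ) < b.1 → b ∉ β := by
    intro b hbν hbμ hbd hbβ
    have hx : b.swap ∈ (β.filter fun b => (b.2 : ℕ) ≤ (b.1 : ℕ)).image Prod.swap := by
      exact Finset.mem_image.2 ⟨b, Finset.mem_filter.2 ⟨hbβ, by omega⟩, rfl⟩
    have := (Finset.mem_filter.1 (hne hx)).1
    exact ((hβ.exactlyOne hbν hbμ).1 hbβ) this
  ext b
  by_cases hbν : b ∈ ν
  · rcases trichotomy hμs hνs hdiag hPip hbν with hm | hm | hm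
    · simp [hβ.mu_subset hm, (mem_betaNE hPip).2 (Or.inl hm)]
    · have hbμ := pip_not_mu hPip hm
      have hsβ : b.swap ∉ β := by
        refine key b.swap ((hνs b).1 hbν) (fun hc => hbμ ((hμs b).2 hc)) ?_
        simpa using pip_lt hPip hm
      simp only [(mem_betaNE hPip).2 (Or.inr hm), iff_true]
      exact (hβ.exactlyOne hbν hbμ).2 hsβ
    · have hbμ : b ∉ μ := fun hc => (pip_not_mu hPip hm) ((hμs b).1 hc)
      have hbd : (b.2 : ℕ) < b.1 := by simpa using pip_lt hPip hm
      have h1 : b ∉ β := key b hbν hbμ hbd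
      have h2 : b ∉ betaOf n μ Pip Pip := by
        rw [mem_betaNE hPip]
        rintro (h | h)
        · exact hbμ h
        · exact absurd (pip_lt hPip h) (by omega)
      simp [h1, h2]
  · have h1 : b ∉ β := fun hc => hbν (hβ.subset_nu hc)
    have h2 : b ∉ betaOf n μ Pip Pip := by
      rw [mem_betaNE hPip]
      rintro (h | h)
      · exact hbν (hμν h)
      · exact hbν (hPip ▸ h).1
    simp [h1, h2]

end Core
end St13

theorem stmt13 (n : ℕ) (α : Finset (Fin n × Fin n)) (hα : IsDiagram n α)
    (μ ν : Finset (Fin n × Fin n))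
    (hμ : μ = α ∩ transposeD n α) (hν : ν = α ∪ transposeD n α)
    (Pip : Set (Fin n × Fin n))
    (hPip : Pip = {b | b ∈ ν ∧ b ∉ μ ∧ (b.1 : ℕ) < (b.2 : ℕ)})
    (k : ℕ)
    (hk : k = Set.ncard {C : Set (Fin n × Fin n) | ∃ a ∈ Pip,
      C = {b | Relation.ReflTransGen (fun x y => x ∈ Pip ∧ y ∈ Pip ∧ adjBox x y) a b}}) :
    Set.ncard {β : Finset (Fin n × Fin n) | IsDiagram n β ∧
        β ∩ transposeD n β = μ ∧ β ∪ transposeD n β = ν} = 2 ^ k ∧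
    (∃! β : Finset (Fin n × Fin n), (IsDiagram n β ∧
        β ∩ transposeD n β = μ ∧ β ∪ transposeD n β = ν) ∧ NEdiag n β) ∧
    (∃! β : Finset (Fin n × Fin n), (IsDiagram n β ∧
        β ∩ transposeD n β = μ ∧ β ∪ transposeD n β = ν) ∧ SWdiag n β) := by
  classical
  have hαt := St13.isDiagram_transposeD hα
  have hμd : IsDiagram n μ := by
    rw [hμ]; intro a ha b h1 h2
    rw [Finset.mem_inter] at *
    exact ⟨hα _ ha.1 b h1 h2, hαt _ ha.2 b h1 h2⟩
  have hνd : IsDiagram n ν := by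
    rw [hν]; intro a ha b h1 h2
    rw [Finset.mem_union] at *
    rcases ha with ha | ha
    · exact Or.inl (hα _ ha b h1 h2)
    · exact Or.inr (hαt _ ha b h1 h2)
  have hμs : ∀ b : Fin n × Fin n, b ∈ μ ↔ b.swap ∈ μ := by
    intro b
    rw [hμ]
    simp only [Finset.mem_inter, St13.mem_transposeD, Prod.swap_swap]
    tauto
  have hνs : ∀ b : Fin n × Fin n, b ∈ ν ↔ b.swap ∈ ν := by
    intro b
    rw [hν]
    simp only [Finset.mem_union, St13.mem_transposeD, Prod.swap_swap]
    tauto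
  have hμν : μ ⊆ ν := by rw [hμ, hν]; exact Finset.inter_subset_union
  have hdiag : ∀ b : Fin n × Fin n, b ∈ ν → (b.1 : ℕ) = b.2 → b ∈ μ := by
    intro b hbν he
    have hsw : b.swap = b := Prod.ext (Fin.ext (by simpa using he.symm)) (Fin.ext (by simpa using he))
    rw [hν, Finset.mem_union] at hbν
    rw [hμ, Finset.mem_inter]
    rcases hbν with h | h
    · exact ⟨h, St13.mem_transposeD.2 (hsw ▸ h)⟩
    · exact ⟨by rw [← hsw]; exact St13.mem_transposeD.1 h, h⟩
  have hμs2 : transposeD n μ = μ := by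
    ext b; rw [St13.mem_transposeD]; exact (hμs b).symm
  have hνs2 : transposeD n ν = ν := by
    ext b; rw [St13.mem_transposeD]; exact (hνs b).symm
  have hfib : {β : Finset (Fin n × Fin n) | IsDiagram n β ∧
      β ∩ transposeD n β = μ ∧ β ∪ transposeD n β = ν} =
      {β : Finset (Fin n × Fin n) | St13.Fiber n μ ν β} := rfl
  have hk2 : k = (St13.Comps Pip).ncard := hk
  refine ⟨?_, ?_, ?_⟩
  · rw [hfib, hk2]
    exact St13.card_fiber hμd hνd hμs hνs hμν hdiag hPip
  · refine ⟨St13.betaOf n μ Pip Pip,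
      ⟨St13.fiber_betaNE hμd hνd hμs hνs hμν hdiag hPip,
       St13.NE_betaNE hμs hPip⟩, ?_⟩
    rintro β' ⟨hf, hne⟩
    exact St13.NE_unique hμs hνs hμν hdiag hPip hf hne
  · refine ⟨St13.betaOf n μ Pip ∅,
      ⟨St13.fiber_betaSW hμd hνd hμs hνs hμν hdiag hPip, ?_⟩, ?_⟩
    · show NEdiag n (transposeD n (St13.betaOf n μ Pip ∅))
      rw [St13.transposeD_betaSW hμs hPip]
      exact St13.NE_betaNE hμs hPip
    · rintro β' ⟨hf, hsw⟩
      have hft : St13.Fiber n μ ν (transposeD n β') := St13.Fiber.transpose hf hμs2 hνs2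
      have hne : NEdiag n (transposeD n β') := hsw
      have h1 : transposeD n β' = St13.betaOf n μ Pip Pip :=
        St13.NE_unique hμs hνs hμν hdiag hPip hft hne
      have h2 : transposeD n β' = transposeD n (St13.betaOf n μ Pip ∅) := by
        rw [h1, St13.transposeD_betaSW hμs hPip]
      have := congrArg (transposeD n) h2
      rwa [St13.transposeD_transposeD, St13.transposeD_transposeD] at this
end
end

section
/- Let m ≥ 1, let A = {a₁ < ⋯ < a_m} be an m-element subset of {1,…,2m}, and let α := (−A) ∪ A ⊆ ⟨2m⟩. Then the partition λ(α) (in the 2m×2m box) is Northeast if and only if aᵢ ≥ 2i for every i ∈ {1,…,m}. In particular, if λ(α) is Northeast then 1 ∉ A and 2m ∈ A. -/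
/-
STATEMENT 14: For an m-element subset A = {a₁ < ⋯ < a_m} ⊆ {1,…,2m} and
α := (−A) ∪ A ⊆ ⟨2m⟩, the partition λ(α) is Northeast iff aᵢ ≥ 2i for all i;
in particular if λ(α) is Northeast then 1 ∉ A and 2m ∈ A.

{1,…,2m} ≅ Fin (2*m) (0-indexed: a ↦ a−1); ⟨2m⟩ ≅ Fin (2*(2*m)); the element
b+1 of {1,…,2m} sits at position posF (2*m) b and −(b+1) at negF (2*m) b.
-/

noncomputable section

namespace Stmt14Aux

lemma posF_inj (n : ℕ) : Function.Injective (posF n) := by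
  intro a b h
  have : ((posF n a) : ℕ) = ((posF n b) : ℕ) := congrArg Fin.val h
  simp only [posF] at this
  exact Fin.ext (by omega)

lemma negF_inj (n : ℕ) : Function.Injective (negF n) := by
  intro a b h
  have ha := a.isLt; have hb := b.isLt
  have : ((negF n a) : ℕ) = ((negF n b) : ℕ) := congrArg Fin.val h
  simp only [negF] at this
  exact Fin.ext (by omega)

lemma NE_iff (n : ℕ) (μ : Finset (Fin n × Fin n)) :
    NEdiag n μ ↔ ∀ i j : Fin n, (j:ℕ) ≤ (i:ℕ) → (i,j) ∈ μ → (j,i) ∈ μ := by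
  unfold NEdiag
  constructor
  · intro h i j hji hm
    have hmem0 : (i, j) ∈ μ.filter (fun b => (b.2:ℕ) ≤ (b.1:ℕ)) :=
      Finset.mem_filter.2 ⟨hm, hji⟩
    have hmem : (j, i) ∈ μ.filter fun b => (b.1:ℕ) ≤ (b.2:ℕ) := by
      apply h
      have := Finset.mem_image_of_mem Prod.swap hmem0
      simpa using this
    exact (Finset.mem_filter.1 hmem).1
  · intro h x hx
    simp only [Finset.mem_image, Finset.mem_filter] at hx
    obtain ⟨⟨i, j⟩, ⟨hmem, hji⟩, rfl⟩ := hx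
    exact Finset.mem_filter.2 ⟨h i j hji hmem, hji⟩

lemma mem_diag (n : ℕ) (α : Finset (Fin (2*n))) (i j : Fin n) :
    ((i, j) ∈ diagOf n α ↔
      (i:ℕ) + 1 ≤ (α.filter fun a : Fin (2*n) => n + (j:ℕ) - (i:ℕ) ≤ (a:ℕ)).card) := by
  simp [diagOf]

lemma Npos (m : ℕ) (A : Finset (Fin (2*m))) (d : ℕ) :
    (((A.image (negF (2*m)) ∪ A.image (posF (2*m)))).filter
        fun x : Fin (2*(2*m)) => 2*m + d ≤ (x:ℕ)).card
      = (A.filter fun a : Fin (2*m) => d ≤ (a:ℕ)).card := by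
  classical
  rw [Finset.filter_union]
  have h1 : (A.image (negF (2*m))).filter (fun x : Fin (2*(2*m)) => 2*m + d ≤ (x:ℕ)) = ∅ := by
    rw [Finset.filter_eq_empty_iff]
    intro x hx
    simp only [Finset.mem_image] at hx
    obtain ⟨a, -, rfl⟩ := hx
    have := a.isLt
    simp only [negF]
    omega
  rw [h1, Finset.empty_union, Finset.filter_image,
    Finset.card_image_of_injective _ (posF_inj (2*m))]
  congr 1
  apply Finset.filter_congr
  intro a _
  simp only [posF]
  constructor <;> (intro h; omega)

lemma Nneg (m : ℕ) (A : Finset (Fin (2*m))) (hA : A.card = m) (d : ℕ) (hd : d ≤ 2*m) :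
    (((A.image (negF (2*m)) ∪ A.image (posF (2*m)))).filter
        fun x : Fin (2*(2*m)) => 2*m - d ≤ (x:ℕ)).card
      = 2*m - (A.filter fun a : Fin (2*m) => d ≤ (a:ℕ)).card := by
  classical
  rw [Finset.filter_union]
  have h2 : (A.image (posF (2*m))).filter (fun x : Fin (2*(2*m)) => 2*m - d ≤ (x:ℕ)) = A.image (posF (2*m)) := by
    apply Finset.filter_true_of_mem
    intro x hx
    simp only [Finset.mem_image] at hx
    obtain ⟨a, -, rfl⟩ := hx
    simp only [posF]
    omega
  have h1 : (A.image (negF (2*m))).filter (fun x : Fin (2*(2*m)) => 2*m - d ≤ (x:ℕ))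
      = (A.filter fun a : Fin (2*m) => ¬ (d ≤ (a:ℕ))).image (negF (2*m)) := by
    rw [Finset.filter_image]
    congr 1
    apply Finset.filter_congr
    intro a _
    have := a.isLt
    simp only [negF]
    constructor <;> (intro h; omega)
  rw [h1, h2]
  have hdisj : Disjoint ((A.filter fun a : Fin (2*m) => ¬ (d ≤ (a:ℕ))).image (negF (2*m)))
      (A.image (posF (2*m))) := by
    rw [Finset.disjoint_left]
    rintro x hx hx'
    simp only [Finset.mem_image] at hx hx'
    obtain ⟨a, -, rfl⟩ := hx
    obtain ⟨b, -, hb⟩ := hx'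
    have ha := a.isLt
    have : ((posF (2*m) b) : ℕ) = ((negF (2*m) a) : ℕ) := congrArg Fin.val hb
    simp only [posF, negF] at this
    omega
  rw [Finset.card_union_of_disjoint hdisj,
      Finset.card_image_of_injective _ (negF_inj (2*m)),
      Finset.card_image_of_injective _ (posF_inj (2*m)), hA]
  have hsum := Finset.card_filter_add_card_filter_not
    (s := A) (p := fun a : Fin (2*m) => d ≤ (a:ℕ))
  have hle : (A.filter fun a : Fin (2*m) => d ≤ (a:ℕ)).card ≤ m :=
    (Finset.card_filter_le _ _).trans hA.le
  omega

end Stmt14Aux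

theorem stmt14 (m : ℕ) (hm : 1 ≤ m) (A : Finset (Fin (2*m))) (hA : A.card = m)
    (α : Finset (Fin (2*(2*m))))
    (hα : α = A.image (negF (2*m)) ∪ A.image (posF (2*m))) :
    (NEdiag (2*m) (diagOf (2*m) α) ↔
      ∀ i : Fin m, 2 * ((i : ℕ) + 1) ≤ ((A.orderIsoOfFin hA i : Fin (2*m)) : ℕ) + 1) ∧
    (NEdiag (2*m) (diagOf (2*m) α) →
      (⟨0, by omega⟩ : Fin (2*m)) ∉ A ∧ (⟨2*m - 1, by omega⟩ : Fin (2*m)) ∈ A) := by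
  classical
  set g : ℕ → ℕ := fun d => (A.filter fun a : Fin (2*m) => d ≤ (a:ℕ)).card with hg
  have hgle : ∀ d, g d ≤ m := fun d => (Finset.card_filter_le _ _).trans hA.le
  have hg0 : g 0 = m := by
    show (A.filter fun a : Fin (2*m) => 0 ≤ (a:ℕ)).card = m
    rw [Finset.filter_true_of_mem (fun _ _ => Nat.zero_le _), hA]
  set f : Fin m → ℕ := fun i => ((A.orderIsoOfFin hA i : Fin (2*m)) : ℕ) with hf
  have hflt : ∀ i, f i < 2*m := fun i => (A.orderIsoOfFin hA i : Fin (2*m)).isLt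
  have hfmono : StrictMono f := by
    intro i j hij
    have h1 : A.orderIsoOfFin hA i < A.orderIsoOfFin hA j := (A.orderIsoOfFin hA).lt_iff_lt.2 hij
    exact h1
  have hAimage : Finset.univ.image (fun i : Fin m => ((A.orderIsoOfFin hA i : Fin (2*m)))) = A := by
    apply Finset.coe_injective
    rw [Finset.coe_image, Finset.coe_univ, Set.image_univ]
    have he : (fun i : Fin m => ((A.orderIsoOfFin hA i : Fin (2*m)))) = A.orderEmbOfFin hA := by
      funext i; exact Finset.coe_orderIsoOfFin_apply A hA i
    rw [he]
    exact A.range_orderEmbOfFin hA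
  have hfinj : Function.Injective (fun i : Fin m => ((A.orderIsoOfFin hA i : Fin (2*m)))) := by
    intro i j hij
    exact hfmono.injective (congrArg Fin.val hij)
  -- counting via f
  have hgcount : ∀ d, g d = (Finset.univ.filter fun i : Fin m => d ≤ f i).card := by
    intro d
    show (A.filter fun a : Fin (2*m) => d ≤ (a:ℕ)).card = _
    rw [← hAimage, Finset.filter_image, Finset.card_image_of_injective _ hfinj]
  have hGsum : ∀ d, (Finset.univ.filter fun i : Fin m => d ≤ f i).card
      + (Finset.univ.filter fun i : Fin m => ¬ d ≤ f i).card = m := by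
    intro d
    rw [Finset.card_filter_add_card_filter_not]
    simp
  have hgval : ∀ k : Fin m, g (f k + 1) = m - ((k:ℕ) + 1) := by
    intro k
    rw [hgcount]
    have he : (Finset.univ.filter fun i : Fin m => f k + 1 ≤ f i) = Finset.Ioi k := by
      ext i
      simp only [Finset.mem_filter, Finset.mem_univ, true_and, Finset.mem_Ioi]
      rw [← hfmono.lt_iff_lt]
      omega
    rw [he, Fin.card_Ioi]
    omega
  -- the combinatorial condition P
  have hP : (NEdiag (2*m) (diagOf (2*m) α)) ↔
      (∀ d, 1 ≤ d → d ≤ 2*m - 1 → 2*m ≤ 2 * g d + d) := by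
    rw [Stmt14Aux.NE_iff]
    constructor
    · intro h d hd1 hd2
      by_contra hcon
      push_neg at hcon
      have hgd := hgle d
      set jv := g d with hjv
      have hiv : g d + d < 2*m := by omega
      have hjvlt : jv < 2*m := by omega
      let i : Fin (2*m) := ⟨g d + d, hiv⟩
      let j : Fin (2*m) := ⟨jv, hjvlt⟩
      have hji : (j:ℕ) ≤ (i:ℕ) := by show jv ≤ g d + d; omega
      have hmem : (i, j) ∈ diagOf (2*m) α := by
        rw [Stmt14Aux.mem_diag]
        have heq : 2*m + (j:ℕ) - (i:ℕ) = 2*m - d := by show 2*m + jv - (g d + d) = _; omega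
        rw [heq, hα, Stmt14Aux.Nneg m A hA d (by omega)]
        show g d + d + 1 ≤ 2*m - g d
        omega
      have hmem2 := h i j hji hmem
      rw [Stmt14Aux.mem_diag] at hmem2
      have heq : 2*m + (i:ℕ) - (j:ℕ) = 2*m + d := by show 2*m + (g d + d) - jv = _; omega
      rw [heq, hα, Stmt14Aux.Npos m A d] at hmem2
      have hje : (j:ℕ) = jv := rfl
      have hc : (Finset.filter (fun a : Fin (2*m) => d ≤ (a:ℕ)) A).card = g d := rfl
      rw [hje, hc] at hmem2
      omega
    · intro hPd i j hji hmem
      rw [Stmt14Aux.mem_diag] at hmem ⊢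
      set d := (i:ℕ) - (j:ℕ) with hd
      have hdlt : d ≤ 2*m - 1 := by have := i.isLt; omega
      have heq1 : 2*m + (j:ℕ) - (i:ℕ) = 2*m - d := by omega
      have heq2 : 2*m + (i:ℕ) - (j:ℕ) = 2*m + d := by omega
      have hc : (Finset.filter (fun a : Fin (2*m) => d ≤ (a:ℕ)) A).card = g d := rfl
      rw [heq1, hα, Stmt14Aux.Nneg m A hA d (by omega), hc] at hmem
      rw [heq2, hα, Stmt14Aux.Npos m A d, hc]
      rcases Nat.eq_zero_or_pos d with hd0 | hd0
      · have : (i:ℕ) = (j:ℕ) := by omega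
        rw [hd0] at hmem
        rw [hd0]
        have := hg0
        omega
      · have := hPd d hd0 hdlt
        have := hgle d
        omega
  have hQ : (NEdiag (2*m) (diagOf (2*m) α)) ↔ (∀ k : Fin m, 2*((k:ℕ)+1) ≤ f k + 1) := by
    rw [hP]
    constructor
    · intro h k
      rcases Nat.lt_or_ge (f k) (2*m - 1) with hk | hk
      · have hd1 : 1 ≤ f k + 1 := by omega
        have hd2 : f k + 1 ≤ 2*m - 1 := by omega
        have := h (f k + 1) hd1 hd2
        rw [hgval k] at this
        have := k.isLt
        omega
      · have h1 := hflt k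
        have h2 := k.isLt
        omega
    · intro h d hd1 hd2
      -- #{i : f i < d} ≤ d/2
      have hsub : (Finset.univ.filter fun i : Fin m => ¬ d ≤ f i).card ≤ d / 2 := by
        have hmap : ∀ i ∈ (Finset.univ.filter fun i : Fin m => ¬ d ≤ f i),
            (i:ℕ) ∈ Finset.range (d / 2) := by
          intro i hi
          simp only [Finset.mem_filter, not_le] at hi
          have hQi := h i
          have hdiv : (i:ℕ) + 1 ≤ d / 2 := by
            rw [Nat.le_div_iff_mul_le (by omega)]
            omega
          simp only [Finset.mem_range]
          omega
        have hinj : Set.InjOn (fun i : Fin m => (i:ℕ))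
            (Finset.univ.filter fun i : Fin m => ¬ d ≤ f i) := by
          intro a _ b _ hab
          exact Fin.ext hab
        calc (Finset.univ.filter fun i : Fin m => ¬ d ≤ f i).card
            ≤ (Finset.range (d / 2)).card := Finset.card_le_card_of_injOn _ hmap hinj
          _ = d / 2 := Finset.card_range _
      have hsum := hGsum d
      have hgd := hgcount d
      have hdd : d / 2 * 2 ≤ d := Nat.div_mul_le_self d 2
      omega
  constructor
  · exact hQ
  · intro hNE
    have hQ' := hQ.1 hNE
    constructor
    · intro hmem
      have hmem' : (⟨0, by omega⟩ : Fin (2*m)) ∈ Set.range (A.orderEmbOfFin hA) := by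
        rw [A.range_orderEmbOfFin hA]; exact hmem
      obtain ⟨k, hk⟩ := hmem'
      have hfk : f k = 0 := by
        have h1 : ((A.orderIsoOfFin hA k : Fin (2*m))) = A.orderEmbOfFin hA k :=
          Finset.coe_orderIsoOfFin_apply A hA k
        have := congrArg Fin.val (h1.trans hk)
        simpa [hf] using this
      have := hQ' k
      omega
    · let k : Fin m := ⟨m - 1, by omega⟩
      have h1 := hQ' k
      have h2 := hflt k
      have hkv : (k:ℕ) = m - 1 := rfl
      have hfk : f k = 2*m - 1 := by omega
      have : ((A.orderIsoOfFin hA k : Fin (2*m))) = (⟨2*m - 1, by omega⟩ : Fin (2*m)) :=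
        Fin.ext hfk
      rw [← this]
      exact (A.orderIsoOfFin hA k).2
end
end

section
/- Let m ≥ 1, let A be an m-element subset of {1,…,2m} with complement A^c := {1,…,2m}∖A, and let M : A → A^c be any bijection. For S ⊆ A set A_S := (A∖S) ∪ M(S), an m-element subset of {1,…,2m}, and let K := Σ_{S ⊆ A} (−1)^{|S|} · v_{(−A_S) ∪ A_S} ∈ ⋀^{2m}ℂ^{4m}. Then Ω⌟K = 0. -/
noncomputable section

/-- Coordinate model of the exterior algebra ⋀ℂ^{2n} (and of its graded dual):
a vector is the family of its coordinates in the basis {v_S = e_{s₁}∧⋯∧e_{s_k}}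
(resp. {p_S = e*_{s₁}∧⋯∧e*_{s_k}}), indexed by subsets S ⊆ ⟨n⟩ listed in
increasing order.  The degree-k component ⋀^k consists of the functions
supported on subsets of cardinality k. -/
abbrev ExtA (n : ℕ) := Finset (Fin (2*n)) → ℂ

/-- The sign of the permutation sorting the list (−(i+1), i+1, T) for a set T
containing neither ±(i+1): (−1) to the number of elements of T smaller than
each inserted element. -/
def sgnIns (n : ℕ) (i : Fin n) (T : Finset (Fin (2*n))) : ℂ :=
  (-1) ^ ((T.filter fun t => t < negF n i).card + (T.filter fun t => t < posF n i).card)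

/-- Contraction Ω⌟ : ⋀^k → ⋀^{k−2}.  On basis vectors,
Ω⌟ v_S = Σ_{i : ±i ∈ S} (−1)^{p+q−1} v_{S∖{±i}} where p < q are the positions
of −i, i in S; equivalently (Ω⌟v)(T) = Σ_{i : ±i ∉ T} sgn(−i,i,T)·v(T ∪ {±i}),
which is the coordinate form of
Ω⌟(w₁∧⋯∧w_k) = Σ_{p<q} (−1)^{p+q−1} Ω(w_p,w_q) w₁∧⋯ŵ_p⋯ŵ_q⋯∧w_k. -/
def contrA (n : ℕ) (v : ExtA n) : ExtA n := fun T =>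
  ∑ i : Fin n,
    if negF n i ∉ T ∧ posF n i ∉ T then
      sgnIns n i T * v (insert (negF n i) (insert (posF n i) T))
    else 0

/-- Multiplication by Ω̂ = Σ_i e*_{−i} ∧ e*_i on the dual:
(Ω̂∧ω)(S) = Σ_{i : ±i ∈ S} sgn(−i,i,S∖{±i})·ω(S∖{±i}). -/
def wedgeA (n : ℕ) (ω : ExtA n) : ExtA n := fun S =>
  ∑ i : Fin n,
    if negF n i ∈ S ∧ posF n i ∈ S then
      sgnIns n i ((S.erase (negF n i)).erase (posF n i)) *
        ω ((S.erase (negF n i)).erase (posF n i))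
    else 0

/-- The pairing ⟨φ,v⟩ determined by ⟨φ₁∧⋯∧φ_k, w₁∧⋯∧w_k⟩ = det(φ_i(w_j)):
in coordinates, the bases (p_S) and (v_S) are dual to each other. -/
def pairA (n : ℕ) (φ v : ExtA n) : ℂ := ∑ S : Finset (Fin (2*n)), φ S * v S


/-- The 2m-element subset (−B) ∪ B of ⟨2m⟩ ≅ Fin (2*(2*m)) attached to a
subset B ⊆ {1,…,2m} ≅ Fin (2*m). -/
def signedOf (m : ℕ) (B : Finset (Fin (2*m))) : Finset (Fin (2*(2*m))) :=
  B.image (negF (2*m)) ∪ B.image (posF (2*m))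

/-
STATEMENT 16: For an m-element subset A ⊆ {1,…,2m}, a bijection M : A → A^c,
and A_S := (A∖S) ∪ M(S) for S ⊆ A, the element
K = Σ_{S ⊆ A} (−1)^{|S|} v_{(−A_S) ∪ A_S} ∈ ⋀^{2m}ℂ^{4m} satisfies Ω⌟K = 0.
Here v_β is the coordinate basis vector supported at β.
-/
section AuxLems
variable {n : ℕ}

lemma negF_ne_posF (i j : Fin n) : negF n i ≠ posF n j := by
  have hi := i.isLt
  intro h
  have := congrArg Fin.val h
  simp only [negF, posF] at this
  omega

lemma negF_injective : Function.Injective (negF n) := by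
  intro a b h
  have ha := a.isLt; have hb := b.isLt
  have := congrArg Fin.val h
  simp only [negF] at this
  exact Fin.ext (by omega)

lemma posF_injective : Function.Injective (posF n) := by
  intro a b h
  have := congrArg Fin.val h
  simp only [posF] at this
  exact Fin.ext (by omega)

lemma negF_lt_negF {a b : Fin n} : negF n a < negF n b ↔ b < a := by
  have := a.isLt; have := b.isLt
  simp only [negF, Fin.mk_lt_mk, Fin.lt_def]
  omega

lemma posF_lt_posF {a b : Fin n} : posF n a < posF n b ↔ a < b := by
  simp only [posF, Fin.mk_lt_mk, Fin.lt_def]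
  omega

lemma not_posF_lt_negF {a b : Fin n} : ¬ (posF n a < negF n b) := by
  have := b.isLt
  simp only [posF, negF, Fin.mk_lt_mk]
  omega

lemma negF_lt_posF (a b : Fin n) : negF n a < posF n b := by
  have := a.isLt
  simp only [posF, negF, Fin.mk_lt_mk]
  omega

end AuxLems

section SignedLems
variable {m : ℕ}

lemma mem_signedOf_neg {B : Finset (Fin (2*m))} {i : Fin (2*m)} :
    negF (2*m) i ∈ signedOf m B ↔ i ∈ B := by
  simp only [signedOf, Finset.mem_union, Finset.mem_image]
  constructor
  · rintro (⟨a, ha, h⟩ | ⟨a, ha, h⟩)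
    · rwa [← negF_injective h]
    · exact absurd h.symm (negF_ne_posF i a)
  · exact fun h => Or.inl ⟨i, h, rfl⟩

lemma mem_signedOf_pos {B : Finset (Fin (2*m))} {i : Fin (2*m)} :
    posF (2*m) i ∈ signedOf m B ↔ i ∈ B := by
  simp only [signedOf, Finset.mem_union, Finset.mem_image]
  constructor
  · rintro (⟨a, ha, h⟩ | ⟨a, ha, h⟩)
    · exact absurd h (negF_ne_posF a i)
    · rwa [← posF_injective h]
  · exact fun h => Or.inr ⟨i, h, rfl⟩

lemma signedOf_insert (j : Fin (2*m)) (B : Finset (Fin (2*m))) :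
    signedOf m (insert j B)
      = insert (negF (2*m) j) (insert (posF (2*m) j) (signedOf m B)) := by
  simp only [signedOf, Finset.image_insert, Finset.insert_union, Finset.union_insert]
  exact Finset.insert_comm _ _ _

lemma cond_iff {B : Finset (Fin (2*m))} {i : Fin (2*m)} (hi : i ∈ B)
    (T : Finset (Fin (2*(2*m)))) :
    (negF (2*m) i ∉ T ∧ posF (2*m) i ∉ T ∧
      insert (negF (2*m) i) (insert (posF (2*m) i) T) = signedOf m B)
    ↔ T = signedOf m (B.erase i) := by
  have hB : signedOf m B
      = insert (negF (2*m) i) (insert (posF (2*m) i) (signedOf m (B.erase i))) := by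
    conv_lhs => rw [← Finset.insert_erase hi]
    exact signedOf_insert i (B.erase i)
  have hn : negF (2*m) i ∉ signedOf m (B.erase i) := by
    rw [mem_signedOf_neg]; simp
  have hp : posF (2*m) i ∉ signedOf m (B.erase i) := by
    rw [mem_signedOf_pos]; simp
  have hnp : negF (2*m) i ≠ posF (2*m) i := negF_ne_posF i i
  constructor
  · rintro ⟨h1, h2, h3⟩
    rw [hB] at h3
    have e1 : ((insert (negF (2*m) i) (insert (posF (2*m) i) T)).erase
        (negF (2*m) i)).erase (posF (2*m) i) = T := by
      rw [Finset.erase_insert (by simp [hnp, h1]), Finset.erase_insert h2]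
    have e2 : ((insert (negF (2*m) i) (insert (posF (2*m) i)
        (signedOf m (B.erase i)))).erase (negF (2*m) i)).erase (posF (2*m) i)
        = signedOf m (B.erase i) := by
      rw [Finset.erase_insert (by simp [hnp, hn]), Finset.erase_insert hp]
    rw [← e1, h3, e2]
  · rintro rfl
    exact ⟨hn, hp, hB.symm⟩

lemma cond_mem {B : Finset (Fin (2*m))} {i : Fin (2*m)} {T : Finset (Fin (2*(2*m)))}
    (h : insert (negF (2*m) i) (insert (posF (2*m) i) T) = signedOf m B) : i ∈ B := by
  have : posF (2*m) i ∈ signedOf m B := by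
    rw [← h]; exact Finset.mem_insert_of_mem (Finset.mem_insert_self _ _)
  exact mem_signedOf_pos.mp this

lemma sgnIns_signedOf {C : Finset (Fin (2*m))} {i : Fin (2*m)} (hi : i ∉ C) :
    sgnIns (2*m) i (signedOf m C) = 1 := by
  have hc1 : ((signedOf m C).filter fun t => t < negF (2*m) i).card
      = (C.filter fun k => i < k).card := by
    rw [signedOf, Finset.filter_union, Finset.filter_image, Finset.filter_image,
      Finset.filter_false_of_mem (fun a _ => not_posF_lt_negF), Finset.image_empty,
      Finset.union_empty,
      show (C.filter fun a => negF (2*m) a < negF (2*m) i) = C.filter fun k => i < k from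
        Finset.filter_congr fun a _ => by exact negF_lt_negF,
      Finset.card_image_of_injective _ negF_injective]
  have hdisj : Disjoint (C.image (negF (2*m)))
      ((C.filter fun k => k < i).image (posF (2*m))) := by
    rw [Finset.disjoint_left]
    rintro x hx1 hx2
    obtain ⟨a, _, rfl⟩ := Finset.mem_image.mp hx1
    obtain ⟨b, _, hb⟩ := Finset.mem_image.mp hx2
    exact negF_ne_posF a b hb.symm
  have hc2 : ((signedOf m C).filter fun t => t < posF (2*m) i).card
      = C.card + (C.filter fun k => k < i).card := by
    rw [signedOf, Finset.filter_union, Finset.filter_image, Finset.filter_image,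
      Finset.filter_true_of_mem (fun a _ => negF_lt_posF a i),
      show (C.filter fun a => posF (2*m) a < posF (2*m) i) = C.filter fun k => k < i from
        Finset.filter_congr fun a _ => by exact posF_lt_posF,
      Finset.card_union_of_disjoint hdisj,
      Finset.card_image_of_injective _ negF_injective,
      Finset.card_image_of_injective _ posF_injective]
  have hsplit : (C.filter fun k => k < i).card + (C.filter fun k => i < k).card
      = C.card := by
    have hu : (C.filter fun k => k < i) ∪ (C.filter fun k => i < k) = C := by
      ext k
      simp only [Finset.mem_union, Finset.mem_filter]
      constructor
      · rintro (⟨h, -⟩ | ⟨h, -⟩) <;> exact h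
      · intro hk
        rcases lt_or_gt_of_ne (fun h : k = i => hi (h ▸ hk)) with h | h
        · exact Or.inl ⟨hk, h⟩
        · exact Or.inr ⟨hk, h⟩
    have hd : Disjoint (C.filter fun k => k < i) (C.filter fun k => i < k) := by
      rw [Finset.disjoint_left]
      intro x h1 h2
      simp only [Finset.mem_filter] at h1 h2
      exact absurd (h1.2.trans h2.2) (lt_irrefl x)
    rw [← Finset.card_union_of_disjoint hd, hu]
  unfold sgnIns
  rw [hc1, hc2,
    show (C.filter fun k => i < k).card + (C.card + (C.filter fun k => k < i).card)
      = 2 * C.card by omega,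
    pow_mul]
  norm_num

end SignedLems

section Core
variable {k : ℕ}

lemma Bnext {A S : Finset (Fin k)} {M : Fin k → Fin k} {i : Fin k}
    (hS : S ⊆ A) (hi : i ∈ A) (hiS : i ∉ S)
    (hMA : ∀ a ∈ A, M a ∉ A) :
    (A \ insert i S) ∪ (insert i S).image M
      = insert (M i) (((A \ S) ∪ S.image M).erase i) := by
  have hne : ∀ a ∈ S, M a ≠ i := fun a ha h => hMA a (hS ha) (h ▸ hi)
  ext x
  simp only [Finset.mem_union, Finset.mem_sdiff, Finset.mem_insert, Finset.mem_erase,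
    Finset.mem_image]
  constructor
  · rintro (⟨hxA, hx⟩ | ⟨a, ha, rfl⟩)
    · push_neg at hx
      exact Or.inr ⟨hx.1, Or.inl ⟨hxA, hx.2⟩⟩
    · rcases ha with rfl | ha
      · exact Or.inl rfl
      · exact Or.inr ⟨hne a ha, Or.inr ⟨a, ha, rfl⟩⟩
  · rintro (rfl | ⟨hxi, ⟨hxA, hxS⟩ | ⟨a, ha, rfl⟩⟩)
    · exact Or.inr ⟨i, Or.inl rfl, rfl⟩
    · exact Or.inl ⟨hxA, by push_neg; exact ⟨hxi, hxS⟩⟩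
    · exact Or.inr ⟨a, Or.inr ha, rfl⟩

lemma MiB {A S : Finset (Fin k)} {M : Fin k → Fin k} {i : Fin k}
    (hS : S ⊆ A) (hi : i ∈ A) (hiS : i ∉ S)
    (hMA : ∀ a ∈ A, M a ∉ A) (hInj : Set.InjOn M ↑A) :
    M i ∉ (A \ S) ∪ S.image M := by
  simp only [Finset.mem_union, Finset.mem_sdiff, Finset.mem_image]
  rintro (⟨h, -⟩ | ⟨a, ha, h⟩)
  · exact hMA i hi h
  · exact hiS ((hInj (Finset.mem_coe.mpr (hS ha)) (Finset.mem_coe.mpr hi) h) ▸ ha)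

end Core

def Faux (m : ℕ) (A : Finset (Fin (2*m))) (M : Fin (2*m) → Fin (2*m))
    (T : Finset (Fin (2*(2*m)))) (p : Fin (2*m) × Finset (Fin (2*m))) : ℂ :=
  if negF (2*m) p.1 ∉ T ∧ posF (2*m) p.1 ∉ T ∧
      insert (negF (2*m) p.1) (insert (posF (2*m) p.1) T)
        = signedOf m ((A \ p.2) ∪ p.2.image M)
  then sgnIns (2*m) p.1 T * (-1) ^ p.2.card else 0

lemma Faux_eq (m : ℕ) (A : Finset (Fin (2*m))) (M : Fin (2*m) → Fin (2*m))
    (T : Finset (Fin (2*(2*m)))) (i : Fin (2*m)) (S : Finset (Fin (2*m))) :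
    Faux m A M T (i, S) =
      if i ∈ (A \ S) ∪ S.image M ∧ T = signedOf m (((A \ S) ∪ S.image M).erase i)
      then (-1) ^ S.card else 0 := by
  simp only [Faux]
  by_cases hi : i ∈ (A \ S) ∪ S.image M
  · simp only [cond_iff hi T]
    by_cases hT : T = signedOf m (((A \ S) ∪ S.image M).erase i)
    · rw [if_pos hT, if_pos ⟨hi, hT⟩, hT,
        sgnIns_signedOf (Finset.notMem_erase i _), one_mul]
    · rw [if_neg hT, if_neg fun h => hT h.2]
  · rw [if_neg (fun h => hi (cond_mem h.2.2)), if_neg (fun h => hi h.1)]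

lemma cancel_aux (m : ℕ) (A : Finset (Fin (2*m))) (M : Fin (2*m) → Fin (2*m))
    (hMA : ∀ a ∈ A, M a ∉ A) (hInj : Set.InjOn M ↑A)
    (T : Finset (Fin (2*(2*m))))
    {i : Fin (2*m)} {S : Finset (Fin (2*m))} (hS : S ⊆ A) (hi : i ∈ A) (hiS : i ∉ S) :
    Faux m A M T (i, S) + Faux m A M T (M i, insert i S) = 0 := by
  have hMiB : M i ∉ (A \ S) ∪ S.image M := MiB hS hi hiS hMA hInj
  have hB' : (A \ insert i S) ∪ (insert i S).image M
      = insert (M i) (((A \ S) ∪ S.image M).erase i) := Bnext hS hi hiS hMA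
  have herase : ((A \ insert i S) ∪ (insert i S).image M).erase (M i)
      = ((A \ S) ∪ S.image M).erase i := by
    rw [hB', Finset.erase_insert (fun h => hMiB (Finset.mem_of_mem_erase h))]
  have hiB : i ∈ (A \ S) ∪ S.image M :=
    Finset.mem_union_left _ (Finset.mem_sdiff.mpr ⟨hi, hiS⟩)
  have hMiB' : M i ∈ (A \ insert i S) ∪ (insert i S).image M :=
    Finset.mem_union_right _ (Finset.mem_image_of_mem M (Finset.mem_insert_self i S))
  rw [Faux_eq, Faux_eq, herase, Finset.card_insert_of_notMem hiS]
  by_cases hT : T = signedOf m (((A \ S) ∪ S.image M).erase i)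
  · rw [if_pos ⟨hiB, hT⟩, if_pos ⟨hMiB', hT⟩, pow_succ]
    ring
  · rw [if_neg (fun h => hT h.2), if_neg (fun h => hT h.2), add_zero]

theorem stmt16 (m : ℕ) (hm : 1 ≤ m) (A : Finset (Fin (2*m))) (hA : A.card = m)
    (M : Fin (2*m) → Fin (2*m)) (hM : Set.BijOn M ↑A ↑(Aᶜ)) :
    contrA (2*m)
      (fun T => ∑ S ∈ A.powerset, ((-1 : ℂ)) ^ S.card *
        (if T = signedOf m ((A \ S) ∪ S.image M) then 1 else 0)) = 0 := by
  haveI : Nonempty (Fin (2*m)) := ⟨⟨0, by omega⟩⟩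
  have hMA : ∀ a ∈ A, M a ∉ A := by
    intro a ha
    have := hM.mapsTo (Finset.mem_coe.mpr ha)
    simpa using this
  have hInj : Set.InjOn M ↑A := hM.injOn
  have hNM : ∀ a ∈ A, Function.invFunOn M ↑A (M a) = a := fun a ha =>
    hInj.leftInvOn_invFunOn (Finset.mem_coe.mpr ha)
  funext T
  show (∑ i : Fin (2*m), if negF (2*m) i ∉ T ∧ posF (2*m) i ∉ T then
      sgnIns (2*m) i T * ∑ S ∈ A.powerset, ((-1 : ℂ)) ^ S.card *
        (if insert (negF (2*m) i) (insert (posF (2*m) i) T)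
            = signedOf m ((A \ S) ∪ S.image M) then 1 else 0)
    else 0) = 0
  have h1 : ∀ i : Fin (2*m),
      (if negF (2*m) i ∉ T ∧ posF (2*m) i ∉ T then
        sgnIns (2*m) i T * ∑ S ∈ A.powerset, ((-1 : ℂ)) ^ S.card *
          (if insert (negF (2*m) i) (insert (posF (2*m) i) T)
              = signedOf m ((A \ S) ∪ S.image M) then 1 else 0)
      else 0)
      = ∑ S ∈ A.powerset, Faux m A M T (i, S) := by
    intro i
    by_cases hc : negF (2*m) i ∉ T ∧ posF (2*m) i ∉ T
    · rw [if_pos hc, Finset.mul_sum]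
      refine Finset.sum_congr rfl fun S _ => ?_
      simp only [Faux]
      by_cases he : insert (negF (2*m) i) (insert (posF (2*m) i) T)
          = signedOf m ((A \ S) ∪ S.image M)
      · rw [if_pos he, mul_one, if_pos ⟨hc.1, hc.2, he⟩]
      · rw [if_neg he, if_neg fun h => he h.2.2, mul_zero, mul_zero]
    · rw [if_neg hc]
      refine (Finset.sum_eq_zero fun S _ => ?_).symm
      simp only [Faux]
      exact if_neg fun h => hc ⟨h.1, h.2.1⟩
  rw [Finset.sum_congr rfl fun i (_ : i ∈ (Finset.univ : Finset (Fin (2*m)))) => h1 i,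
    ← Finset.sum_product]
  refine Finset.sum_involution
    (fun p _ => if p.1 ∈ A \ p.2 then (M p.1, insert p.1 p.2)
      else if p.1 ∈ p.2.image M
        then (Function.invFunOn M ↑A p.1, p.2.erase (Function.invFunOn M ↑A p.1))
        else p)
    ?_ ?_ ?_ ?_
  · -- f p + f (g p) = 0
    rintro ⟨i, S⟩ hp
    have hS : S ⊆ A := Finset.mem_powerset.mp (Finset.mem_product.mp hp).2
    dsimp only
    by_cases h1 : i ∈ A \ S
    · rw [if_pos h1]
      exact cancel_aux m A M hMA hInj T hS (Finset.mem_sdiff.mp h1).1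
        (Finset.mem_sdiff.mp h1).2
    · rw [if_neg h1]
      by_cases h2 : i ∈ S.image M
      · rw [if_pos h2]
        obtain ⟨a, haS, haM⟩ := Finset.mem_image.mp h2
        have haA : a ∈ A := hS haS
        have hNa : Function.invFunOn M ↑A i = a := by rw [← haM]; exact hNM a haA
        rw [hNa]
        have hc := cancel_aux m A M hMA hInj T
          ((Finset.erase_subset a S).trans hS) haA (Finset.notMem_erase a S)
        rw [haM, Finset.insert_erase haS] at hc
        rw [add_comm]
        exact hc
      · rw [if_neg h2]
        have hz : Faux m A M T (i, S) = 0 := by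
          rw [Faux_eq, if_neg]
          rintro ⟨hiB, -⟩
          rcases Finset.mem_union.mp hiB with h | h
          exacts [h1 h, h2 h]
        rw [hz, add_zero]
  · -- g p ≠ p when f p ≠ 0
    rintro ⟨i, S⟩ hp hF
    have hS : S ⊆ A := Finset.mem_powerset.mp (Finset.mem_product.mp hp).2
    dsimp only
    by_cases h1 : i ∈ A \ S
    · rw [if_pos h1]
      intro h
      have h2 : insert i S = S := congrArg Prod.snd h
      exact Finset.insert_ne_self.mpr (Finset.mem_sdiff.mp h1).2 h2
    · rw [if_neg h1]
      by_cases h2 : i ∈ S.image M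
      · rw [if_pos h2]
        obtain ⟨a, haS, haM⟩ := Finset.mem_image.mp h2
        have hNa : Function.invFunOn M ↑A i = a := by rw [← haM]; exact hNM a (hS haS)
        rw [hNa]
        intro h
        have h3 : S.erase a = S := congrArg Prod.snd h
        exact Finset.erase_ne_self.mpr haS h3
      · rw [if_neg h2]
        exfalso
        apply hF
        rw [Faux_eq, if_neg]
        rintro ⟨hiB, -⟩
        rcases Finset.mem_union.mp hiB with h | h
        exacts [h1 h, h2 h]
  · -- g p ∈ s
    rintro ⟨i, S⟩ hp
    have hS : S ⊆ A := Finset.mem_powerset.mp (Finset.mem_product.mp hp).2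
    dsimp only
    by_cases h1 : i ∈ A \ S
    · rw [if_pos h1]
      exact Finset.mem_product.mpr ⟨Finset.mem_univ _,
        Finset.mem_powerset.mpr (Finset.insert_subset (Finset.mem_sdiff.mp h1).1 hS)⟩
    · rw [if_neg h1]
      by_cases h2 : i ∈ S.image M
      · rw [if_pos h2]
        exact Finset.mem_product.mpr ⟨Finset.mem_univ _,
          Finset.mem_powerset.mpr ((Finset.erase_subset _ _).trans hS)⟩
      · rw [if_neg h2]
        exact hp
  · -- g (g p) = p
    rintro ⟨i, S⟩ hp
    have hS : S ⊆ A := Finset.mem_powerset.mp (Finset.mem_product.mp hp).2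
    dsimp only
    by_cases h1 : i ∈ A \ S
    · rw [if_pos h1]
      have hiA : i ∈ A := (Finset.mem_sdiff.mp h1).1
      have hiS : i ∉ S := (Finset.mem_sdiff.mp h1).2
      dsimp only
      rw [if_neg (fun h => hMA i hiA (Finset.mem_sdiff.mp h).1),
        if_pos (Finset.mem_image_of_mem M (Finset.mem_insert_self i S)),
        hNM i hiA, Finset.erase_insert hiS]
    · rw [if_neg h1]
      by_cases h2 : i ∈ S.image M
      · rw [if_pos h2]
        obtain ⟨a, haS, haM⟩ := Finset.mem_image.mp h2
        have haA : a ∈ A := hS haS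
        have hNa : Function.invFunOn M ↑A i = a := by rw [← haM]; exact hNM a haA
        rw [hNa]
        dsimp only
        rw [if_pos (Finset.mem_sdiff.mpr ⟨haA, Finset.notMem_erase a S⟩),
          haM, Finset.insert_erase haS]
      · rw [if_neg h2]
        dsimp only
        rw [if_neg h1, if_neg h2]
end
end

section
/- Let α^{(a)} ∈ P_{d,n} with 0 ≤ a < d, and let λ := λ(α), a self-conjugate partition in the n×n box. If λ does not contain the hook (n,1,…,1) (with n−1 ones), then α^{(a)} has no cover in P_{d,n} of the form β^{(a+1)}. If λ contains this hook (equivalently λ₁ = n), then α^{(a)} has exactly one cover of the form β^{(a+1)}, and λ(β) = (λ₂−1, λ₃−1, …, λ_n−1), the partition obtained from λ by removing its first row and first column. -/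
noncomputable section

/-- λ contains the hook (n,1,…,1) iff its diagram contains the whole first row
and the whole first column. -/
def ContainsHook (n : ℕ) (hn : 1 ≤ n) (μ : Finset (Fin n × Fin n)) : Prop :=
  ∀ j : Fin n, ((⟨0, by omega⟩ : Fin n), j) ∈ μ ∧ (j, (⟨0, by omega⟩ : Fin n)) ∈ μ

/-
STATEMENT 19: Let α^{(a)} ∈ P_{d,n} with a < d and λ := λ(α).  If λ does not
contain the hook (n,1^{n−1}) then α^{(a)} has no cover of the form β^{(a+1)};
if it does, there is exactly one such cover, and λ(β) is obtained from λ by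
removing the first row and first column (i.e. (i,j) ∈ λ(β) iff
(i+1,j+1) ∈ λ).
-/
namespace St19

variable {n d : ℕ}

/-- Total ℕ-valued version of `PEl.elem`. -/
def ev (x : PEl n d) (i : ℕ) : ℕ :=
  if h : i < n then (x.elem ⟨i, h⟩ : ℕ) else 2*n

/-- Value-level membership. -/
def Memv (x : PEl n d) (c : ℕ) : Prop :=
  ∃ h : c < 2*n, (⟨c, h⟩ : Fin (2*n)) ∈ x.carrier

lemma ev_eq (x : PEl n d) {i : ℕ} (h : i < n) : ev x i = (x.elem ⟨i, h⟩ : ℕ) :=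
  dif_pos h

lemma elem_mem (x : PEl n d) (i : Fin n) : x.elem i ∈ x.carrier :=
  (x.carrier.orderIsoOfFin x.hcard i).2

lemma elem_strictMono (x : PEl n d) : StrictMono x.elem := fun _ _ h =>
  Subtype.coe_lt_coe.2 ((x.carrier.orderIsoOfFin x.hcard).strictMono h)

lemma elem_mono (x : PEl n d) : Monotone x.elem := (elem_strictMono x).monotone

lemma ev_lt_2n (x : PEl n d) {i : ℕ} (h : i < n) : ev x i < 2*n := by
  rw [ev_eq x h]; exact (x.elem ⟨i, h⟩).2

lemma ev_strict (x : PEl n d) {i j : ℕ} (hij : i < j) (hj : j < n) : ev x i < ev x j := by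
  rw [ev_eq x (by omega), ev_eq x hj]
  exact_mod_cast elem_strictMono x (Fin.mk_lt_mk.2 hij)

lemma ev_mono (x : PEl n d) {i j : ℕ} (hij : i ≤ j) (hj : j < n) : ev x i ≤ ev x j := by
  rw [ev_eq x (by omega), ev_eq x hj]
  exact_mod_cast elem_mono x (Fin.mk_le_mk.2 hij)

lemma ev_add_le (x : PEl n d) {i k : ℕ} (h : i + k < n) : ev x i + k ≤ ev x (i + k) := by
  induction k with
  | zero => simp
  | succ k IH =>
    have h1 := IH (by omega)
    have e : i + (k+1) = (i+k) + 1 := by omega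
    rw [e]
    have h2 := ev_strict x (show i + k < i + k + 1 by omega) (by omega)
    omega

lemma ev_ge (x : PEl n d) {i : ℕ} (h : i < n) : i ≤ ev x i := by
  have h1 := ev_add_le x (i := 0) (k := i) (by omega)
  rw [Nat.zero_add] at h1; omega

lemma ev_le (x : PEl n d) {i : ℕ} (h : i < n) : ev x i ≤ n + i := by
  have h1 := ev_add_le x (i := i) (k := n-1-i) (by omega)
  have e : i + (n-1-i) = n-1 := by omega
  rw [e] at h1
  have h2 := ev_lt_2n x (show n-1 < n by omega)
  omega

lemma memv_ev (x : PEl n d) {i : ℕ} (h : i < n) : Memv x (ev x i) := by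
  refine ⟨ev_lt_2n x h, ?_⟩
  have e : (⟨ev x i, ev_lt_2n x h⟩ : Fin (2*n)) = x.elem ⟨i, h⟩ :=
    Fin.ext (show ev x i = ((x.elem ⟨i, h⟩ : Fin (2*n)) : ℕ) from ev_eq x h)
  rw [e]; exact elem_mem x _

lemma memv_iff (x : PEl n d) (c : ℕ) : Memv x c ↔ ∃ i, i < n ∧ ev x i = c := by
  constructor
  · rintro ⟨hc, hm⟩
    set i := (x.carrier.orderIsoOfFin x.hcard).symm ⟨⟨c, hc⟩, hm⟩ with hi
    have he : x.elem i = ⟨c, hc⟩ := by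
      show ((x.carrier.orderIsoOfFin x.hcard) ((x.carrier.orderIsoOfFin x.hcard).symm
        ⟨⟨c, hc⟩, hm⟩) : Fin (2*n)) = ⟨c, hc⟩
      rw [OrderIso.apply_symm_apply]
    refine ⟨i.1, i.2, ?_⟩
    rw [ev_eq x i.2]
    rw [Fin.eta i i.2, he]
  · rintro ⟨i, hi, rfl⟩; exact memv_ev x hi

lemma mem_iff_memv (x : PEl n d) (j : Fin (2*n)) : j ∈ x.carrier ↔ Memv x (j : ℕ) := by
  constructor
  · intro h; exact ⟨j.2, by rw [Fin.eta j j.2]; exact h⟩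
  · rintro ⟨hc, hm⟩; rw [← Fin.eta j j.2]; exact hm

lemma adm_v (x : PEl n d) (c : ℕ) (hc : c < 2*n) : Memv x c ↔ ¬ Memv x (2*n-1-c) := by
  have hrev : (⟨c, hc⟩ : Fin (2*n)).rev = ⟨2*n-1-c, by omega⟩ := by
    apply Fin.ext; rw [Fin.val_rev]; simp; omega
  have h := x.hadm ⟨c, hc⟩
  rw [hrev] at h
  rw [show Memv x c ↔ (⟨c, hc⟩ : Fin (2*n)) ∈ x.carrier from
    ⟨fun ⟨_, hm⟩ => hm, fun hm => ⟨hc, hm⟩⟩]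
  rw [show Memv x (2*n-1-c) ↔ (⟨2*n-1-c, by omega⟩ : Fin (2*n)) ∈ x.carrier from
    ⟨fun ⟨_, hm⟩ => hm, fun hm => ⟨by omega, hm⟩⟩]
  exact h

lemma pel_ext {x y : PEl n d} (hc : x.carrier = y.carrier) (hl : x.lvl = y.lvl) : x = y := by
  cases x; cases y
  dsimp only at hc hl
  subst hc; subst hl; rfl

lemma pel_ext_ev {x y : PEl n d} (hl : x.lvl = y.lvl) (h : ∀ i, i < n → ev x i = ev y i) :
    x = y := by
  refine pel_ext ?_ hl
  ext j
  rw [mem_iff_memv, mem_iff_memv, memv_iff, memv_iff]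
  constructor
  · rintro ⟨i, hi, he⟩; exact ⟨i, hi, by rw [← h i hi]; exact he⟩
  · rintro ⟨i, hi, he⟩; exact ⟨i, hi, by rw [h i hi]; exact he⟩

lemma ple_iff (x y : PEl n d) : Ple x y ↔ (x.lvl ≤ y.lvl ∧
    ∀ i, i + (y.lvl - x.lvl) < n → ev x i ≤ ev y (i + (y.lvl - x.lvl))) := by
  constructor
  · rintro ⟨h1, h2⟩
    refine ⟨h1, fun i hi => ?_⟩
    have h3 := h2 i hi
    rw [ev_eq x (by omega), ev_eq y hi]
    exact Fin.le_def.1 h3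
  · rintro ⟨h1, h2⟩
    refine ⟨h1, fun i hi => ?_⟩
    have h3 := h2 i hi
    rw [ev_eq x (by omega), ev_eq y hi] at h3
    exact Fin.le_def.2 h3

lemma ev_last (hn : 1 ≤ n) (x : PEl n d) {c : ℕ} (hM : Memv x c)
    (hmax : ∀ k, Memv x k → k ≤ c) : ev x (n-1) = c := by
  obtain ⟨i, hi, he⟩ := (memv_iff x c).1 hM
  have h1 : ev x i ≤ ev x (n-1) := ev_mono x (by omega) (by omega)
  have h2 := hmax _ (memv_ev x (show n-1 < n by omega))
  omega

end St19

namespace St19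

variable {n d : ℕ}

lemma cnt_iff (x : PEl n d) (t k : ℕ) (hk : k < n) :
    (k + 1 ≤ (x.carrier.filter (fun a : Fin (2*n) => t ≤ (a : ℕ))).card) ↔
      t ≤ ev x (n-1-k) := by
  classical
  have himg : x.carrier.filter (fun a : Fin (2*n) => t ≤ (a : ℕ)) =
      (Finset.univ.filter (fun i : Fin n => t ≤ (x.elem i : ℕ))).image x.elem := by
    ext j
    simp only [Finset.mem_filter, Finset.mem_image, Finset.mem_univ, true_and]
    constructor
    · rintro ⟨hj, ht⟩
      obtain ⟨i, hi, he⟩ := (memv_iff x (j : ℕ)).1 ((mem_iff_memv x j).1 hj)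
      refine ⟨⟨i, hi⟩, ?_, ?_⟩
      · rw [← ev_eq x hi] at *; omega
      · apply Fin.ext; rw [← ev_eq x hi]; exact he
    · rintro ⟨i, ht, rfl⟩; exact ⟨elem_mem x i, ht⟩
  rw [himg, Finset.card_image_of_injective _ (elem_strictMono x).injective]
  have hi0 : n-1-k < n := by omega
  constructor
  · intro h
    by_contra hc
    push_neg at hc
    have hsub : Finset.univ.filter (fun i : Fin n => t ≤ (x.elem i : ℕ)) ⊆
        Finset.Ioi (⟨n-1-k, hi0⟩ : Fin n) := by
      intro a ha
      rw [Finset.mem_filter] at ha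
      rw [Finset.mem_Ioi]
      rcases lt_or_ge (⟨n-1-k, hi0⟩ : Fin n) a with h' | h'
      · exact h'
      · exfalso
        have hle : (x.elem a : ℕ) ≤ ev x (n-1-k) := by
          rw [ev_eq x hi0]
          exact_mod_cast elem_mono x h'
        omega
    have hcard := Finset.card_le_card hsub
    rw [Fin.card_Ioi] at hcard
    have : ((⟨n-1-k, hi0⟩ : Fin n) : ℕ) = n-1-k := rfl
    rw [this] at hcard
    omega
  · intro h
    have hsub : Finset.Ici (⟨n-1-k, hi0⟩ : Fin n) ⊆
        Finset.univ.filter (fun i : Fin n => t ≤ (x.elem i : ℕ)) := by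
      intro a ha
      rw [Finset.mem_Ici] at ha
      rw [Finset.mem_filter]
      refine ⟨Finset.mem_univ _, ?_⟩
      have hle : ev x (n-1-k) ≤ (x.elem a : ℕ) := by
        rw [ev_eq x hi0]
        exact_mod_cast elem_mono x ha
      omega
    have hcard := Finset.card_le_card hsub
    rw [Fin.card_Ici] at hcard
    have : ((⟨n-1-k, hi0⟩ : Fin n) : ℕ) = n-1-k := rfl
    rw [this] at hcard
    omega

lemma mem_diag_iff (x : PEl n d) (i j : Fin n) :
    ((i, j) ∈ diagOf n x.carrier) ↔ n + (j : ℕ) - (i : ℕ) ≤ ev x (n-1-(i : ℕ)) := by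
  rw [diagOf, Finset.mem_filter]
  simp only [Finset.mem_univ, true_and]
  exact cnt_iff x (n + (j : ℕ) - (i : ℕ)) (i : ℕ) i.2

lemma hook_iff (hn : 1 ≤ n) (x : PEl n d) :
    ContainsHook n hn (diagOf n x.carrier) ↔ Memv x (2*n-1) := by
  constructor
  · intro h
    have h1 := (h ⟨n-1, by omega⟩).1
    rw [mem_diag_iff] at h1
    have h1' : n + (n-1) - 0 ≤ ev x (n-1-0) := h1
    have h2 := ev_lt_2n x (show n-1 < n by omega)
    have e0 : n-1-0 = n-1 := by omega
    rw [e0] at h1'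
    have he : ev x (n-1) = 2*n-1 := by omega
    rw [← he]
    exact memv_ev x (by omega)
  · intro hM
    have hmax : ∀ k, Memv x k → k ≤ 2*n-1 := by rintro k ⟨hk, -⟩; omega
    have hlast : ev x (n-1) = 2*n-1 := ev_last hn x hM hmax
    have h0 : ¬ Memv x 0 := by
      have h := (adm_v x (2*n-1) (by omega)).1 hM
      have e : 2*n-1-(2*n-1) = 0 := by omega
      rw [e] at h
      exact h
    have hge : ∀ k, k < n → k+1 ≤ ev x k := by
      intro k hk
      have h1 := ev_add_le x (i := 0) (k := k) (by omega)
      rw [Nat.zero_add] at h1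
      have h2 : ev x 0 ≠ 0 := fun hc => h0 (hc ▸ memv_ev x (show 0 < n by omega))
      omega
    intro j
    constructor
    · rw [mem_diag_iff]
      show n + (j : ℕ) - 0 ≤ ev x (n-1-0)
      have hj := j.2
      have e0 : n-1-0 = n-1 := by omega
      rw [e0]
      omega
    · rw [mem_diag_iff]
      show n + 0 - (j : ℕ) ≤ ev x (n-1-(j : ℕ))
      have hj := j.2
      have h1 := hge (n-1-(j : ℕ)) (by omega)
      omega

lemma exists_pel (G : ℕ → ℕ) (hlt : ∀ i, i < n → G i < 2*n)
    (hmono : ∀ i j, i < j → j < n → G i < G j)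
    (hadm : ∀ c, c < 2*n → ((∃ i, i < n ∧ G i = c) ↔ ¬ ∃ i, i < n ∧ G i = 2*n-1-c))
    (l : ℕ) (hl : l ≤ d) :
    ∃ z : PEl n d, z.lvl = l ∧ ∀ i, i < n → ev z i = G i := by
  classical
  have h2n : ∀ i : Fin n, G i.1 < 2*n := fun i => hlt i.1 i.2
  set g : Fin n → Fin (2*n) := fun i => ⟨G i.1, h2n i⟩ with hgdef
  have hgmono : StrictMono g := fun a b hab => by
    rw [hgdef]
    exact Fin.mk_lt_mk.2 (hmono a.1 b.1 hab b.2)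
  have hmem : ∀ j : Fin (2*n), (j ∈ Finset.image g Finset.univ) ↔ ∃ i, i < n ∧ G i = (j : ℕ) := by
    intro j
    simp only [Finset.mem_image, Finset.mem_univ, true_and]
    constructor
    · rintro ⟨i, rfl⟩; exact ⟨i.1, i.2, rfl⟩
    · rintro ⟨i, hi, he⟩; exact ⟨⟨i, hi⟩, Fin.ext he⟩
  have hcd : (Finset.image g Finset.univ).card = n := by
    rw [Finset.card_image_of_injective _ hgmono.injective, Finset.card_univ, Fintype.card_fin]
  have hadm' : AdmissibleSet n (Finset.image g Finset.univ) := by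
    intro j
    rw [hmem j, hmem j.rev]
    have hrev : ((j.rev : Fin (2*n)) : ℕ) = 2*n-1-(j : ℕ) := by
      rw [Fin.val_rev]; omega
    rw [hrev]
    exact hadm j.1 j.2
  refine ⟨⟨Finset.image g Finset.univ, hcd, hadm', l, hl⟩, rfl, fun i hi => ?_⟩
  have helem : ∀ i : Fin n, (Finset.image g Finset.univ).orderEmbOfFin hcd i = g i := by
    have h := Finset.orderEmbOfFin_unique hcd (f := g)
      (fun i => Finset.mem_image_of_mem g (Finset.mem_univ i)) hgmono
    exact fun i => by rw [← h]
  rw [ev_eq _ hi]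
  show (((Finset.image g Finset.univ).orderIsoOfFin hcd ⟨i, hi⟩ : Fin (2*n)) : ℕ) = G i
  rw [Finset.coe_orderIsoOfFin_apply, helem ⟨i, hi⟩]

end St19

namespace St19

variable {n d : ℕ}

lemma part1 (hn : 1 ≤ n) (x y : PEl n d) (hx : ¬ Memv x (2*n-1))
    (hy : y.lvl = x.lvl + 1) : ¬ Pcov x y := by
  classical
  intro hcov
  -- the first missing value p
  have hex : ∃ k, ¬ Memv x k := ⟨2*n-1, hx⟩
  set p := Nat.find hex with hpdef
  have hpnot : ¬ Memv x p := Nat.find_spec hex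
  have hbelow : ∀ k, k < p → Memv x k := by
    intro k hk
    by_contra hc
    exact (Nat.find_min hex hk) hc
  have hple : p ≤ 2*n-1 := Nat.find_min' hex hx
  -- 0 is a member, so 1 ≤ p
  have hM0 : Memv x 0 := by
    have h00 := adm_v x 0 (by omega)
    have e0 : 2*n-1-0 = 2*n-1 := by omega
    rw [e0] at h00
    exact h00.2 hx
  have hp1 : 1 ≤ p := by
    rcases Nat.eq_zero_or_pos p with h | h
    · exact absurd (h ▸ hM0) hpnot
    · omega
  have hpn : p ≤ n := by
    by_contra h
    push_neg at h
    have h1 : Memv x (n-1) := hbelow (n-1) (by omega)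
    have h2 : Memv x n := hbelow n (by omega)
    have h3 := (adm_v x (n-1) (by omega)).1 h1
    have e : 2*n-1-(n-1) = n := by omega
    rw [e] at h3
    exact h3 h2
  -- elements below p are 0,1,…,p-1
  have hlow : ∀ k, k < p → k < n ∧ ev x k = k := by
    intro k
    induction k using Nat.strong_induction_on with
    | _ k IH =>
      intro hk
      obtain ⟨i, hi, hev⟩ := (memv_iff x k).1 (hbelow k hk)
      have hge := ev_ge x hi
      have hik : i ≤ k := by omega
      rcases Nat.eq_or_lt_of_le hik with h | h
      · subst h; exact ⟨hi, hev⟩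
      · exfalso
        have := (IH i h (by omega)).2
        omega
  -- maximum element is 2n-1-p
  have hM2n1p : Memv x (2*n-1-p) := by
    by_contra hc
    exact hpnot ((adm_v x p (by omega)).2 hc)
  have hmax : ∀ k, Memv x k → k ≤ 2*n-1-p := by
    intro k hk
    have hklt : k < 2*n := by obtain ⟨h, -⟩ := hk; exact h
    by_contra hgt
    push_neg at hgt
    have hrevk : 2*n-1-k < p := by omega
    have hMb := hbelow _ hrevk
    exact ((adm_v x k hklt).1 hk) hMb
  have hMnot2np : ¬ Memv x (2*n-p) := by
    intro hcm
    have := hmax _ hcm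
    omega
  have hevlast : ev x (n-1) = 2*n-1-p := ev_last hn x hM2n1p hmax
  -- the intermediate element z
  set G : ℕ → ℕ := fun i => if i = n-1 then 2*n-p else if i = p-1 then p else ev x i with hGdef
  have hGval : ∀ i, G i = if i = n-1 then 2*n-p else if i = p-1 then p else ev x i :=
    fun i => rfl
  have hGlt : ∀ i, i < n → G i < 2*n := by
    intro i hi
    rw [hGval]
    split_ifs
    · omega
    · omega
    · exact ev_lt_2n x hi
  have hGmono : ∀ i j, i < j → j < n → G i < G j := by
    intro i j hij hj
    rw [hGval, hGval]
    by_cases hjA : j = n-1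
    · rw [if_pos hjA, if_neg (show ¬(i = n-1) by omega)]
      by_cases hiB : i = p-1
      · rw [if_pos hiB]; omega
      · rw [if_neg hiB]
        have := ev_strict x (show i < n-1 by omega) (show n-1 < n by omega)
        omega
    · rw [if_neg hjA]
      by_cases hjB : j = p-1
      · rw [if_pos hjB, if_neg (show ¬(i = n-1) by omega), if_neg (show ¬(i = p-1) by omega)]
        have := (hlow i (by omega)).2
        omega
      · rw [if_neg hjB, if_neg (show ¬(i = n-1) by omega)]
        by_cases hiB : i = p-1
        · rw [if_pos hiB]
          have hge := ev_ge x hj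
          have hne : ev x j ≠ p := fun hc => hpnot (hc ▸ memv_ev x hj)
          omega
        · rw [if_neg hiB]; exact ev_strict x hij hj
  have hGchar : ∀ c : ℕ, (∃ i, i < n ∧ G i = c) ↔
      (c = p ∨ c = 2*n-p ∨ (Memv x c ∧ c ≠ p-1 ∧ c ≠ 2*n-1-p)) := by
    intro c
    constructor
    · rintro ⟨i, hi, rfl⟩
      rw [hGval]
      by_cases hA : i = n-1
      · rw [if_pos hA]; exact Or.inr (Or.inl rfl)
      · rw [if_neg hA]
        by_cases hB : i = p-1
        · rw [if_pos hB]; exact Or.inl rfl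
        · rw [if_neg hB]
          refine Or.inr (Or.inr ⟨memv_ev x hi, ?_, ?_⟩)
          · rcases Nat.lt_or_ge i p with h | h
            · have := (hlow i h).2; omega
            · have := ev_ge x hi; omega
          · have := ev_strict x (show i < n-1 by omega) (show n-1 < n by omega)
            omega
    · rintro (rfl | rfl | ⟨hMc, h1, h2⟩)
      · refine ⟨p-1, by omega, ?_⟩
        rw [hGval]
        by_cases hA : p-1 = n-1
        · rw [if_pos hA]; omega
        · rw [if_neg hA, if_pos rfl]
      · refine ⟨n-1, by omega, ?_⟩
        rw [hGval, if_pos rfl]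
      · obtain ⟨i, hi, he⟩ := (memv_iff x c).1 hMc
        refine ⟨i, hi, ?_⟩
        have hA : i ≠ n-1 := by
          intro hc; rw [hc] at he; omega
        have hB : i ≠ p-1 := by
          intro hc; rw [hc] at he
          have := (hlow (p-1) (by omega)).2
          omega
        rw [hGval, if_neg hA, if_neg hB]; exact he
  have hadm : ∀ c, c < 2*n → ((∃ i, i < n ∧ G i = c) ↔ ¬ ∃ i, i < n ∧ G i = 2*n-1-c) := by
    intro c hc
    rw [hGchar c, hGchar (2*n-1-c)]
    have hiff := adm_v x c hc
    by_cases h1 : c = p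
    · subst h1
      constructor
      · intro _
        rintro (hA | hA | ⟨-, -, hC⟩)
        · omega
        · omega
        · exact hC rfl
      · intro _; exact Or.inl rfl
    · by_cases h2 : c = 2*n-p
      · subst h2
        constructor
        · intro _
          rintro (hA | hA | ⟨-, hB, -⟩)
          · omega
          · omega
          · exact hB (by omega)
        · intro _; exact Or.inr (Or.inl rfl)
      · by_cases h3 : c = p-1
        · subst h3
          constructor
          · rintro (hA | hA | ⟨-, hB, -⟩)
            · omega
            · omega
            · exact absurd rfl hB
          · intro hR
            exfalso
            exact hR (Or.inr (Or.inl (by omega)))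
        · by_cases h4 : c = 2*n-1-p
          · subst h4
            constructor
            · rintro (hA | hA | ⟨-, -, hC⟩)
              · omega
              · omega
              · exact absurd rfl hC
            · intro hR
              exfalso
              exact hR (Or.inl (by omega))
          · have g1 : 2*n-1-c ≠ p := by omega
            have g2 : 2*n-1-c ≠ 2*n-p := by omega
            have g3 : 2*n-1-c ≠ p-1 := by omega
            have g4 : 2*n-1-c ≠ 2*n-1-p := by omega
            have lhs_iff : (c = p ∨ c = 2*n-p ∨ (Memv x c ∧ c ≠ p-1 ∧ c ≠ 2*n-1-p)) ↔
                Memv x c := by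
              constructor
              · rintro (h | h | ⟨h, -, -⟩)
                · exact absurd h h1
                · exact absurd h h2
                · exact h
              · intro h; exact Or.inr (Or.inr ⟨h, h3, h4⟩)
            have rhs_iff : (2*n-1-c = p ∨ 2*n-1-c = 2*n-p ∨
                (Memv x (2*n-1-c) ∧ 2*n-1-c ≠ p-1 ∧ 2*n-1-c ≠ 2*n-1-p)) ↔
                Memv x (2*n-1-c) := by
              constructor
              · rintro (h | h | ⟨h, -, -⟩)
                · exact absurd h g1
                · exact absurd h g2
                · exact h
              · intro h; exact Or.inr (Or.inr ⟨h, g3, g4⟩)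
            rw [lhs_iff, rhs_iff]
            exact hiff
  obtain ⟨z, hzlvl, hzev⟩ := exists_pel (d := d) G hGlt hGmono hadm x.lvl x.hlvl
  -- Ple x z
  have hxz : Ple x z := by
    rw [ple_iff]
    refine ⟨by omega, fun i hi => ?_⟩
    have e : z.lvl - x.lvl = 0 := by omega
    rw [e] at hi ⊢
    rw [Nat.add_zero] at hi ⊢
    rw [hzev i hi, hGval]
    by_cases hA : i = n-1
    · rw [if_pos hA, hA]; omega
    · rw [if_neg hA]
      by_cases hB : i = p-1
      · rw [if_pos hB, hB]
        have := (hlow (p-1) (by omega)).2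
        omega
      · rw [if_neg hB]
  -- Ple z y
  have hzy : Ple z y := by
    rw [ple_iff]
    refine ⟨by omega, fun i hi => ?_⟩
    have e : y.lvl - z.lvl = 1 := by omega
    rw [e] at hi ⊢
    have h1 := (ple_iff x y).1 hcov.1
    have e1 : y.lvl - x.lvl = 1 := by omega
    rw [e1] at h1
    rw [hzev i (by omega), hGval]
    by_cases hA : i = n-1
    · exfalso; omega
    · rw [if_neg hA]
      by_cases hB : i = p-1
      · rw [if_pos hB]
        have hge := ev_ge y (show i+1 < n from hi)
        omega
      · rw [if_neg hB]; exact h1.2 i hi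
  -- z ≠ x and z ≠ y
  have hevzp : ev z (p-1) = p := by
    rw [hzev (p-1) (by omega), hGval]
    by_cases hA : p-1 = n-1
    · rw [if_pos hA]; omega
    · rw [if_neg hA, if_pos rfl]
  have hMzp : Memv z p := (memv_iff z p).2 ⟨p-1, by omega, hevzp⟩
  have hz_ne_x : z ≠ x := fun he => hpnot (he ▸ hMzp)
  rcases hcov.2.2 z hxz hzy with h | h
  · exact hz_ne_x h
  · have h2 := congrArg PEl.lvl h
    rw [hzlvl, hy] at h2
    omega

end St19

namespace St19

variable {n d : ℕ}

lemma part2 (hn : 1 ≤ n) (x : PEl n d) (hxd : x.lvl < d) (hM : Memv x (2*n-1)) :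
    (∃! y : PEl n d, y.lvl = x.lvl + 1 ∧ Pcov x y) ∧
    (∀ y : PEl n d, y.lvl = x.lvl + 1 → Pcov x y →
      ∀ b : Fin n × Fin n,
        (b ∈ diagOf n y.carrier ↔
          ∃ (h₁ : (b.1 : ℕ) + 1 < n) (h₂ : (b.2 : ℕ) + 1 < n),
            ((⟨(b.1 : ℕ) + 1, h₁⟩ : Fin n), (⟨(b.2 : ℕ) + 1, h₂⟩ : Fin n)) ∈
              diagOf n x.carrier)) := by
  classical
  have hmax : ∀ k, Memv x k → k ≤ 2*n-1 := by rintro k ⟨hk, -⟩; omega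
  have hlast : ev x (n-1) = 2*n-1 := ev_last hn x hM hmax
  have h0 : ¬ Memv x 0 := by
    have h := (adm_v x (2*n-1) (by omega)).1 hM
    have e : 2*n-1-(2*n-1) = 0 := by omega
    rw [e] at h
    exact h
  have hge : ∀ k, k < n → k+1 ≤ ev x k := by
    intro k hk
    have h1 := ev_add_le x (i := 0) (k := k) (by omega)
    rw [Nat.zero_add] at h1
    have h2 : ev x 0 ≠ 0 := fun hc => h0 (hc ▸ memv_ev x (show 0 < n by omega))
    omega
  set G : ℕ → ℕ := fun i => if i = 0 then 0 else ev x (i-1) with hGdef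
  have hGval : ∀ i, G i = if i = 0 then 0 else ev x (i-1) := fun i => rfl
  have hGlt : ∀ i, i < n → G i < 2*n := by
    intro i hi
    rw [hGval]
    split_ifs
    · omega
    · exact ev_lt_2n x (by omega)
  have hGmono : ∀ i j, i < j → j < n → G i < G j := by
    intro i j hij hj
    rw [hGval, hGval, if_neg (show ¬(j = 0) by omega)]
    by_cases hA : i = 0
    · rw [if_pos hA]
      have := hge (j-1) (by omega)
      omega
    · rw [if_neg hA]
      exact ev_strict x (show i-1 < j-1 by omega) (by omega)
  have hGchar : ∀ c : ℕ, (∃ i, i < n ∧ G i = c) ↔ (c = 0 ∨ (Memv x c ∧ c ≠ 2*n-1)) := by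
    intro c
    constructor
    · rintro ⟨i, hi, rfl⟩
      rw [hGval]
      by_cases hA : i = 0
      · rw [if_pos hA]; exact Or.inl rfl
      · rw [if_neg hA]
        refine Or.inr ⟨memv_ev x (by omega), ?_⟩
        have := ev_strict x (show i-1 < n-1 by omega) (show n-1 < n by omega)
        omega
    · rintro (rfl | ⟨hMc, hne⟩)
      · exact ⟨0, by omega, by rw [hGval, if_pos rfl]⟩
      · obtain ⟨k, hk, he⟩ := (memv_iff x c).1 hMc
        have hkn : k ≠ n-1 := by
          intro hc; rw [hc] at he; omega
        refine ⟨k+1, by omega, ?_⟩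
        rw [hGval, if_neg (by omega), Nat.add_sub_cancel]
        exact he
  have hadm : ∀ c, c < 2*n → ((∃ i, i < n ∧ G i = c) ↔ ¬ ∃ i, i < n ∧ G i = 2*n-1-c) := by
    intro c hc
    rw [hGchar c, hGchar (2*n-1-c)]
    have hiff := adm_v x c hc
    by_cases h1 : c = 0
    · subst h1
      constructor
      · intro _
        rintro (hA | ⟨-, hB⟩)
        · omega
        · exact hB (by omega)
      · intro _; exact Or.inl rfl
    · by_cases h2 : c = 2*n-1
      · subst h2
        constructor
        · rintro (hA | ⟨-, hB⟩)
          · omega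
          · exact absurd rfl hB
        · intro hR; exfalso; exact hR (Or.inl (by omega))
      · have g1 : 2*n-1-c ≠ 0 := by omega
        have g2 : 2*n-1-c ≠ 2*n-1 := by omega
        have lhs_iff : (c = 0 ∨ (Memv x c ∧ c ≠ 2*n-1)) ↔ Memv x c := by
          constructor
          · rintro (h | ⟨h, -⟩)
            · exact absurd h h1
            · exact h
          · intro h; exact Or.inr ⟨h, h2⟩
        have rhs_iff : (2*n-1-c = 0 ∨ (Memv x (2*n-1-c) ∧ 2*n-1-c ≠ 2*n-1)) ↔
            Memv x (2*n-1-c) := by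
          constructor
          · rintro (h | ⟨h, -⟩)
            · exact absurd h g1
            · exact h
          · intro h; exact Or.inr ⟨h, g2⟩
        rw [lhs_iff, rhs_iff]
        exact hiff
  obtain ⟨w, hwlvl, hwev⟩ := exists_pel (d := d) G hGlt hGmono hadm (x.lvl + 1) (by omega)
  -- Ple x w
  have hplew : Ple x w := by
    rw [ple_iff]
    refine ⟨by omega, fun i hi => ?_⟩
    have e : w.lvl - x.lvl = 1 := by omega
    rw [e] at hi ⊢
    rw [hwev (i+1) (by omega), hGval, if_neg (by omega), Nat.add_sub_cancel]
  have hx_ne_w : x ≠ w := by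
    intro he
    have := congrArg PEl.lvl he
    rw [hwlvl] at this
    omega
  -- minimality
  have hmin : ∀ z : PEl n d, Ple x z → Ple z w → z = x ∨ z = w := by
    intro z h1 h2
    rw [ple_iff] at h1 h2
    have hzl : z.lvl = x.lvl ∨ z.lvl = x.lvl + 1 := by omega
    rcases hzl with hzl | hzl
    · left
      refine pel_ext_ev (by omega) ?_
      have e1 : z.lvl - x.lvl = 0 := by omega
      rw [e1] at h1
      simp only [Nat.add_zero] at h1
      have e2 : w.lvl - z.lvl = 1 := by omega
      rw [e2] at h2
      intro i hi
      rcases Nat.lt_or_ge i (n-1) with h | h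
      · have hle := h2.2 i (by omega)
        rw [hwev (i+1) (by omega), hGval, if_neg (by omega), Nat.add_sub_cancel] at hle
        have := h1.2 i hi
        omega
      · have hieq : i = n-1 := by omega
        subst hieq
        have h3 := h1.2 (n-1) (by omega)
        have h4 := ev_lt_2n z (show n-1 < n by omega)
        omega
    · right
      refine pel_ext_ev (by omega) ?_
      have e2 : w.lvl - z.lvl = 0 := by omega
      rw [e2] at h2
      simp only [Nat.add_zero] at h2
      have e1 : z.lvl - x.lvl = 1 := by omega
      rw [e1] at h1
      intro i hi
      have hzw := h2.2 i hi
      have hwz : ev w i ≤ ev z i := by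
        rw [hwev i hi, hGval]
        by_cases hA : i = 0
        · rw [if_pos hA]; exact Nat.zero_le _
        · rw [if_neg hA]
          have h3 := h1.2 (i-1) (by omega)
          have e : i-1+1 = i := by omega
          rw [e] at h3
          exact h3
      omega
  have hwcov : Pcov x w := ⟨hplew, hx_ne_w, hmin⟩
  -- uniqueness
  have huniq : ∀ y : PEl n d, y.lvl = x.lvl + 1 → Pcov x y → y = w := by
    intro y hy hcov
    have hPwy : Ple w y := by
      rw [ple_iff]
      refine ⟨by omega, fun i hi => ?_⟩
      have e : y.lvl - w.lvl = 0 := by omega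
      rw [e] at hi ⊢
      rw [Nat.add_zero] at hi ⊢
      rw [hwev i hi, hGval]
      by_cases hA : i = 0
      · rw [if_pos hA]; exact Nat.zero_le _
      · rw [if_neg hA]
        have h1 := (ple_iff x y).1 hcov.1
        have e1 : y.lvl - x.lvl = 1 := by omega
        rw [e1] at h1
        have h3 := h1.2 (i-1) (by omega)
        have e2 : i-1+1 = i := by omega
        rw [e2] at h3
        exact h3
    rcases hcov.2.2 w hplew hPwy with h | h
    · exfalso
      have := congrArg PEl.lvl h
      rw [hwlvl] at this
      omega
    · exact h.symm
  constructor
  · exact ⟨w, ⟨hwlvl, hwcov⟩, fun y hy => huniq y hy.1 hy.2⟩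
  · intro y hy hcov bp
    have hyw : y = w := huniq y hy hcov
    rw [hyw]
    obtain ⟨i, j⟩ := bp
    dsimp only
    rw [mem_diag_iff w i j]
    have hev : ev w (n-1-(i : ℕ)) = if n-1-(i : ℕ) = 0 then 0 else ev x (n-1-(i : ℕ)-1) := by
      rw [hwev (n-1-(i : ℕ)) (by omega), hGval]
    by_cases h0i : n-1-(i : ℕ) = 0
    · rw [hev, if_pos h0i]
      constructor
      · intro hle
        exfalso
        have := i.2
        have := j.2
        omega
      · rintro ⟨h₁, h₂, -⟩
        exfalso
        have := i.2
        omega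
    · rw [hev, if_neg h0i]
      have hiv : (i : ℕ) < n-1 := by have := i.2; omega
      constructor
      · intro hle
        have hjlt : (j : ℕ) + 1 < n := by
          by_contra hc
          have hj : (j : ℕ) = n-1 := by have := j.2; omega
          have hub := ev_le x (show n-1-(i : ℕ)-1 < n by omega)
          omega
        refine ⟨by omega, hjlt, ?_⟩
        rw [mem_diag_iff]
        show n + ((j : ℕ)+1) - ((i : ℕ)+1) ≤ ev x (n-1-((i : ℕ)+1))
        have e : n-1-((i : ℕ)+1) = n-1-(i : ℕ)-1 := by omega
        rw [e]
        omega
      · rintro ⟨h₁, h₂, hmem⟩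
        rw [mem_diag_iff] at hmem
        have hmem' : n + ((j : ℕ)+1) - ((i : ℕ)+1) ≤ ev x (n-1-((i : ℕ)+1)) := hmem
        have e : n-1-((i : ℕ)+1) = n-1-(i : ℕ)-1 := by omega
        rw [e] at hmem'
        omega

end St19

theorem stmt19 (n d : ℕ) (hn : 1 ≤ n) (x : PEl n d) (hxd : x.lvl < d) :
    (¬ ContainsHook n hn (diagOf n x.carrier) →
      ∀ y : PEl n d, y.lvl = x.lvl + 1 → ¬ Pcov x y) ∧
    (ContainsHook n hn (diagOf n x.carrier) →
      (∃! y : PEl n d, y.lvl = x.lvl + 1 ∧ Pcov x y) ∧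
      (∀ y : PEl n d, y.lvl = x.lvl + 1 → Pcov x y →
        ∀ b : Fin n × Fin n,
          (b ∈ diagOf n y.carrier ↔
            ∃ (h₁ : (b.1 : ℕ) + 1 < n) (h₂ : (b.2 : ℕ) + 1 < n),
              ((⟨(b.1 : ℕ) + 1, h₁⟩ : Fin n), (⟨(b.2 : ℕ) + 1, h₂⟩ : Fin n)) ∈
                diagOf n x.carrier))) := by
  constructor
  · intro hnh y hy
    exact St19.part1 hn x y (fun hM => hnh ((St19.hook_iff hn x).2 hM)) hy
  · intro hh
    exact St19.part2 hn x hxd ((St19.hook_iff hn x).1 hh)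
end
end
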